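/- arXiv:1108.1515 — 10 statements merged into one kernel-verified Lean document; each statement's English description precedes it below -/
import Mathlib

section
/- Let m : [0,∞) → ℝ be smooth with m(0) = 0, m′(0) = 1, m(r) > 0 for all r > 0, m″ ≤ 0 on [0,∞), and ∫₁^∞ m(r)^{-2} dr < ∞. Then for all 0 < x < y, the improper integrals T(x) = ∫_x^∞ m(x)/(m(r)·√(m(r)² − m(x)²)) dr and T(y) = ∫_y^∞ m(y)/(m(r)·√(m(r)² − m(y)²)) dr are finite and satisfy T(x) ≤ T(y), with equality if and only if m″ vanishes identically on [x,∞). -/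
open Real Set Filter MeasureTheory

open scoped ContDiff
/-- If `h` is monotone on `(c,∞)` and `h (l*u) = h u` for a.e. `u > c` with `l > 1`,
then `h` is constant on `(c,∞)`. -/
theorem aux_const_of_ae_scale (h : ℝ → ℝ) (c l : ℝ) (hc : 0 < c) (hl : 1 < l)
    (hmono : ∀ ⦃s t : ℝ⦄, c < s → s ≤ t → h s ≤ h t)
    (hae : ∀ᵐ u : ℝ, u ∈ Set.Ioi c → h (l * u) = h u) :
    ∀ s t : ℝ, c < s → c < t → h s = h t := by
  have hl0 : 0 < l := by linarith
  set N := {u : ℝ | u ∈ Set.Ioi c ∧ h (l * u) ≠ h u} with hN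
  have hNnull : volume N = 0 := by
    have h0 := hae
    rw [MeasureTheory.ae_iff] at h0
    refine MeasureTheory.measure_mono_null ?_ h0
    intro u hu
    simp only [hN, Set.mem_setOf_eq] at hu ⊢
    tauto
  set B := ⋃ n : ℕ, (fun u : ℝ => l ^ n * u) ⁻¹' N with hB
  have hBnull : volume B = 0 := by
    refine MeasureTheory.measure_iUnion_null fun n => ?_
    have hpow : (l : ℝ) ^ n ≠ 0 := by positivity
    rw [Real.volume_preimage_mul_left hpow, hNnull, mul_zero]
  -- key iteration
  have hiter : ∀ u : ℝ, c < u → u ∉ B → ∀ n : ℕ, h (l ^ n * u) = h u := by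
    intro u hu hub n
    induction n with
    | zero => simp
    | succ k ih =>
      have hk : l ^ k * u ∉ N := by
        intro hmem
        exact hub (Set.mem_iUnion.mpr ⟨k, hmem⟩)
      have hgt : c < l ^ k * u := by
        have h1 : (1:ℝ) ≤ l ^ k := one_le_pow₀ (le_of_lt hl)
        nlinarith
      have : h (l * (l ^ k * u)) = h (l ^ k * u) := by
        by_contra hne
        exact hk ⟨hgt, hne⟩
      rw [pow_succ, show l ^ k * l * u = l * (l ^ k * u) by ring, this, ih]
  -- now conclude
  have key : ∀ a b : ℝ, c < a → a ≤ b → h a = h b := by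
    intro a b hca hab
    -- pick u in (c, a) \ B
    have hvol : volume (Set.Ioo c a \ B) ≠ 0 := by
      rw [MeasureTheory.measure_diff_null hBnull, Real.volume_Ioo]
      simp only [ne_eq, ENNReal.ofReal_eq_zero, not_le]
      linarith
    obtain ⟨u, hu⟩ := MeasureTheory.nonempty_of_measure_ne_zero hvol
    obtain ⟨⟨hcu, hua⟩, hub⟩ := hu
    -- pick n with b ≤ l ^ n * u
    obtain ⟨n, hn⟩ := (tendsto_pow_atTop_atTop_of_one_lt hl).eventually_ge_atTop (b / u)
      |>.exists
    have hbn : b ≤ l ^ n * u := by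
      rw [div_le_iff₀ (by linarith : (0:ℝ) < u)] at hn
      linarith [hn]
    have h1 : h u ≤ h a := hmono hcu (le_of_lt hua)
    have h2 : h a ≤ h b := hmono hca hab
    have h3 : h b ≤ h (l ^ n * u) := hmono (lt_of_lt_of_le hca hab) hbn
    have h4 : h (l ^ n * u) = h u := hiter u hcu hub n
    linarith
  intro s t hs ht
  rcases le_total s t with hst | hst
  · exact key s t hs hst
  · exact (key t s ht hst).symm

section basics
variable (m : ℝ → ℝ)
  (hsmooth : ContDiff ℝ (⊤ : ℕ∞) m)
  (hm0 : m 0 = 0)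
  (hpos : ∀ r > (0:ℝ), 0 < m r)
  (hconc : ∀ r ≥ (0:ℝ), deriv (deriv m) r ≤ 0)
  (hint : MeasureTheory.IntegrableOn (fun r => 1 / (m r) ^ 2) (Set.Ioi 1))

include hsmooth hconc in
theorem aux_anti : AntitoneOn (deriv m) (Ici 0) := by
  have h1 : ContDiff ℝ ∞ (deriv m) := (contDiff_infty_iff_deriv.mp (hsmooth.of_le (by simp))).2
  refine antitoneOn_of_deriv_nonpos (convex_Ici 0) (h1.continuous.continuousOn)
    (h1.differentiable (by norm_num)).differentiableOn ?_
  intro r hr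
  exact hconc r (le_of_lt (by simpa using hr))

include hpos hint in
theorem aux_unbdd : ∀ M : ℝ, ∃ r > (1:ℝ), M < m r := by
  intro M
  by_contra hcon
  push_neg at hcon
  have hM : 0 < M := lt_of_lt_of_le (hpos 2 (by norm_num)) (hcon 2 (by norm_num))
  have : MeasureTheory.IntegrableOn (fun _ : ℝ => 1 / M ^ 2) (Set.Ioi 1) := by
    refine MeasureTheory.Integrable.mono' hint ?_ ?_
    · exact aestronglyMeasurable_const
    · filter_upwards [MeasureTheory.ae_restrict_mem measurableSet_Ioi] with r hr
      have h1 : (0:ℝ) < m r := hpos r (lt_trans one_pos hr)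
      have h2 : m r ≤ M := hcon r hr
      rw [Real.norm_eq_abs, abs_of_pos (by positivity)]
      apply div_le_div_of_nonneg_left one_pos.le (by positivity)
      exact pow_le_pow_left₀ h1.le h2 2
  rw [MeasureTheory.integrableOn_const_iff] at this
  rcases this with h | h
  · exact absurd h (by simp [hM.ne'])
  · simp [Real.volume_Ioi] at h
end basics
section s2
variable {m : ℝ → ℝ}

theorem aux_deriv_pos (hsmooth : ContDiff ℝ (⊤ : ℕ∞) m)
    (hanti : AntitoneOn (deriv m) (Ici 0))
    (hub : ∀ M : ℝ, ∃ r > (1:ℝ), M < m r) :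
    ∀ r ≥ (0:ℝ), 0 < deriv m r := by
  by_contra hcon
  push_neg at hcon
  obtain ⟨r0, hr0, hd0⟩ := hcon
  have hantim : AntitoneOn m (Ici r0) := by
    refine antitoneOn_of_deriv_nonpos (convex_Ici r0)
      (hsmooth.continuous.continuousOn)
      ((hsmooth.differentiable (by simp)).differentiableOn) ?_
    intro r hr
    rw [interior_Ici] at hr
    exact le_trans (hanti hr0 (le_trans hr0 (le_of_lt hr)) (le_of_lt hr)) hd0
  obtain ⟨z, hz, hzbd⟩ := (isCompact_Icc (a := (0:ℝ)) (b := r0)).exists_isMaxOn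
    (nonempty_Icc.2 hr0) (hsmooth.continuous.continuousOn)
  obtain ⟨r, hr1, hrM⟩ := hub (max (m r0) (m z))
  rcases le_total r r0 with h | h
  · exact absurd (hzbd ⟨by linarith, h⟩) (not_le.2 (lt_of_le_of_lt (le_max_right _ _) hrM))
  · exact absurd (hantim (self_mem_Ici) h h)
      (not_le.2 (lt_of_le_of_lt (le_max_left _ _) hrM))

theorem aux_mono (hsmooth : ContDiff ℝ (⊤ : ℕ∞) m)
    (hdpos : ∀ r ≥ (0:ℝ), 0 < deriv m r) : StrictMonoOn m (Ici 0) := by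
  refine strictMonoOn_of_deriv_pos (convex_Ici 0) (hsmooth.continuous.continuousOn) ?_
  intro r hr
  rw [interior_Ici] at hr
  exact hdpos r (le_of_lt hr)

theorem aux_tendsto (hmono : StrictMonoOn m (Ici 0))
    (hub : ∀ M : ℝ, ∃ r > (1:ℝ), M < m r) : Tendsto m atTop atTop := by
  rw [tendsto_atTop]
  intro M
  obtain ⟨R, hR1, hRM⟩ := hub M
  filter_upwards [eventually_ge_atTop R] with r hr
  rcases eq_or_lt_of_le hr with h | h
  · exact le_of_lt (h ▸ hRM)
  · exact le_of_lt (lt_trans hRM (hmono (Set.mem_Ici.mpr (by linarith))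
      (Set.mem_Ici.mpr (by linarith)) h))

theorem aux_img (hsmooth : ContDiff ℝ (⊤ : ℕ∞) m) (hmono : StrictMonoOn m (Ici 0))
    (htop : Tendsto m atTop atTop) :
    ∀ z ≥ (0:ℝ), m '' Ioi z = Ioi (m z) := by
  intro z hz
  apply Set.Subset.antisymm
  · rintro s ⟨r, hr, rfl⟩
    exact hmono hz (le_trans hz (le_of_lt hr)) hr
  · intro s hs
    obtain ⟨R, hR⟩ := (tendsto_atTop.mp htop (s + 1)).exists_forall_of_atTop
    have hRz : z < max R (z + 1) := lt_of_lt_of_le (lt_add_one z) (le_max_right _ _)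
    have hsR : s < m (max R (z + 1)) :=
      lt_of_lt_of_le (lt_add_one s) (hR _ (le_max_left _ _))
    have := intermediate_value_Ioo (le_of_lt hRz) (hsmooth.continuous.continuousOn)
      (a := z) (b := max R (z + 1))
    obtain ⟨r, hr, hrs⟩ := this ⟨hs, hsR⟩
    exact ⟨r, hr.1, hrs⟩

theorem aux_slope (hsmooth : ContDiff ℝ (⊤ : ℕ∞) m)
    (hanti : AntitoneOn (deriv m) (Ici 0)) :
    ∀ a b : ℝ, 0 ≤ a → a < b → deriv m b * (b - a) ≤ m b - m a := by
  intro a b ha hab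
  obtain ⟨ξ, hξ, hξeq⟩ := exists_deriv_eq_slope m hab
    (hsmooth.continuous.continuousOn) ((hsmooth.differentiable (by simp)).differentiableOn)
  have h1 : deriv m b ≤ deriv m ξ :=
    hanti (Set.mem_Ici.mpr (le_trans ha (le_of_lt hξ.1)))
      (Set.mem_Ici.mpr (by linarith [hξ.1])) (le_of_lt hξ.2)
  have h2 : m b - m a = deriv m ξ * (b - a) := by
    rw [hξeq, div_mul_cancel₀ _ (by linarith : b - a ≠ 0)]
  rw [h2]
  exact mul_le_mul_of_nonneg_right h1 (by linarith)
end s2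
section s3
variable {m : ℝ → ℝ}

theorem aux_contOn (hsmooth : ContDiff ℝ (⊤ : ℕ∞) m) (hpos : ∀ r > (0:ℝ), 0 < m r)
    (hmono : StrictMonoOn m (Ici 0)) {z : ℝ} (hz : 0 < z) :
    ContinuousOn (fun r => m z / (m r * Real.sqrt ((m r) ^ 2 - (m z) ^ 2))) (Ioi z) := by
  have hc : 0 < m z := hpos z hz
  refine ContinuousOn.div continuousOn_const ?_ ?_
  · exact ((hsmooth.continuous.mul (Real.continuous_sqrt.comp
      ((hsmooth.continuous.pow 2).sub continuous_const)))).continuousOn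
  · intro r hr
    have hmr : m z < m r := hmono (le_of_lt hz) (le_of_lt (lt_trans hz hr)) hr
    have hsq : (m z) ^ 2 < (m r) ^ 2 := by nlinarith
    have h2 : 0 < Real.sqrt ((m r) ^ 2 - (m z) ^ 2) := Real.sqrt_pos.mpr (by linarith)
    have h0 : 0 < m r := lt_trans hc hmr
    positivity

theorem aux_int (hsmooth : ContDiff ℝ (⊤ : ℕ∞) m) (hpos : ∀ r > (0:ℝ), 0 < m r)
    (hdpos : ∀ r ≥ (0:ℝ), 0 < deriv m r)
    (hanti : AntitoneOn (deriv m) (Ici 0))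
    (hmono : StrictMonoOn m (Ici 0))
    (hslope : ∀ a b : ℝ, 0 ≤ a → a < b → deriv m b * (b - a) ≤ m b - m a)
    (hint : MeasureTheory.IntegrableOn (fun r => 1 / (m r) ^ 2) (Set.Ioi 1))
    {z : ℝ} (hz : 0 < z) :
    MeasureTheory.IntegrableOn
      (fun r => m z / (m r * Real.sqrt ((m r) ^ 2 - (m z) ^ 2))) (Set.Ioi z) := by
  set c := m z with hcdef
  have hc : 0 < c := hpos z hz
  set F := fun r => c / (m r * Real.sqrt ((m r) ^ 2 - c ^ 2)) with hFdef
  have hFcont : ContinuousOn F (Ioi z) := aux_contOn hsmooth hpos hmono hz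
  -- pointwise facts
  have hmr : ∀ r ∈ Ioi z, c < m r := fun r hr =>
    hmono (le_of_lt hz) (le_of_lt (lt_trans hz hr)) hr
  have hsqpos : ∀ r ∈ Ioi z, 0 < Real.sqrt ((m r) ^ 2 - c ^ 2) := by
    intro r hr
    have := hmr r hr
    exact Real.sqrt_pos.mpr (by nlinarith)
  have hFpos : ∀ r ∈ Ioi z, 0 < F r := by
    intro r hr
    have h1 := hmr r hr
    have h2 := hsqpos r hr
    have : 0 < m r := by linarith
    positivity
  rw [← Set.Ioc_union_Ioi_eq_Ioi (by linarith : z ≤ z + 1)]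
  apply MeasureTheory.IntegrableOn.union
  · -- near z : bound by const / sqrt (r - z)
    set k := deriv m (z + 1) with hkdef
    have hk : 0 < k := hdpos (z + 1) (by linarith)
    have hbound : ∀ r ∈ Ioc z (z + 1),
        ‖F r‖ ≤ (Real.sqrt (2 * c * k))⁻¹ * (r - z) ^ (-(1/2) : ℝ) := by
      intro r hr
      have hrz : z < r := hr.1
      have hr1 : r ≤ z + 1 := hr.2
      have hmrc := hmr r hrz
      have hsq := hsqpos r hrz
      have hd : k ≤ deriv m r := hanti (Set.mem_Ici.mpr (by linarith))
        (Set.mem_Ici.mpr (by linarith)) hr1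
      have hs : deriv m r * (r - z) ≤ m r - c := hslope z r (le_of_lt hz) hrz
      have h1' : k * (r - z) ≤ m r - c :=
        le_trans (mul_le_mul_of_nonneg_right hd (by linarith)) hs
      have h2' : k * (r - z) * (2 * c) ≤ (m r - c) * (m r + c) :=
        mul_le_mul h1' (by linarith) (by linarith) (by linarith)
      have hlow : 2 * c * k * (r - z) ≤ (m r) ^ 2 - c ^ 2 := by nlinarith [h2']
      have hsqrt : Real.sqrt (2 * c * k) * Real.sqrt (r - z)
          ≤ Real.sqrt ((m r) ^ 2 - c ^ 2) := by
        rw [← Real.sqrt_mul (by positivity)]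
        exact Real.sqrt_le_sqrt hlow
      have hden : c * (Real.sqrt (2 * c * k) * Real.sqrt (r - z))
          ≤ m r * Real.sqrt ((m r) ^ 2 - c ^ 2) := by
        apply mul_le_mul (le_of_lt hmrc) hsqrt (by positivity) (by linarith)
      rw [Real.norm_eq_abs, abs_of_pos (hFpos r hrz)]
      rw [Real.rpow_neg (by linarith), ← Real.sqrt_eq_rpow]
      have hSpos : 0 < Real.sqrt (2 * c * k) := Real.sqrt_pos.mpr (by positivity)
      have hTpos : 0 < Real.sqrt (r - z) := Real.sqrt_pos.mpr (by linarith)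
      calc F r ≤ c / (c * (Real.sqrt (2 * c * k) * Real.sqrt (r - z))) :=
            div_le_div_of_nonneg_left hc.le (by positivity) hden
        _ = (Real.sqrt (2 * c * k))⁻¹ * (Real.sqrt (r - z))⁻¹ := by
            field_simp
    have hG : MeasureTheory.IntegrableOn
        (fun r => (Real.sqrt (2 * c * k))⁻¹ * (r - z) ^ (-(1/2) : ℝ)) (Ioc z (z + 1)) := by
      apply MeasureTheory.Integrable.const_mul
      have h0 : IntervalIntegrable (fun t : ℝ => t ^ (-(1/2) : ℝ)) volume 0 1 :=
        intervalIntegral.intervalIntegrable_rpow' (by norm_num)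
      have h1 := h0.comp_sub_right z
      rw [zero_add] at h1
      rw [show (1 : ℝ) + z = z + 1 by ring] at h1
      exact (intervalIntegrable_iff_integrableOn_Ioc_of_le (by linarith)).mp h1
    refine MeasureTheory.Integrable.mono' hG ?_ ?_
    · exact (hFcont.mono Set.Ioc_subset_Ioi_self).aestronglyMeasurable measurableSet_Ioc
    · filter_upwards [MeasureTheory.ae_restrict_mem measurableSet_Ioc] with r hr
      exact hbound r hr
  · -- tail : bound by const * (1 / m r ^ 2)
    set b := m (z + 1) with hbdef
    have hbc : c < b := hmono (Set.mem_Ici.mpr (by linarith)) (Set.mem_Ici.mpr (by linarith)) (by linarith)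
    set δ := Real.sqrt (1 - c ^ 2 / b ^ 2) with hδdef
    have hb0 : 0 < b := lt_trans hc hbc
    have hδ : 0 < δ := Real.sqrt_pos.mpr (by
      rw [sub_pos, div_lt_one (by positivity)]
      nlinarith)
    have hG : MeasureTheory.IntegrableOn
        (fun r => (c / δ) * (1 / (m r) ^ 2)) (Ioi (z + 1)) :=
      (hint.mono_set (Set.Ioi_subset_Ioi (by linarith))).const_mul _
    refine MeasureTheory.Integrable.mono' hG ?_ ?_
    · exact (hFcont.mono (Set.Ioi_subset_Ioi (by linarith))).aestronglyMeasurable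
        measurableSet_Ioi
    · filter_upwards [MeasureTheory.ae_restrict_mem measurableSet_Ioi] with r hr
      have hrz : z < r := by simp only [Set.mem_Ioi] at hr; linarith
      have hbr : b < m r := hmono (by simp; linarith) (by simp; linarith)
        (by simp only [Set.mem_Ioi] at hr; exact hr)
      have hmrc := hmr r hrz
      have hmr0 : 0 < m r := lt_trans hc hmrc
      have hb2 : b ^ 2 ≤ (m r) ^ 2 := by nlinarith
      have hlow : (m r) ^ 2 * (1 - c ^ 2 / b ^ 2) ≤ (m r) ^ 2 - c ^ 2 := by
        rw [mul_sub, mul_one, sub_le_sub_iff_left]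
        calc c ^ 2 = b ^ 2 * (c ^ 2 / b ^ 2) := by field_simp
          _ ≤ (m r) ^ 2 * (c ^ 2 / b ^ 2) := mul_le_mul_of_nonneg_right hb2 (by positivity)
      have hsqrt : m r * δ ≤ Real.sqrt ((m r) ^ 2 - c ^ 2) := by
        have : m r * δ = Real.sqrt ((m r) ^ 2 * (1 - c ^ 2 / b ^ 2)) := by
          rw [Real.sqrt_mul (by positivity), Real.sqrt_sq hmr0.le]
        rw [this]
        exact Real.sqrt_le_sqrt hlow
      have hden : m r * (m r * δ) ≤ m r * Real.sqrt ((m r) ^ 2 - c ^ 2) :=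
        mul_le_mul_of_nonneg_left hsqrt hmr0.le
      rw [Real.norm_eq_abs, abs_of_pos (hFpos r hrz)]
      calc F r ≤ c / (m r * (m r * δ)) :=
            div_le_div_of_nonneg_left hc.le (by positivity) hden
        _ = (c / δ) * (1 / (m r) ^ 2) := by
            rw [show m r * (m r * δ) = δ * (m r ^ 2) by ring, ← div_div,
              div_eq_mul_one_div]
end s3

/-- Monotonicity of the turn angle on a nonnegatively curved rotationally
symmetric plane: for `0 < x < y` the turn angles `T x ≤ T y`, with equality iff
`m''` vanishes on `[x,∞)`. -/
theorem stmt_1 (m : ℝ → ℝ)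
    (hsmooth : ContDiff ℝ (⊤ : ℕ∞) m)
    (hm0 : m 0 = 0)
    (hm'0 : deriv m 0 = 1)
    (hpos : ∀ r > (0:ℝ), 0 < m r)
    (hconc : ∀ r ≥ (0:ℝ), deriv (deriv m) r ≤ 0)
    (hint : MeasureTheory.IntegrableOn (fun r => 1 / (m r) ^ 2) (Set.Ioi 1))
    (x y : ℝ) (hx : 0 < x) (hxy : x < y) :
    MeasureTheory.IntegrableOn
        (fun r => m x / (m r * Real.sqrt ((m r) ^ 2 - (m x) ^ 2))) (Set.Ioi x) ∧
    MeasureTheory.IntegrableOn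
        (fun r => m y / (m r * Real.sqrt ((m r) ^ 2 - (m y) ^ 2))) (Set.Ioi y) ∧
    (∫ r in Set.Ioi x, m x / (m r * Real.sqrt ((m r) ^ 2 - (m x) ^ 2))) ≤
      (∫ r in Set.Ioi y, m y / (m r * Real.sqrt ((m r) ^ 2 - (m y) ^ 2))) ∧
    ((∫ r in Set.Ioi x, m x / (m r * Real.sqrt ((m r) ^ 2 - (m x) ^ 2))) =
      (∫ r in Set.Ioi y, m y / (m r * Real.sqrt ((m r) ^ 2 - (m y) ^ 2))) ↔
      ∀ r ≥ x, deriv (deriv m) r = 0) := by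
  have hy : 0 < y := lt_trans hx hxy
  have hanti : AntitoneOn (deriv m) (Ici 0) := aux_anti m hsmooth hconc
  have hub : ∀ M : ℝ, ∃ r > (1:ℝ), M < m r := aux_unbdd m hpos hint
  have hdpos : ∀ r ≥ (0:ℝ), 0 < deriv m r := aux_deriv_pos hsmooth hanti hub
  have hmonoM : StrictMonoOn m (Ici 0) := aux_mono hsmooth hdpos
  have htop : Tendsto m atTop atTop := aux_tendsto hmonoM hub
  have himg : ∀ z ≥ (0:ℝ), m '' Ioi z = Ioi (m z) := aux_img hsmooth hmonoM htop
  have hslope : ∀ a b : ℝ, 0 ≤ a → a < b → deriv m b * (b - a) ≤ m b - m a :=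
    aux_slope hsmooth hanti
  have hdiff : Differentiable ℝ m := hsmooth.differentiable (by simp)
  have hIx := aux_int hsmooth hpos hdpos hanti hmonoM hslope hint hx
  have hIy := aux_int hsmooth hpos hdpos hanti hmonoM hslope hint hy
  -- notation
  set c := m x with hcdef
  set d := m y with hddef
  have hc : 0 < c := hpos x hx
  have hcd : c < d := hmonoM (Set.mem_Ici.mpr hx.le) (Set.mem_Ici.mpr hy.le) hxy
  have hd0 : 0 < d := lt_trans hc hcd
  set lam := d / c with hlamdef
  have hlam : 1 < lam := (one_lt_div hc).mpr hcd
  have hlam0 : 0 < lam := by linarith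
  have hlamc : lam * c = d := by rw [hlamdef, div_mul_cancel₀ _ hc.ne']
  -- inverse function
  have hinj : InjOn m (Ici x) := by
    apply (hmonoM.mono ?_).injOn
    exact Set.Ici_subset_Ici.mpr hx.le
  set minv := Function.invFunOn m (Ici x) with hminvdef
  have hinv1 : ∀ r ∈ Ici x, minv (m r) = r := fun r hr => hinj.leftInvOn_invFunOn hr
  have hsurj : ∀ s ∈ Ioi c, minv s ∈ Ioi x ∧ m (minv s) = s := by
    intro s hs
    have : s ∈ m '' Ioi x := by rw [himg x hx.le]; exact hs
    obtain ⟨r, hr, rfl⟩ := this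
    rw [hinv1 r (Set.mem_Ici.mpr (le_of_lt hr))]
    exact ⟨hr, rfl⟩
  set h := fun s => 1 / deriv m (minv s) with hhdef
  have hdminv : ∀ s ∈ Ioi c, 0 < deriv m (minv s) := fun s hs =>
    hdpos _ (le_trans hx.le (le_of_lt (hsurj s hs).1))
  have hinvmono : ∀ ⦃s t : ℝ⦄, c < s → s ≤ t → minv s ≤ minv t := by
    intro s t hs hst
    by_contra hcon
    push_neg at hcon
    have h1 := (hsurj s hs).2
    have h2 := (hsurj t (lt_of_lt_of_le hs hst)).2
    have h3 : m (minv t) < m (minv s) := hmonoM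
      (Set.mem_Ici.mpr (le_trans hx.le (le_of_lt (hsurj t (lt_of_lt_of_le hs hst)).1)))
      (Set.mem_Ici.mpr (le_trans hx.le (le_of_lt (hsurj s hs).1))) hcon
    rw [h1, h2] at h3
    linarith
  have hmonoh : ∀ ⦃s t : ℝ⦄, c < s → s ≤ t → h s ≤ h t := by
    intro s t hs hst
    have ht : c < t := lt_of_lt_of_le hs hst
    have h1 : deriv m (minv t) ≤ deriv m (minv s) := hanti
      (Set.mem_Ici.mpr (le_trans hx.le (le_of_lt (hsurj s hs).1)))
      (Set.mem_Ici.mpr (le_trans hx.le (le_of_lt (hsurj t ht).1)))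
      (hinvmono hs hst)
    exact one_div_le_one_div_of_le (hdminv t ht) h1
  have hinvval : ∀ r ∈ Ioi x, h (m r) = 1 / deriv m r := by
    intro r hr
    simp only [hhdef]
    rw [hinv1 r (Set.mem_Ici.mpr (le_of_lt hr))]
  -- the kernel
  set K := fun u : ℝ => c / (u * Real.sqrt (u ^ 2 - c ^ 2)) with hKdef
  -- change of variables (generic)
  have cov1 : ∀ z, x ≤ z →
      ((∫ r in Set.Ioi z, m z / (m r * Real.sqrt ((m r) ^ 2 - (m z) ^ 2))) =
        (∫ s in Set.Ioi (m z), m z / (s * Real.sqrt (s ^ 2 - (m z) ^ 2)) * h s)) ∧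
      MeasureTheory.IntegrableOn
        (fun s => m z / (s * Real.sqrt (s ^ 2 - (m z) ^ 2)) * h s) (Set.Ioi (m z)) := by
    intro z hz
    have hz0 : 0 < z := lt_of_lt_of_le hx hz
    have hder : ∀ r ∈ Ioi z, HasDerivWithinAt m (deriv m r) (Ioi z) r := fun r _ =>
      (hdiff r).hasDerivAt.hasDerivWithinAt
    have hinjz : InjOn m (Ioi z) :=
      (hmonoM.mono (fun r (hr : r ∈ Ioi z) => Set.mem_Ici.mpr (le_of_lt (lt_of_lt_of_le hz0 (le_of_lt hr))))).injOn
    have hkey : ∀ r ∈ Ioi z,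
        |deriv m r| • (m z / (m r * Real.sqrt ((m r) ^ 2 - (m z) ^ 2)) * h (m r))
          = m z / (m r * Real.sqrt ((m r) ^ 2 - (m z) ^ 2)) := by
      intro r hr
      have hrx : r ∈ Ioi x := lt_of_le_of_lt hz hr
      have hd1 : 0 < deriv m r := hdpos r (by linarith [Set.mem_Ioi.mp hr])
      rw [hinvval r hrx, smul_eq_mul, abs_of_pos hd1]
      have hmz : 0 < m z := hpos z hz0
      have hmrz : m z < m r := hmonoM (Set.mem_Ici.mpr hz0.le)
        (Set.mem_Ici.mpr (by linarith [Set.mem_Ioi.mp hr])) hr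
      have hsq2 : 0 < Real.sqrt ((m r) ^ 2 - (m z) ^ 2) :=
        Real.sqrt_pos.mpr (by nlinarith)
      field_simp
    have him : m '' Ioi z = Ioi (m z) := himg z (le_of_lt hz0)
    constructor
    · rw [← him,
        MeasureTheory.integral_image_eq_integral_abs_deriv_smul measurableSet_Ioi hder hinjz]
      rw [MeasureTheory.setIntegral_congr_fun measurableSet_Ioi (fun r hr => hkey r hr)]
    · have := (MeasureTheory.integrableOn_image_iff_integrableOn_abs_deriv_smul
        measurableSet_Ioi hder hinjz
        (fun s => m z / (s * Real.sqrt (s ^ 2 - (m z) ^ 2)) * h s))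
      rw [him] at this
      rw [this]
      apply (MeasureTheory.integrableOn_congr_fun (fun r hr => hkey r hr) measurableSet_Ioi).mpr
      exact aux_int hsmooth hpos hdpos hanti hmonoM hslope hint hz0
  obtain ⟨TxEq, IKx⟩ := cov1 x le_rfl
  obtain ⟨TyEq0, IKy0⟩ := cov1 y (le_of_lt hxy)
  -- scaling change of variables
  have himg2 : (fun u : ℝ => lam * u) '' Ioi c = Ioi d := by
    ext u
    constructor
    · rintro ⟨v, hv, rfl⟩
      have : lam * c < lam * v := mul_lt_mul_of_pos_left hv hlam0
      rw [hlamc] at this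
      exact this
    · intro hu
      refine ⟨u / lam, ?_, by field_simp⟩
      rw [Set.mem_Ioi, lt_div_iff₀ hlam0, mul_comm, hlamc]
      exact hu
  have hder2 : ∀ u ∈ Ioi c, HasDerivWithinAt (fun u : ℝ => lam * u) lam (Ioi c) u := by
    intro u _
    simpa using ((hasDerivAt_id u).const_mul lam).hasDerivWithinAt
  have hinj2 : InjOn (fun u : ℝ => lam * u) (Ioi c) := fun a _ b _ hab => by
    field_simp at hab
    exact hab
  have hkey2 : ∀ u ∈ Ioi c,
      |lam| • (d / (lam * u * Real.sqrt ((lam * u) ^ 2 - d ^ 2)) * h (lam * u))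
        = K u * h (lam * u) := by
    intro u hu
    have hu0 : 0 < u := lt_trans hc hu
    have hsq : (lam * u) ^ 2 - d ^ 2 = lam ^ 2 * (u ^ 2 - c ^ 2) := by
      rw [← hlamc]; ring
    rw [hsq, Real.sqrt_mul (sq_nonneg lam), Real.sqrt_sq hlam0.le, smul_eq_mul,
      abs_of_pos hlam0, hKdef]
    rw [← hlamc]
    have hs0 : 0 < Real.sqrt (u ^ 2 - c ^ 2) :=
      Real.sqrt_pos.mpr (by nlinarith [Set.mem_Ioi.mp hu])
    field_simp
  have TyEq : (∫ r in Set.Ioi y, d / (m r * Real.sqrt ((m r) ^ 2 - d ^ 2)))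
      = ∫ u in Set.Ioi c, K u * h (lam * u) := by
    rw [TyEq0, ← himg2,
      MeasureTheory.integral_image_eq_integral_abs_deriv_smul measurableSet_Ioi hder2 hinj2]
    exact MeasureTheory.setIntegral_congr_fun measurableSet_Ioi (fun u hu => hkey2 u hu)
  have IKy : MeasureTheory.IntegrableOn (fun u => K u * h (lam * u)) (Set.Ioi c) := by
    have := (MeasureTheory.integrableOn_image_iff_integrableOn_abs_deriv_smul
      measurableSet_Ioi hder2 hinj2
      (fun s => d / (s * Real.sqrt (s ^ 2 - d ^ 2)) * h s))
    rw [himg2] at this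
    rw [this] at IKy0
    exact (MeasureTheory.integrableOn_congr_fun (fun u hu => hkey2 u hu)
      measurableSet_Ioi).mp IKy0
  -- kernel positivity and monotone comparison
  have hKpos : ∀ u ∈ Ioi c, 0 < K u := by
    intro u hu
    have hu0 : 0 < u := lt_trans hc hu
    have : 0 < Real.sqrt (u ^ 2 - c ^ 2) := Real.sqrt_pos.mpr (by nlinarith [Set.mem_Ioi.mp hu])
    simp only [hKdef]
    positivity
  have hcomp : ∀ u ∈ Ioi c, K u * h u ≤ K u * h (lam * u) := by
    intro u hu
    have hu0 : 0 < u := lt_trans hc hu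
    have : h u ≤ h (lam * u) := hmonoh hu (le_mul_of_one_le_left hu0.le hlam.le)
    exact mul_le_mul_of_nonneg_left this (hKpos u hu).le
  have hIKx' : MeasureTheory.IntegrableOn (fun u => K u * h u) (Set.Ioi c) := IKx
  refine ⟨hIx, hIy, ?_, ?_⟩
  · rw [TxEq, TyEq]
    exact MeasureTheory.setIntegral_mono_on hIKx' IKy measurableSet_Ioi hcomp
  constructor
  · -- equality implies m'' vanishes
    intro hEq
    rw [TxEq, TyEq] at hEq
    -- a.e. equality
    have hsub : (∫ u in Set.Ioi c, (K u * h (lam * u) - K u * h u)) = 0 := by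
      rw [MeasureTheory.integral_sub IKy hIKx']
      linarith [hEq]
    have hnn : 0 ≤ᵐ[volume.restrict (Set.Ioi c)]
        fun u => K u * h (lam * u) - K u * h u := by
      filter_upwards [MeasureTheory.ae_restrict_mem measurableSet_Ioi] with u hu
      exact sub_nonneg.mpr (hcomp u hu)
    have hae0 : (fun u => K u * h (lam * u) - K u * h u)
        =ᵐ[volume.restrict (Set.Ioi c)] 0 :=
      (MeasureTheory.integral_eq_zero_iff_of_nonneg_ae hnn (IKy.sub hIKx')).mp hsub
    have haeh : ∀ᵐ u : ℝ, u ∈ Set.Ioi c → h (lam * u) = h u := by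
      have h1 : ∀ᵐ u : ℝ, u ∈ Set.Ioi c → K u * h (lam * u) - K u * h u = 0 := by
        apply MeasureTheory.ae_imp_of_ae_restrict
        filter_upwards [hae0] with u hu using hu
      filter_upwards [h1] with u hu hmem
      have := hu hmem
      have hK := hKpos u hmem
      have : K u * (h (lam * u) - h u) = 0 := by linarith [this]
      rcases mul_eq_zero.mp this with h' | h'
      · exact absurd h' hK.ne'
      · linarith [h']
    have hconst : ∀ s t : ℝ, c < s → c < t → h s = h t :=
      aux_const_of_ae_scale h c lam hc hlam hmonoh haeh
    -- deriv m constant on Ioi x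
    have hderiv_const : ∀ r ∈ Ioi x, deriv m r = deriv m (x + 1) := by
      intro r hr
      have h1 : h (m r) = h (m (x + 1)) := hconst _ _
        (hmonoM (Set.mem_Ici.mpr hx.le)
          (Set.mem_Ici.mpr (by linarith [Set.mem_Ioi.mp hr])) hr)
        (hmonoM (Set.mem_Ici.mpr hx.le) (Set.mem_Ici.mpr (by linarith)) (by linarith))
      rw [hinvval r hr, hinvval (x + 1) (by simp)] at h1
      have hd1 : 0 < deriv m r := hdpos r (by linarith [Set.mem_Ioi.mp hr])
      have hd2 : 0 < deriv m (x + 1) := hdpos (x + 1) (by linarith)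
      field_simp at h1
      linarith [h1]
    have hd2zero : ∀ r ∈ Ioi x, deriv (deriv m) r = 0 := by
      intro r hr
      have hev : deriv m =ᶠ[nhds r] fun _ => deriv m (x + 1) := by
        filter_upwards [isOpen_Ioi.mem_nhds hr] with t ht
        exact hderiv_const t ht
      rw [hev.deriv_eq, deriv_const]
    intro r hr
    rcases eq_or_lt_of_le hr with rfl | hrx
    · -- r = x : continuity
      have hcont : Continuous (deriv (deriv m)) := by
        have h1 : ContDiff ℝ ∞ (deriv m) := (contDiff_infty_iff_deriv.mp (hsmooth.of_le (by simp))).2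
        exact (contDiff_infty_iff_deriv.mp h1).2.continuous
      have hclosure : Set.EqOn (deriv (deriv m)) 0 (closure (Ioi x)) :=
        Set.EqOn.closure (fun t ht => hd2zero t ht) hcont continuous_const
      have := hclosure (by rw [closure_Ioi]; exact Set.self_mem_Ici)
      simpa using this
    · exact hd2zero r hrx
  · -- m'' vanishes implies equality
    intro hvan
    have hderiv_const : ∀ r ≥ x, deriv m r = deriv m x := by
      intro r hr
      have hmono1 : MonotoneOn (deriv m) (Ici x) := by
        refine monotoneOn_of_deriv_nonneg (convex_Ici x) ?_ ?_ ?_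
        · exact ((contDiff_infty_iff_deriv.mp (hsmooth.of_le (by simp))).2.continuous).continuousOn
        · exact (((contDiff_infty_iff_deriv.mp (hsmooth.of_le (by simp))).2.differentiable
            (by norm_num))).differentiableOn
        · intro t ht
          rw [interior_Ici] at ht
          rw [hvan t (le_of_lt ht)]
      have hanti1 : AntitoneOn (deriv m) (Ici x) :=
        hanti.mono (Set.Ici_subset_Ici.mpr hx.le)
      exact le_antisymm
        (hanti1 (Set.self_mem_Ici) (Set.mem_Ici.mpr hr) hr)
        (hmono1 (Set.self_mem_Ici) (Set.mem_Ici.mpr hr) hr)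
    rw [TxEq, TyEq]
    apply MeasureTheory.setIntegral_congr_fun measurableSet_Ioi
    intro u hu
    have hu0 : 0 < u := lt_trans hc hu
    have h1 : h u = 1 / deriv m x := by
      simp only [hhdef]
      rw [hderiv_const (minv u) (le_of_lt (Set.mem_Ioi.mp (hsurj u hu).1))]
    have h2 : h (lam * u) = 1 / deriv m x := by
      have hlu : lam * u ∈ Ioi c := by
        rw [Set.mem_Ioi]
        calc c < u := hu
          _ ≤ lam * u := le_mul_of_one_le_left hu0.le hlam.le
      simp only [hhdef]
      rw [hderiv_const (minv (lam * u)) (le_of_lt (Set.mem_Ioi.mp (hsurj _ hlu).1))]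
    show m x / (u * Real.sqrt (u ^ 2 - (m x) ^ 2)) * h u
      = m x / (u * Real.sqrt (u ^ 2 - (m x) ^ 2)) * h (lam * u)
    rw [h1, h2]
end

section
/- Let m : [0,∞) → ℝ be smooth with m(0) = 0, m′(0) = 1, m(r) > 0 for all r > 0, m″ ≤ 0 on [0,∞), −m″/m non-increasing on [0,∞), ∫₁^∞ m(r)^{-2} dr < ∞, and lim_{r→∞} m′(r) < 1/2. Then the equation m′(r) = 1/2 has a unique solution ρ ∈ (0,∞); this solution satisfies m″(ρ) < 0; and for every v ≥ ρ one has ∫_v^∞ m(v)/(m(r)·√(m(r)² − m(v)²)) dr > π. -/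
open Real Set Filter MeasureTheory

set_option maxHeartbeats 4000000

/-- On a von Mangoldt plane of nonnegative curvature with `m'(∞) < 1/2`, the
equation `m'(r) = 1/2` has a unique solution `ρ > 0`, which satisfies
`m''(ρ) < 0`, and the turn angle at any radius `v ≥ ρ` exceeds `π`. -/
theorem stmt_2 (m : ℝ → ℝ)
    (hsmooth : ContDiff ℝ (⊤ : ℕ∞) m)
    (hm0 : m 0 = 0)
    (hm'0 : deriv m 0 = 1)
    (hpos : ∀ r > (0:ℝ), 0 < m r)
    (hconc : ∀ r ≥ (0:ℝ), deriv (deriv m) r ≤ 0)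
    (hvM : AntitoneOn (fun r => -(deriv (deriv m) r) / m r) (Set.Ioi 0))
    (hint : MeasureTheory.IntegrableOn (fun r => 1 / (m r) ^ 2) (Set.Ioi 1))
    (L : ℝ) (hL : Filter.Tendsto (deriv m) Filter.atTop (nhds L))
    (hLhalf : L < 1 / 2) :
    ∃ ρ : ℝ, 0 < ρ ∧ deriv m ρ = 1 / 2 ∧
      (∀ ρ' : ℝ, 0 < ρ' → deriv m ρ' = 1 / 2 → ρ' = ρ) ∧
      deriv (deriv m) ρ < 0 ∧
      (∀ v ≥ ρ, π <
        ∫ r in Set.Ioi v, m v / (m r * Real.sqrt ((m r) ^ 2 - (m v) ^ 2))) := by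
  -- ### Basic differentiability facts
  have hdm : Differentiable ℝ m := hsmooth.differentiable (by simp)
  have hsm0 : ContDiff ℝ ((⊤ : ℕ∞) : WithTop ℕ∞) m := hsmooth.of_le (by simp)
  have hsm' : ContDiff ℝ ((⊤ : ℕ∞) : WithTop ℕ∞) (deriv m) := (contDiff_infty_iff_deriv.mp hsm0).2
  have hdm' : Differentiable ℝ (deriv m) := hsm'.differentiable (by simp)
  have hcm : Continuous m := hdm.continuous
  have hcm' : Continuous (deriv m) := hdm'.continuous
  -- m' is antitone on [0, ∞)
  have hanti : AntitoneOn (deriv m) (Ici 0) := by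
    apply antitoneOn_of_deriv_nonpos (convex_Ici 0) hcm'.continuousOn
      hdm'.differentiableOn
    intro x hx
    rw [interior_Ici] at hx
    exact hconc x (le_of_lt hx)
  -- m' ≥ L on [0, ∞)
  have hgeL : ∀ a : ℝ, 0 ≤ a → L ≤ deriv m a := by
    intro a ha
    apply le_of_tendsto hL
    filter_upwards [Filter.eventually_ge_atTop a] with r hr
    exact hanti ha (le_trans ha hr) hr
  -- m' > 0 on [0, ∞)
  have hm'pos : ∀ a : ℝ, 0 ≤ a → 0 < deriv m a := by
    intro a ha
    rcases lt_or_ge 0 (deriv m a) with h | h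
    · exact h
    exfalso
    rcases eq_or_lt_of_le ha with rfl | ha0
    · rw [hm'0] at h; linarith
    -- m is antitone on [a, ∞), hence bounded by m a, contradicting integrability
    have hmanti : AntitoneOn m (Ici a) := by
      apply antitoneOn_of_deriv_nonpos (convex_Ici a) hcm.continuousOn
        hdm.differentiableOn
      intro x hx
      rw [interior_Ici] at hx
      have hx' : a < x := hx
      exact le_trans (hanti ha (ha.trans hx'.le) hx'.le) h
    set b := max a 1 with hb
    have hab : a ≤ b := le_max_left _ _
    have h1b : (1:ℝ) ≤ b := le_max_right _ _
    have hma : 0 < m a := hpos a ha0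
    have hcst : IntegrableOn (fun _ : ℝ => 1 / (m a) ^ 2) (Ioi b) := by
      apply Integrable.mono (hint.mono_set (Ioi_subset_Ioi h1b))
        aestronglyMeasurable_const
      rw [ae_restrict_iff' measurableSet_Ioi]
      apply ae_of_all
      intro r hr
      have hra : a < r := lt_of_le_of_lt hab hr
      have hmr : 0 < m r := hpos r (ha0.trans hra)
      have hle : m r ≤ m a := hmanti self_mem_Ici (le_of_lt hra) (le_of_lt hra)
      rw [Real.norm_eq_abs, Real.norm_eq_abs, abs_of_nonneg (by positivity),
        abs_of_nonneg (by positivity)]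
      apply div_le_div_of_nonneg_left one_pos.le (by positivity)
      nlinarith
    rw [integrableOn_const_iff, enorm_eq_zero] at hcst
    rcases hcst with h' | h'
    · have : (0:ℝ) < 1 / (m a) ^ 2 := by positivity
      rw [h'] at this; exact lt_irrefl _ this
    · rw [Real.volume_Ioi] at h'
      exact (lt_irrefl _ h')
  -- m is strictly monotone on [0, ∞)
  have hmono : StrictMonoOn m (Ici 0) := by
    apply strictMonoOn_of_deriv_pos (convex_Ici 0) hcm.continuousOn
    intro x hx
    rw [interior_Ici] at hx
    exact hm'pos x hx.le
  -- Key lemma: if m''(σ) = 0 with σ > 0 then m' is constant ≡ L on [σ, ∞)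
  have hkey : ∀ σ : ℝ, 0 < σ → deriv (deriv m) σ = 0 → deriv m σ = L := by
    intro σ hσ h2
    have h20 : ∀ r, σ ≤ r → deriv (deriv m) r = 0 := by
      intro r hr
      rcases eq_or_lt_of_le hr with rfl | hlt
      · exact h2
      have hr0 : 0 < r := hσ.trans hlt
      have h1 := hvM (mem_Ioi.2 hσ) (mem_Ioi.2 hr0) hr
      simp only [h2, neg_zero, zero_div] at h1
      have hmr : 0 < m r := hpos r hr0
      have hle : deriv (deriv m) r ≤ 0 := hconc r hr0.le
      have : 0 ≤ -(deriv (deriv m) r) / m r := by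
        apply div_nonneg (by linarith) hmr.le
      have : -(deriv (deriv m) r) / m r = 0 := le_antisymm h1 this
      have := (div_eq_zero_iff.mp this)
      rcases this with h' | h'
      · linarith
      · exact absurd h' hmr.ne'
    have hmon : MonotoneOn (deriv m) (Ici σ) := by
      apply monotoneOn_of_deriv_nonneg (convex_Ici σ) hcm'.continuousOn
        hdm'.differentiableOn
      intro x hx
      rw [interior_Ici] at hx
      rw [h20 x hx.le]
    have hconst : ∀ r, σ ≤ r → deriv m r = deriv m σ := by
      intro r hr
      exact le_antisymm (hanti hσ.le (hσ.le.trans hr) hr) (hmon self_mem_Ici hr hr)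
    have htend : Tendsto (deriv m) atTop (nhds (deriv m σ)) := by
      apply Tendsto.congr' _ tendsto_const_nhds
      filter_upwards [Filter.eventually_ge_atTop σ] with r hr
      exact (hconst r hr).symm
    exact tendsto_nhds_unique htend hL
  -- ### Existence of ρ
  obtain ⟨R, hRhalf, hR0⟩ : ∃ R, deriv m R < 1 / 2 ∧ 0 < R := by
    have h1 := hL.eventually (gt_mem_nhds hLhalf)
    exact (h1.and (eventually_gt_atTop 0)).exists
  obtain ⟨ρ, hρmem, hρeq⟩ : ∃ ρ ∈ Icc (0:ℝ) R, deriv m ρ = 1 / 2 := by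
    have hsub := intermediate_value_Icc' hR0.le hcm'.continuousOn
    have : (1:ℝ)/2 ∈ Icc (deriv m R) (deriv m 0) := by
      constructor
      · exact hRhalf.le
      · rw [hm'0]; norm_num
    obtain ⟨ρ, hρ, hρeq⟩ := hsub this
    exact ⟨ρ, hρ, hρeq⟩
  have hρpos : 0 < ρ := by
    rcases eq_or_lt_of_le hρmem.1 with rfl | h
    · rw [hm'0] at hρeq; norm_num at hρeq
    · exact h
  -- m''(ρ) < 0
  have hρ'' : deriv (deriv m) ρ < 0 := by
    rcases lt_or_eq_of_le (hconc ρ hρpos.le) with h | h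
    · exact h
    · exfalso
      have := hkey ρ hρpos h
      rw [hρeq] at this
      linarith
  -- uniqueness
  have huniq : ∀ ρ' : ℝ, 0 < ρ' → deriv m ρ' = 1 / 2 → ρ' = ρ := by
    intro ρ' hρ'pos hρ'eq
    by_contra hne
    set a := min ρ ρ' with ha
    set b := max ρ ρ' with hbdef
    have hab : a < b := by
      rcases lt_or_gt_of_ne hne with h | h
      · rw [ha, hbdef, min_eq_right h.le, max_eq_left h.le]; exact h
      · rw [ha, hbdef, min_eq_left h.le, max_eq_right h.le]; exact h
    have ha0 : 0 < a := lt_min hρpos hρ'pos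
    have haeq : deriv m a = 1/2 := by
      rcases min_choice ρ ρ' with h | h <;> rw [ha, h] <;> assumption
    have hbeq : deriv m b = 1/2 := by
      rcases max_choice ρ ρ' with h | h <;> rw [hbdef, h] <;> assumption
    have hconst : ∀ x ∈ Icc a b, deriv m x = 1/2 := by
      intro x hx
      have hx0 : (0:ℝ) ≤ x := le_trans ha0.le hx.1
      have h1 : deriv m x ≤ deriv m a := hanti ha0.le hx0 hx.1
      have h2 : deriv m b ≤ deriv m x := hanti hx0 (hx0.trans hx.2) hx.2
      rw [haeq] at h1; rw [hbeq] at h2; linarith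
    set σ := (a + b) / 2 with hσdef
    have hσmem : σ ∈ Ioo a b := ⟨by rw [hσdef]; linarith, by rw [hσdef]; linarith⟩
    have hσpos : 0 < σ := ha0.trans hσmem.1
    have hev : deriv m =ᶠ[nhds σ] fun _ => (1:ℝ)/2 := by
      filter_upwards [isOpen_Ioo.mem_nhds hσmem] with x hx
      exact hconst x (Ioo_subset_Icc_self hx)
    have h2σ : deriv (deriv m) σ = 0 := by
      rw [hev.deriv_eq, deriv_const]
    have := hkey σ hσpos h2σ
    rw [hconst σ (Ioo_subset_Icc_self hσmem)] at this
    linarith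
  -- ### The turn angle estimate
  refine ⟨ρ, hρpos, hρeq, huniq, hρ'', ?_⟩
  intro v hv
  have hv0 : 0 < v := lt_of_lt_of_le hρpos hv
  set c := m v with hcdef
  have hc : 0 < c := hpos v hv0
  -- m' ≤ 1/2 on [v, ∞)
  have hm'le : ∀ r, v ≤ r → deriv m r ≤ 1/2 := by
    intro r hr
    rw [← hρeq]
    exact hanti hρpos.le (hρpos.le.trans (hv.trans hr)) (hv.trans hr)
  -- MVT upper bound: m r ≤ c + (r - v)/2 for r > v
  have slope_le : ∀ r, v < r → m r ≤ c + (r - v)/2 := by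
    intro r hr
    obtain ⟨ξ, hξ, hslope⟩ := exists_hasDerivAt_eq_slope m (deriv m) hr
      hcm.continuousOn (fun x _ => (hdm x).hasDerivAt)
    have hξle : deriv m ξ ≤ 1/2 := hm'le ξ hξ.1.le
    rw [hslope] at hξle
    rw [div_le_iff₀ (by linarith)] at hξle
    rw [hcdef]
    linarith
  -- m r > c for r > v
  have hmgt : ∀ r, v < r → c < m r := by
    intro r hr
    exact hmono (mem_Ici.2 hv0.le) (mem_Ici.2 (hv0.le.trans hr.le)) hr
  -- The comparison function and its primitive
  set u : ℝ → ℝ := fun r => c + (r - v)/2 with hudef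
  set g : ℝ → ℝ := fun r => c / (u r * Real.sqrt ((u r)^2 - c^2)) with hgdef
  set F : ℝ → ℝ := fun r => 2 * Real.arccos (c / u r) with hFdef
  have huval : ∀ r, v < r → c < u r := by
    intro r hr; rw [hudef]; simp only; linarith
  have huderiv : ∀ r : ℝ, HasDerivAt u (1/2) r := by
    intro r
    have : HasDerivAt (fun r : ℝ => c + (r - v)/2) (1/2) r := by
      simpa using (((hasDerivAt_id r).sub_const v).div_const 2).const_add c
    exact this
  have hFderiv : ∀ r ∈ Ioi v, HasDerivAt F (g r) r := by
    intro r hr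
    rw [mem_Ioi] at hr
    have hu : c < u r := huval r hr
    have hu0 : 0 < u r := hc.trans hu
    have hx0 : 0 < c / u r := div_pos hc hu0
    have hx1 : c / u r < 1 := (div_lt_one hu0).2 hu
    have hsqpos : 0 < (u r)^2 - c^2 := by nlinarith
    have hinner : HasDerivAt (fun s => c / u s) (-(c * (1/2)) / (u r)^2) r := by
      simpa using (hasDerivAt_const r c).fun_div (huderiv r) hu0.ne'
    have harccos := (Real.hasDerivAt_arccos (by linarith) hx1.ne).comp r hinner
    have hres := harccos.const_mul (2:ℝ)
    refine hres.congr_deriv ?_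
    have hsq : Real.sqrt (1 - (c / u r)^2) = Real.sqrt ((u r)^2 - c^2) / u r := by
      rw [show (1 - (c / u r)^2) = ((u r)^2 - c^2) / (u r)^2 by field_simp,
        Real.sqrt_div hsqpos.le, Real.sqrt_sq hu0.le]
    rw [hgdef]
    simp only
    rw [hsq]
    have hs0 : 0 < Real.sqrt ((u r)^2 - c^2) := Real.sqrt_pos.2 hsqpos
    field_simp
  have hFcont : ContinuousWithinAt F (Ici v) v := by
    apply ContinuousAt.continuousWithinAt
    have huc : Continuous u := by
      rw [hudef]
      exact continuous_const.add ((continuous_id.sub continuous_const).div_const 2)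
    have huv : u v = c := by rw [hudef]; simp
    have h1 : ContinuousAt (fun r => c / u r) v := by
      apply ContinuousAt.div continuousAt_const huc.continuousAt
      rw [huv]; exact hc.ne'
    exact continuousAt_const.mul (Real.continuous_arccos.continuousAt.comp h1)
  have hFtend : Tendsto F atTop (nhds π) := by
    have hut : Tendsto u atTop atTop := by
      rw [hudef]
      apply tendsto_atTop_add_const_left
      apply Tendsto.atTop_div_const (by norm_num : (0:ℝ) < 2)
      simpa [sub_eq_add_neg] using tendsto_atTop_add_const_right atTop (-v) tendsto_id
    have hdiv : Tendsto (fun r => c / u r) atTop (nhds 0) :=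
      Tendsto.div_atTop tendsto_const_nhds hut
    have harccos : Tendsto (fun r => Real.arccos (c / u r)) atTop (nhds (π/2)) := by
      have := (Real.continuous_arccos.tendsto 0).comp hdiv
      rwa [Real.arccos_zero] at this
    have := harccos.const_mul (2:ℝ)
    rw [hFdef]
    convert this using 2
    ring
  have hgpos : ∀ x ∈ Ioi v, 0 ≤ g x := by
    intro x hx
    rw [mem_Ioi] at hx
    have hu0 : 0 < u x := hc.trans (huval x hx)
    exact div_nonneg hc.le (mul_nonneg hu0.le (Real.sqrt_nonneg _))
  have hFv : F v = 0 := by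
    rw [hFdef, hudef]
    simp [div_self hc.ne']
  have hgval : ∫ x in Ioi v, g x = π := by
    have := integral_Ioi_of_hasDerivAt_of_nonneg hFcont hFderiv hgpos hFtend
    rw [this, hFv, sub_zero]
  have hgint : IntegrableOn g (Ioi v) :=
    integrableOn_Ioi_deriv_of_nonneg hFcont hFderiv hgpos hFtend
  -- the actual integrand
  set f : ℝ → ℝ := fun r => c / (m r * Real.sqrt ((m r)^2 - c^2)) with hfdef
  have hfden : ∀ r, v < r → 0 < m r * Real.sqrt ((m r)^2 - c^2) := by
    intro r hr
    have h1 : c < m r := hmgt r hr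
    exact mul_pos (hc.trans h1) (Real.sqrt_pos.2 (by nlinarith))
  have hfposOn : ∀ r ∈ Ioi v, 0 < f r := fun r hr =>
    div_pos hc (hfden r hr)
  -- pointwise comparison g ≤ f on Ioi v
  have hgf : ∀ r ∈ Ioi v, g r ≤ f r := by
    intro r hr
    rw [mem_Ioi] at hr
    have h1 : c < m r := hmgt r hr
    have h2 : m r ≤ u r := slope_le r hr
    have h3 : m r * Real.sqrt ((m r)^2 - c^2) ≤ u r * Real.sqrt ((u r)^2 - c^2) := by
      apply mul_le_mul h2 (Real.sqrt_le_sqrt (by nlinarith)) (Real.sqrt_nonneg _)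
        (hc.trans (huval r hr)).le
    exact div_le_div_of_nonneg_left hc.le (hfden r hr) h3
  -- continuity / measurability of f on Ioi v
  have hfcont : ContinuousOn f (Ioi v) := by
    apply ContinuousOn.div continuousOn_const
    · apply Continuous.continuousOn
      exact hcm.mul (Real.continuous_sqrt.comp ((hcm.pow 2).sub continuous_const))
    · intro r hr
      exact (hfden r hr).ne'
  have hfmeas : AEStronglyMeasurable f (volume.restrict (Ioi v)) :=
    hfcont.aestronglyMeasurable measurableSet_Ioi
  -- Integrability of f on Ioc v (v+1)
  have hk : 0 < deriv m (v+1) := hm'pos (v+1) (by linarith)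
  set k := deriv m (v+1) with hkdef
  have hfint1 : IntegrableOn f (Ioc v (v+1)) := by
    set K := 1 / Real.sqrt (2*c*k) with hKdef
    have h2ck : 0 < 2*c*k := by positivity
    have hKpos : 0 < K := by rw [hKdef]; positivity
    -- the dominating function K / sqrt (x - v) is integrable on Ioc v (v+1)
    have hdom : IntegrableOn (fun x => K / Real.sqrt (x - v)) (Ioc v (v+1)) := by
      apply intervalIntegral.integrableOn_deriv_of_nonneg (g := fun x => 2 * K * Real.sqrt (x - v))
      · apply Continuous.continuousOn
        exact continuous_const.mul (Real.continuous_sqrt.comp (continuous_id.sub continuous_const))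
      · intro x hx
        have hxv : 0 < x - v := sub_pos.2 hx.1
        have h1 : HasDerivAt (fun y : ℝ => y - v) 1 x := by
          simpa using (hasDerivAt_id x).sub_const v
        have h2 := (Real.hasDerivAt_sqrt hxv.ne').comp x h1
        have h3 := h2.const_mul (2*K)
        refine h3.congr_deriv ?_
        have hs : 0 < Real.sqrt (x - v) := Real.sqrt_pos.2 hxv
        field_simp
      · intro x hx
        have hxv : 0 < x - v := sub_pos.2 hx.1
        positivity
    apply Integrable.mono hdom
      ((hfcont.mono Ioc_subset_Ioi_self).aestronglyMeasurable measurableSet_Ioc)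
    rw [ae_restrict_iff' measurableSet_Ioc]
    apply ae_of_all
    intro r hr
    have hvr : v < r := hr.1
    have hrv : 0 < r - v := sub_pos.2 hvr
    have hmc : c < m r := hmgt r hvr
    have hmvt : k * (r - v) ≤ m r - c := by
      obtain ⟨ξ, hξ, hslope⟩ := exists_hasDerivAt_eq_slope m (deriv m) hvr
        hcm.continuousOn (fun x _ => (hdm x).hasDerivAt)
      have hkξ : k ≤ deriv m ξ := by
        rw [hkdef]
        have h0ξ : (0:ℝ) ≤ ξ := by linarith [hξ.1]
        exact hanti (mem_Ici.mpr h0ξ) (mem_Ici.mpr (by linarith))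
          (by linarith [hξ.2, hr.2])
      rw [hslope, le_div_iff₀ hrv] at hkξ
      rw [hcdef]
      linarith
    have hsq : Real.sqrt (2*c*k) * Real.sqrt (r - v) ≤ Real.sqrt ((m r)^2 - c^2) := by
      rw [← Real.sqrt_mul (by positivity)]
      apply Real.sqrt_le_sqrt
      nlinarith
    have h1 : c * (Real.sqrt (2*c*k) * Real.sqrt (r - v)) ≤
        m r * Real.sqrt ((m r)^2 - c^2) :=
      mul_le_mul hmc.le hsq (by positivity) (by linarith)
    have hfr : f r ≤ K / Real.sqrt (r - v) := by
      have hden : 0 < c * (Real.sqrt (2*c*k) * Real.sqrt (r - v)) := by positivity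
      have h2 := div_le_div_of_nonneg_left hc.le hden h1
      refine le_trans h2 (le_of_eq ?_)
      rw [hKdef]
      have hs1 : (0:ℝ) < Real.sqrt (2*c*k) := Real.sqrt_pos.2 h2ck
      have hs2 : (0:ℝ) < Real.sqrt (r - v) := Real.sqrt_pos.2 hrv
      field_simp
    rw [Real.norm_eq_abs, Real.norm_eq_abs,
      abs_of_nonneg (hfposOn r (mem_Ioi.2 hvr)).le, abs_of_nonneg (by positivity)]
    exact hfr
  -- Integrability of f on Ioi (v+1)
  have hfint2 : IntegrableOn f (Ioi (v+1)) := by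
    set b := m (v+1) with hbdef
    have hcb : c < b := hmgt (v+1) (by linarith)
    have hb0 : 0 < b := hc.trans hcb
    set s := Real.sqrt (b^2 - c^2) with hsdef
    have hs : 0 < s := by
      rw [hsdef]; apply Real.sqrt_pos.2; nlinarith
    have hdom : Integrable (fun r => (c * b / s) * (1 / (m r)^2))
        (volume.restrict (Ioi (v+1))) := by
      exact (hint.mono_set (Ioi_subset_Ioi (by linarith))).const_mul _
    apply Integrable.mono hdom
      ((hfcont.mono (Ioi_subset_Ioi (by linarith))).aestronglyMeasurable measurableSet_Ioi)
    rw [ae_restrict_iff' measurableSet_Ioi]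
    apply ae_of_all
    intro r hr
    have hr' : v + 1 < r := hr
    have hvr : v < r := by linarith
    have hmc : c < m r := hmgt r hvr
    have hmr : 0 < m r := hc.trans hmc
    have hbr : b ≤ m r := by
      rcases eq_or_lt_of_le hr'.le with h | h
      · rw [hbdef, h]
      · exact (hmono (mem_Ici.2 (by linarith)) (mem_Ici.2 (by linarith)) h).le
    have h2 : s * m r ≤ b * Real.sqrt ((m r)^2 - c^2) := by
      have hb2m : b^2 ≤ (m r)^2 := by nlinarith
      have hkey2 : (b^2 - c^2) * (m r)^2 ≤ b^2 * ((m r)^2 - c^2) := by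
        nlinarith [mul_nonneg (sq_nonneg c) (sub_nonneg.2 hb2m)]
      have h5 := Real.sqrt_le_sqrt hkey2
      have e1 : Real.sqrt ((b^2 - c^2) * (m r)^2) = s * m r := by
        rw [Real.sqrt_mul (by nlinarith : (0:ℝ) ≤ b^2 - c^2), Real.sqrt_sq hmr.le, hsdef]
      have e2 : Real.sqrt (b^2 * ((m r)^2 - c^2)) = b * Real.sqrt ((m r)^2 - c^2) := by
        rw [Real.sqrt_mul (by positivity : (0:ℝ) ≤ b^2), Real.sqrt_sq hb0.le]
      rw [e1, e2] at h5
      exact h5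
    have hfr : f r ≤ (c * b / s) * (1 / (m r)^2) := by
      have hsq2 : 0 < Real.sqrt ((m r)^2 - c^2) := Real.sqrt_pos.2 (by nlinarith)
      have hden1 : 0 < (s / b) * (m r)^2 := by positivity
      have h3 : (s / b) * (m r)^2 ≤ m r * Real.sqrt ((m r)^2 - c^2) := by
        rw [div_mul_eq_mul_div, div_le_iff₀ hb0]
        nlinarith
      have h4 := div_le_div_of_nonneg_left hc.le hden1 h3
      refine le_trans h4 (le_of_eq ?_)
      field_simp
      try ring
    rw [Real.norm_eq_abs, Real.norm_eq_abs,
      abs_of_nonneg (hfposOn r (mem_Ioi.2 hvr)).le, abs_of_nonneg (by positivity)]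
    exact hfr
  have hfint : IntegrableOn f (Ioi v) := by
    have hsplit : Ioc v (v+1) ∪ Ioi (v+1) = Ioi v := Ioc_union_Ioi_eq_Ioi (by linarith)
    rw [← hsplit]
    exact hfint1.union hfint2
  -- strict comparison beyond some point R0
  obtain ⟨R0, hR0half, hR0v⟩ : ∃ R0, deriv m R0 < 1/2 ∧ v < R0 := by
    have h1 := hL.eventually (gt_mem_nhds hLhalf)
    exact (h1.and (eventually_gt_atTop v)).exists
  have hstrict : ∀ r, R0 < r → g r < f r := by
    intro r hr
    have hvr : v < r := hR0v.trans hr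
    have h1 : c < m r := hmgt r hvr
    have hmlt : m r < u r := by
      obtain ⟨ξ, hξ, hslope⟩ := exists_hasDerivAt_eq_slope m (deriv m) hr
        hcm.continuousOn (fun x _ => (hdm x).hasDerivAt)
      have hξle : deriv m ξ ≤ deriv m R0 :=
        hanti (mem_Ici.mpr (by linarith : (0:ℝ) ≤ R0))
          (mem_Ici.mpr (by linarith [hξ.1] : (0:ℝ) ≤ ξ)) hξ.1.le
      rw [hslope] at hξle
      rw [div_le_iff₀ (by linarith)] at hξle
      have hmR0 : m R0 ≤ c + (R0 - v)/2 := slope_le R0 hR0v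
      rw [hudef]
      simp only
      nlinarith [sub_pos.2 hr]
    have h3 : m r * Real.sqrt ((m r)^2 - c^2) < u r * Real.sqrt ((u r)^2 - c^2) := by
      apply mul_lt_mul hmlt (Real.sqrt_le_sqrt (by nlinarith)) _ (by linarith)
      exact Real.sqrt_pos.2 (by nlinarith)
    exact div_lt_div_of_pos_left hc (hfden r hvr) h3
  -- positivity of ∫ (f - g)
  have hsubint : IntegrableOn (fun r => f r - g r) (Ioi v) := hfint.sub hgint
  have hdiffpos : 0 < ∫ r in Ioi v, (f r - g r) := by
    rw [setIntegral_pos_iff_support_of_nonneg_ae _ hsubint]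
    · apply lt_of_lt_of_le _ (measure_mono (show Ioi (R0+1) ⊆
        Function.support (fun r => f r - g r) ∩ Ioi v from ?_))
      · rw [Real.volume_Ioi]
        exact ENNReal.zero_lt_top
      · intro r hr
        rw [mem_Ioi] at hr
        have h1 : R0 < r := by linarith
        constructor
        · exact sub_ne_zero.2 (hstrict r h1).ne'
        · exact mem_Ioi.2 (by linarith [hR0v])
    · filter_upwards [ae_restrict_mem measurableSet_Ioi] with r hr
      exact sub_nonneg.2 (hgf r hr)
  rw [integral_sub hfint hgint, hgval] at hdiffpos
  have : (∫ r in Ioi v, f r) = ∫ r in Set.Ioi v, m v / (m r * Real.sqrt ((m r) ^ 2 - (m v) ^ 2)) := by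
    rfl
  linarith [hdiffpos]
end

section
/- Let 0 < q < y and let m be a smooth positive function on a neighborhood of [q,y] with m′(r) > 0 for all r ∈ [q,y]. Set b = max_{[q,y]} m′ and c = m(q). If b < 1/2 and c < cos(πb)·m(y), then the improper integral ∫_q^y c/(m(r)·√(m(r)² − c²)) dr is greater than π. -/
open Real Set Filter MeasureTheory

/-- Analytic core of the neck theorem: if `m' > 0` on `[q,y]`, `b = max m'` on
`[q,y]` satisfies `b < 1/2`, and `m q < cos (π b) * m y`, then the (convergent)
turn-angle integral over `(q, y)` exceeds `π`. -/
theorem stmt_3 (q y : ℝ) (hq : 0 < q) (hqy : q < y)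
    (U : Set ℝ) (hU : IsOpen U) (hUqy : Set.Icc q y ⊆ U)
    (m : ℝ → ℝ) (hsmooth : ContDiffOn ℝ (⊤ : ℕ∞) m U)
    (hpos : ∀ r ∈ U, 0 < m r)
    (hm' : ∀ r ∈ Set.Icc q y, 0 < deriv m r)
    (b : ℝ) (hb : IsGreatest ((fun r => deriv m r) '' Set.Icc q y) b)
    (hbhalf : b < 1 / 2)
    (hchoke : m q < Real.cos (π * b) * m y) :
    MeasureTheory.IntegrableOn
      (fun r => m q / (m r * Real.sqrt ((m r) ^ 2 - (m q) ^ 2)))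
      (Set.Ioo q y) ∧
    π < ∫ r in Set.Ioo q y, m q / (m r * Real.sqrt ((m r) ^ 2 - (m q) ^ 2)) := by
  set c := m q with hc
  set f : ℝ → ℝ := fun r => c / (m r * Real.sqrt (m r ^ 2 - c ^ 2)) with hf
  have hqmem : q ∈ Set.Icc q y := ⟨le_refl q, hqy.le⟩
  have hymem : y ∈ Set.Icc q y := ⟨hqy.le, le_refl y⟩
  have hmcont : ContinuousOn m U := hsmooth.continuousOn
  have hmdiff : ∀ r ∈ U, DifferentiableAt ℝ m r := fun r hr =>
    (hsmooth.differentiableOn (by norm_num)).differentiableAt (hU.mem_nhds hr)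
  -- strict monotonicity of m on [q,y]
  have hsm : StrictMonoOn m (Set.Icc q y) := by
    apply strictMonoOn_of_deriv_pos (convex_Icc q y) (hmcont.mono hUqy)
    intro x hx
    rw [interior_Icc] at hx
    exact hm' x (Set.Ioo_subset_Icc_self hx)
  have hcpos : 0 < c := hpos q (hUqy hqmem)
  have hmypos : 0 < m y := hpos y (hUqy hymem)
  -- b is positive
  obtain ⟨r₁, hr₁mem, hbr₁⟩ := hb.1
  have hbpos : 0 < b := hbr₁ ▸ hm' r₁ hr₁mem
  have hble : ∀ r ∈ Set.Icc q y, deriv m r ≤ b := fun r hr => hb.2 ⟨r, hr, rfl⟩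
  -- cos (π b) ∈ (0, 1]
  have hpb0 : 0 ≤ π * b := by positivity
  have hpbπ : π * b < π := by nlinarith [Real.pi_pos]
  have hcosle : Real.cos (π * b) ≤ 1 := Real.cos_le_one _
  have hcmy : c < m y := lt_of_lt_of_le hchoke (by nlinarith)
  -- on (q, y], c < m r
  have hclt : ∀ r ∈ Set.Ioc q y, c < m r := fun r hr =>
    hsm hqmem ⟨hr.1.le, hr.2⟩ hr.1
  -- the antiderivative
  set g : ℝ → ℝ := fun r => Real.arccos (c / m r) with hg
  set g' : ℝ → ℝ := fun r => c * deriv m r / (m r * Real.sqrt (m r ^ 2 - c ^ 2)) with hg'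
  have hgderiv : ∀ r ∈ Set.Ioo q y, HasDerivAt g (g' r) r := by
    intro r hr
    have hrU : r ∈ U := hUqy (Set.Ioo_subset_Icc_self hr)
    have hmr : c < m r := hclt r ⟨hr.1, hr.2.le⟩
    have hmrpos : 0 < m r := hcpos.trans hmr
    have hu0 : 0 < c / m r := by positivity
    have hu1 : c / m r < 1 := (div_lt_one hmrpos).2 hmr
    have hdm := (hmdiff r hrU).hasDerivAt
    have hdiv : HasDerivAt (fun s => c / m s)
        ((0 * m r - c * deriv m r) / m r ^ 2) r :=
      (hasDerivAt_const r c).div hdm hmrpos.ne'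
    have harc := Real.hasDerivAt_arccos (x := c / m r) (by linarith) (by linarith)
    have := harc.comp r hdiv
    refine this.congr_deriv (Eq.symm ?_)
    have hsq : 0 < 1 - (c / m r) ^ 2 := by nlinarith
    have hkey : Real.sqrt (1 - (c / m r) ^ 2) * m r = Real.sqrt (m r ^ 2 - c ^ 2) := by
      have heq : (1 - (c / m r) ^ 2) * m r ^ 2 = m r ^ 2 - c ^ 2 := by
        field_simp
      calc Real.sqrt (1 - (c / m r) ^ 2) * m r
          = Real.sqrt (1 - (c / m r) ^ 2) * Real.sqrt (m r ^ 2) := by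
            rw [Real.sqrt_sq hmrpos.le]
        _ = Real.sqrt ((1 - (c / m r) ^ 2) * m r ^ 2) := (Real.sqrt_mul hsq.le _).symm
        _ = Real.sqrt (m r ^ 2 - c ^ 2) := by rw [heq]
    have h1 : Real.sqrt (1 - (c / m r) ^ 2) ≠ 0 := (Real.sqrt_pos.2 hsq).ne'
    have h2 : Real.sqrt (m r ^ 2 - c ^ 2) ≠ 0 := by
      rw [← hkey]; positivity
    show c * deriv m r / (m r * Real.sqrt (m r ^ 2 - c ^ 2)) = _
    rw [← hkey]
    field_simp
    ring
  have hg'nonneg : ∀ r ∈ Set.Ioo q y, 0 ≤ g' r := by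
    intro r hr
    have := (hm' r (Set.Ioo_subset_Icc_self hr)).le
    have hmrpos : 0 < m r := hpos r (hUqy (Set.Ioo_subset_Icc_self hr))
    have : 0 ≤ c * deriv m r := by positivity
    exact div_nonneg this (by positivity)
  have hgcont : ContinuousOn g (Set.Icc q y) := by
    apply Real.continuous_arccos.comp_continuousOn
    exact continuousOn_const.div (hmcont.mono hUqy)
      (fun r hr => (hpos r (hUqy hr)).ne')
  -- g' is integrable
  have hInt_g' : IntegrableOn g' (Set.Ioc q y) :=
    intervalIntegral.integrableOn_deriv_of_nonneg hgcont hgderiv hg'nonneg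
  have hInt_g'o : IntegrableOn g' (Set.Ioo q y) :=
    hInt_g'.mono_set Set.Ioo_subset_Ioc_self
  -- min of deriv m
  obtain ⟨r₀, hr₀mem, hr₀min⟩ := isCompact_Icc.exists_isMinOn (Set.nonempty_Icc.2 hqy.le)
    ((hsmooth.continuousOn_deriv_of_isOpen hU (by simp)).mono hUqy)
  set ε := deriv m r₀ with hε
  have hεpos : 0 < ε := hm' r₀ hr₀mem
  have hεle : ∀ r ∈ Set.Icc q y, ε ≤ deriv m r := fun r hr => hr₀min hr
  -- relation between f and g'
  have hfg : ∀ r ∈ Set.Ioo q y, g' r = deriv m r * f r := by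
    intro r hr; simp only [hg', hf]; ring
  have hfnonneg : ∀ r ∈ Set.Ioo q y, 0 ≤ f r := by
    intro r hr
    have hmrpos : 0 < m r := hpos r (hUqy (Set.Ioo_subset_Icc_self hr))
    positivity
  have hfle : ∀ r ∈ Set.Ioo q y, f r ≤ ε⁻¹ * g' r := by
    intro r hr
    have hd := hm' r (Set.Ioo_subset_Icc_self hr)
    have hεd := hεle r (Set.Ioo_subset_Icc_self hr)
    have := hfg r hr
    have hfr := hfnonneg r hr
    rw [this, ← sub_nonneg]
    have h2 : ε⁻¹ * (deriv m r * f r) - f r = (ε⁻¹ * deriv m r - 1) * f r := by ring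
    rw [h2]
    apply mul_nonneg _ hfr
    rw [sub_nonneg, ← div_eq_inv_mul, le_div_iff₀ hεpos, one_mul]
    exact hεd
  have hgef : ∀ r ∈ Set.Ioo q y, b⁻¹ * g' r ≤ f r := by
    intro r hr
    have hd := hm' r (Set.Ioo_subset_Icc_self hr)
    have hdb := hble r (Set.Ioo_subset_Icc_self hr)
    have := hfg r hr
    have hfr := hfnonneg r hr
    rw [this, ← sub_nonneg]
    have h2 : f r - b⁻¹ * (deriv m r * f r) = (1 - b⁻¹ * deriv m r) * f r := by ring
    rw [h2]
    apply mul_nonneg _ hfr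
    rw [sub_nonneg, ← div_eq_inv_mul, div_le_one hbpos]
    exact hdb
  -- f is measurable on Ioo
  have hfcont : ContinuousOn f (Set.Ioo q y) := by
    apply continuousOn_const.div
    · apply ContinuousOn.mul (hmcont.mono (fun r hr => hUqy (Set.Ioo_subset_Icc_self hr)))
      exact (Real.continuous_sqrt.comp_continuousOn
        (((hmcont.mono (fun r hr => hUqy (Set.Ioo_subset_Icc_self hr))).pow 2).sub
          continuousOn_const))
    · intro r hr
      have hmr : c < m r := hclt r ⟨hr.1, hr.2.le⟩
      have hmrpos : 0 < m r := hcpos.trans hmr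
      have : 0 < Real.sqrt (m r ^ 2 - c ^ 2) := Real.sqrt_pos.2 (by nlinarith)
      positivity
  -- integrability of f
  have hIntf : IntegrableOn f (Set.Ioo q y) := by
    apply Integrable.mono' (hInt_g'o.const_mul ε⁻¹)
      (hfcont.aestronglyMeasurable measurableSet_Ioo)
    rw [ae_restrict_iff' measurableSet_Ioo]
    filter_upwards with r hr
    rw [Real.norm_of_nonneg (hfnonneg r hr)]
    exact hfle r hr
  refine ⟨hIntf, ?_⟩
  -- FTC:  ∫ g' = g y - g q
  have hIntInt : IntervalIntegrable g' volume q y := by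
    rw [intervalIntegrable_iff_integrableOn_Ioc_of_le hqy.le]
    exact hInt_g'
  have hFTC : ∫ r in q..y, g' r = g y - g q :=
    intervalIntegral.integral_eq_sub_of_hasDerivAt_of_le hqy.le hgcont hgderiv hIntInt
  have hgq : g q = 0 := by
    show Real.arccos (c / m q) = 0
    rw [← hc, div_self hcpos.ne', Real.arccos_one]
  -- g y > π b
  have hu0 : 0 < c / m y := by positivity
  have hu1 : c / m y < 1 := (div_lt_one hmypos).2 hcmy
  have hgy : π * b < g y := by
    by_contra h
    push_neg at h
    have harc0 : 0 ≤ g y := Real.arccos_nonneg _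
    have hcoseq : Real.cos (g y) = c / m y := by
      show Real.cos (Real.arccos (c / m y)) = c / m y
      exact Real.cos_arccos (by linarith) hu1.le
    have h2 := Real.cos_le_cos_of_nonneg_of_le_pi harc0 hpbπ.le h
    rw [hcoseq] at h2
    have h3 : Real.cos (π * b) * m y ≤ c := by
      rw [← le_div_iff₀ hmypos]; exact h2
    linarith
  -- compute the integral over Ioo of g'
  have hIoo : ∫ r in Set.Ioo q y, g' r = g y - g q := by
    rw [← MeasureTheory.integral_Ioc_eq_integral_Ioo, ← intervalIntegral.integral_of_le hqy.le]
    exact hFTC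
  have hmono : ∫ r in Set.Ioo q y, b⁻¹ * g' r ≤ ∫ r in Set.Ioo q y, f r :=
    setIntegral_mono_on (hInt_g'o.const_mul b⁻¹) hIntf measurableSet_Ioo hgef
  have hconst : ∫ r in Set.Ioo q y, b⁻¹ * g' r = b⁻¹ * (g y - g q) := by
    rw [MeasureTheory.integral_const_mul, hIoo]
  have : π < b⁻¹ * (g y - g q) := by
    rw [hgq, sub_zero, ← div_eq_inv_mul, lt_div_iff₀ hbpos]
    linarith [hgy]
  calc π < b⁻¹ * (g y - g q) := this
    _ = ∫ r in Set.Ioo q y, b⁻¹ * g' r := hconst.symm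
    _ ≤ ∫ r in Set.Ioo q y, f r := hmono
end

section
/- Let 0 < q < y and let m be a smooth positive function on a neighborhood of [q,y] with m′(r) > 0 for all r ∈ [q,y]. Set b = max_{[q,y]} m′ and c = m(q). Then the improper integral ∫_q^y c/(m(r)·√(m(r)² − c²)) dr converges and is at least (1/b)·arccos(c/m(y)). -/
open Real Set Filter MeasureTheory

/-- If `m' > 0` on `[q,y]` with maximum `b` and `c = m q`, then the improper
turn-angle integral over `(q,y)` converges and is at least
`(1/b) * arccos (c / m y)`. -/
theorem stmt_4 (q y : ℝ) (hq : 0 < q) (hqy : q < y)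
    (U : Set ℝ) (hU : IsOpen U) (hUqy : Set.Icc q y ⊆ U)
    (m : ℝ → ℝ) (hsmooth : ContDiffOn ℝ (⊤ : ℕ∞) m U)
    (hpos : ∀ r ∈ U, 0 < m r)
    (hm' : ∀ r ∈ Set.Icc q y, 0 < deriv m r)
    (b : ℝ) (hb : IsGreatest ((fun r => deriv m r) '' Set.Icc q y) b) :
    MeasureTheory.IntegrableOn
      (fun r => m q / (m r * Real.sqrt ((m r) ^ 2 - (m q) ^ 2)))
      (Set.Ioo q y) ∧
    (1 / b) * Real.arccos (m q / m y) ≤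
      ∫ r in Set.Ioo q y, m q / (m r * Real.sqrt ((m r) ^ 2 - (m q) ^ 2)) := by
  set c := m q with hc
  set f : ℝ → ℝ := fun r => c / (m r * Real.sqrt ((m r) ^ 2 - c ^ 2)) with hf
  set G : ℝ → ℝ := fun r => deriv m r * f r with hG
  set F : ℝ → ℝ := fun r => Real.arccos (c / m r) with hFdef
  have hqU : q ∈ U := hUqy ⟨le_refl q, hqy.le⟩
  have hcpos : 0 < c := hpos q hqU
  -- b is positive
  obtain ⟨⟨r₀, hr₀, hbr₀⟩, hbub⟩ := hb
  have hbpos : 0 < b := hbr₀ ▸ hm' r₀ hr₀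
  -- m differentiable at points of U
  have hdiff : ∀ x ∈ U, HasDerivAt m (deriv m x) x := by
    intro x hx
    exact (((hsmooth.differentiableOn (by simp)).differentiableAt
      (hU.mem_nhds hx))).hasDerivAt
  have hmcont : ContinuousOn m (Icc q y) := (hsmooth.continuousOn).mono hUqy
  -- strict monotonicity on [q,y]
  have hsm : StrictMonoOn m (Icc q y) := by
    apply strictMonoOn_of_deriv_pos (convex_Icc q y) hmcont
    intro x hx
    rw [interior_Icc] at hx
    exact hm' x ⟨hx.1.le, hx.2.le⟩
  have hmy : c < m y := hsm ⟨le_refl q, hqy.le⟩ ⟨hqy.le, le_refl y⟩ hqy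
  -- key derivative computation
  have hF : ∀ x ∈ Ioo q y, HasDerivAt F (G x) x := by
    intro x hx
    have hxIcc : x ∈ Icc q y := ⟨hx.1.le, hx.2.le⟩
    have hxU : x ∈ U := hUqy hxIcc
    have hmx : 0 < m x := hpos x hxU
    have hlt : c < m x := hsm ⟨le_refl q, hqy.le⟩ hxIcc hx.1
    have hne : m x ≠ 0 := hmx.ne'
    have hu : HasDerivAt (fun r => c / m r)
        ((0 * m x - c * deriv m x) / m x ^ 2) x :=
      (hasDerivAt_const x c).div (hdiff x hxU) hne
    have h1 : c / m x ≠ -1 := by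
      have : 0 < c / m x := div_pos hcpos hmx
      linarith
    have h2 : c / m x ≠ 1 := by
      have : c / m x < 1 := (div_lt_one hmx).2 hlt
      linarith
    have hcomp := (Real.hasDerivAt_arccos h1 h2).comp x hu
    have hsd : 0 < m x ^ 2 - c ^ 2 := by nlinarith
    have hsqrt : Real.sqrt (1 - (c / m x) ^ 2)
        = Real.sqrt (m x ^ 2 - c ^ 2) / m x := by
      have heq : 1 - (c / m x) ^ 2 = (m x ^ 2 - c ^ 2) / (m x) ^ 2 := by
        field_simp
      rw [heq, Real.sqrt_div hsd.le, Real.sqrt_sq hmx.le]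
    refine hcomp.congr_deriv ?_
    rw [hsqrt]
    have hs0 : Real.sqrt (m x ^ 2 - c ^ 2) ≠ 0 := by positivity
    simp only [hG, hf]
    field_simp
    ring
  -- continuity of F on Icc
  have hFcont : ContinuousOn F (Icc q y) := by
    apply Real.continuous_arccos.comp_continuousOn
    exact continuousOn_const.div hmcont (fun x hx => (hpos x (hUqy hx)).ne')
  -- positivity of f and G on Ioo
  have hfpos : ∀ x ∈ Ioo q y, 0 < f x := by
    intro x hx
    have hxIcc : x ∈ Icc q y := ⟨hx.1.le, hx.2.le⟩
    have hmx : 0 < m x := hpos x (hUqy hxIcc)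
    have hlt : c < m x := hsm ⟨le_refl q, hqy.le⟩ hxIcc hx.1
    have hsd : 0 < m x ^ 2 - c ^ 2 := by nlinarith
    have : 0 < Real.sqrt (m x ^ 2 - c ^ 2) := Real.sqrt_pos.2 hsd
    positivity
  have hGpos : ∀ x ∈ Ioo q y, 0 ≤ G x := fun x hx =>
    (mul_pos (hm' x ⟨hx.1.le, hx.2.le⟩) (hfpos x hx)).le
  -- G is integrable (derivative of a monotone continuous function)
  have hGint : IntegrableOn G (Ioc q y) :=
    intervalIntegral.integrableOn_deriv_of_nonneg hFcont hF hGpos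
  have hGint' : IntegrableOn G (Ioo q y) := hGint.mono_set Ioo_subset_Ioc_self
  -- minimum of deriv m on [q,y]
  have hdmcont : ContinuousOn (deriv m) (Icc q y) :=
    (hsmooth.continuousOn_deriv_of_isOpen hU (by simp)).mono hUqy
  obtain ⟨x₀, hx₀, hmin⟩ := isCompact_Icc.exists_isMinOn
    ⟨q, le_refl q, hqy.le⟩ hdmcont
  set δ := deriv m x₀ with hδ
  have hδpos : 0 < δ := hm' x₀ hx₀
  have hδle : ∀ x ∈ Icc q y, δ ≤ deriv m x := fun x hx => hmin hx
  -- f is continuous on Ioo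
  have hfcont : ContinuousOn f (Ioo q y) := by
    apply continuousOn_const.div
    · apply ContinuousOn.mul (hmcont.mono Ioo_subset_Icc_self)
      exact (Real.continuous_sqrt.comp_continuousOn
        (((hmcont.mono Ioo_subset_Icc_self).pow 2).sub continuousOn_const))
    · intro x hx
      have hxIcc : x ∈ Icc q y := ⟨hx.1.le, hx.2.le⟩
      have hmx : 0 < m x := hpos x (hUqy hxIcc)
      have hlt : c < m x := hsm ⟨le_refl q, hqy.le⟩ hxIcc hx.1
      have hsd : 0 < m x ^ 2 - c ^ 2 := by nlinarith
      have : 0 < Real.sqrt (m x ^ 2 - c ^ 2) := Real.sqrt_pos.2 hsd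
      positivity
  -- f ≤ δ⁻¹ * G on Ioo
  have hfleG : ∀ x ∈ Ioo q y, f x ≤ δ⁻¹ * G x := by
    intro x hx
    have h1 : δ ≤ deriv m x := hδle x ⟨hx.1.le, hx.2.le⟩
    have h2 : 0 < f x := hfpos x hx
    have : δ * f x ≤ deriv m x * f x := by nlinarith
    rw [hG]
    calc f x = δ⁻¹ * (δ * f x) := by field_simp
    _ ≤ δ⁻¹ * (deriv m x * f x) := by
        apply mul_le_mul_of_nonneg_left this (by positivity)
  -- integrability of f
  have hfint : IntegrableOn f (Ioo q y) := by
    apply Integrable.mono' (hGint'.const_mul δ⁻¹)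
      (hfcont.aestronglyMeasurable measurableSet_Ioo)
    filter_upwards [ae_restrict_mem measurableSet_Ioo] with x hx
    rw [Real.norm_of_nonneg (hfpos x hx).le]
    exact hfleG x hx
  refine ⟨hfint, ?_⟩
  -- integral of G equals F y - F q = arccos (c / m y)
  have hGeq : ∫ x in Ioo q y, G x = Real.arccos (c / m y) := by
    rw [← integral_Ioc_eq_integral_Ioo, ← intervalIntegral.integral_of_le hqy.le]
    rw [intervalIntegral.integral_eq_sub_of_hasDeriv_right_of_le hqy.le hFcont
      (fun x hx => (hF x hx).hasDerivWithinAt)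
      ((intervalIntegrable_iff_integrableOn_Ioc_of_le hqy.le).2 hGint)]
    simp only [hFdef]
    rw [div_self hcpos.ne', Real.arccos_one, sub_zero]
  -- conclude
  have hmono : ∫ x in Ioo q y, b⁻¹ * G x ≤ ∫ x in Ioo q y, f x := by
    apply setIntegral_mono_on (hGint'.const_mul b⁻¹) hfint measurableSet_Ioo
    intro x hx
    have h1 : deriv m x ≤ b := hbub ⟨x, ⟨hx.1.le, hx.2.le⟩, rfl⟩
    have h2 : 0 < f x := hfpos x hx
    have : deriv m x * f x ≤ b * f x := by nlinarith
    calc b⁻¹ * G x ≤ b⁻¹ * (b * f x) := by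
          apply mul_le_mul_of_nonneg_left this (by positivity)
    _ = f x := by field_simp
  calc (1 / b) * Real.arccos (c / m y)
      = ∫ x in Ioo q y, b⁻¹ * G x := by
        rw [integral_const_mul, hGeq, one_div]
    _ ≤ ∫ x in Ioo q y, f x := hmono
end

section
/- Let m : [0,∞) → ℝ be smooth with m(r) > 0 for all r > 0, and suppose ∫₁^∞ m(r)^{-2} dr < ∞. Then the function r ↦ m(r)/√(r·log r) is unbounded on (1,∞). -/
open Real Set Filter MeasureTheory

lemma aux_one_lt_e : (1:ℝ) < Real.exp 1 := by
  nlinarith [Real.add_one_le_exp (1:ℝ)]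

lemma aux_not_int :
    ¬ MeasureTheory.IntegrableOn (fun x => 1 / (x * Real.log x)) (Set.Ioi (Real.exp 1)) := by
  intro hI
  set e := Real.exp 1 with he
  have he1 : (1:ℝ) < e := aux_one_lt_e
  have he0 : (0:ℝ) < e := lt_trans one_pos he1
  set I : ℝ := ∫ x in Set.Ioi e, 1 / (x * Real.log x)
  have key : ∀ A : ℝ, e < A → Real.log (Real.log A) ≤ I := by
    intro A hA
    have hIcc : ∀ x ∈ Set.Icc e A, 1 < x := fun x hx => lt_of_lt_of_le he1 hx.1
    have hcont : ContinuousOn (fun x => 1 / (x * Real.log x)) (Set.Icc e A) := by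
      apply ContinuousOn.div continuousOn_const
      · exact continuousOn_id.mul (Real.continuousOn_log.mono
          (fun x hx => by simp [ne_of_gt (lt_trans one_pos (hIcc x hx))]))
      · intro x hx
        have h1 := hIcc x hx
        have hlog : 0 < Real.log x := Real.log_pos h1
        positivity
    have hderiv : ∀ x ∈ Set.uIcc e A, HasDerivAt (fun y => Real.log (Real.log y))
        (1 / (x * Real.log x)) x := by
      intro x hx
      rw [Set.uIcc_of_le hA.le] at hx
      have h1 := hIcc x hx
      have hx0 : x ≠ 0 := ne_of_gt (lt_trans one_pos h1)
      have hlog : 0 < Real.log x := Real.log_pos h1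
      have h := (Real.hasDerivAt_log (ne_of_gt hlog)).comp x (Real.hasDerivAt_log hx0)
      rw [show (1 / (x * Real.log x)) = (Real.log x)⁻¹ * x⁻¹ by ring]
      exact h
    have hii : IntervalIntegrable (fun x => 1 / (x * Real.log x)) MeasureTheory.volume e A := by
      rw [intervalIntegrable_iff_integrableOn_Icc_of_le hA.le]
      exact hcont.integrableOn_compact isCompact_Icc
    have hFTC := intervalIntegral.integral_eq_sub_of_hasDerivAt hderiv hii
    have hloge : Real.log (Real.log e) = 0 := by
      rw [he, Real.log_exp]; simp
    have heq : (∫ x in Set.Ioc e A, 1 / (x * Real.log x)) = Real.log (Real.log A) := by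
      rw [← intervalIntegral.integral_of_le hA.le, hFTC, hloge, sub_zero]
    rw [← heq]
    apply MeasureTheory.setIntegral_mono_set hI
    · filter_upwards [MeasureTheory.ae_restrict_mem measurableSet_Ioi] with x hx
      have h1 : 1 < x := lt_trans he1 hx
      have hlog : 0 < Real.log x := Real.log_pos h1
      have hx0 : 0 < x := lt_trans one_pos h1
      positivity
    · exact HasSubset.Subset.eventuallyLE Set.Ioc_subset_Ioi_self
  have htend : Filter.Tendsto (fun A => Real.log (Real.log A)) Filter.atTop Filter.atTop :=
    Real.tendsto_log_atTop.comp Real.tendsto_log_atTop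
  obtain ⟨A, hA1, hA2⟩ := ((htend.eventually_gt_atTop I).and (Filter.eventually_gt_atTop e)).exists
  exact absurd (key A hA2) (not_le.mpr hA1)

/-- If `m⁻²` is integrable on `(1,∞)`, then `m r / √(r log r)` is unbounded on
`(1,∞)`. -/
theorem stmt_5 (m : ℝ → ℝ)
    (hsmooth : ContDiff ℝ (⊤ : ℕ∞) m)
    (hpos : ∀ r > (0:ℝ), 0 < m r)
    (hint : MeasureTheory.IntegrableOn (fun r => 1 / (m r) ^ 2) (Set.Ioi 1)) :
    ∀ C : ℝ, ∃ r : ℝ, 1 < r ∧ C < m r / Real.sqrt (r * Real.log r) := by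
  by_contra h
  push_neg at h
  obtain ⟨C, hC⟩ := h
  set e := Real.exp 1 with he
  have he1 : (1:ℝ) < e := aux_one_lt_e
  set C₁ : ℝ := max C 1 with hC₁def
  have hC₁ : (0:ℝ) < C₁ := lt_of_lt_of_le one_pos (le_max_right _ _)
  -- key pointwise bound on Ioi e
  have hbound : ∀ x ∈ Set.Ioi e, 1 / (x * Real.log x) ≤ C₁ ^ 2 * (1 / (m x) ^ 2) := by
    intro x hx
    have h1 : 1 < x := lt_trans he1 hx
    have hx0 : 0 < x := lt_trans one_pos h1
    have hlog : 0 < Real.log x := Real.log_pos h1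
    have hm : 0 < m x := hpos x hx0
    have hrl : 0 < x * Real.log x := mul_pos hx0 hlog
    have hsqrt : 0 < Real.sqrt (x * Real.log x) := Real.sqrt_pos.mpr hrl
    have hle : m x ≤ C₁ * Real.sqrt (x * Real.log x) := by
      have := hC x h1
      have h' : m x / Real.sqrt (x * Real.log x) ≤ C₁ := this.trans (le_max_left _ _)
      calc m x = (m x / Real.sqrt (x * Real.log x)) * Real.sqrt (x * Real.log x) := by
            field_simp
        _ ≤ C₁ * Real.sqrt (x * Real.log x) := by
            exact mul_le_mul_of_nonneg_right h' hsqrt.le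
    have hsq : (m x) ^ 2 ≤ C₁ ^ 2 * (x * Real.log x) := by
      have h2 : (m x) ^ 2 ≤ (C₁ * Real.sqrt (x * Real.log x)) ^ 2 :=
        pow_le_pow_left₀ hm.le hle 2
      calc (m x) ^ 2 ≤ (C₁ * Real.sqrt (x * Real.log x)) ^ 2 := h2
        _ = C₁ ^ 2 * (Real.sqrt (x * Real.log x)) ^ 2 := by ring
        _ = C₁ ^ 2 * (x * Real.log x) := by rw [Real.sq_sqrt hrl.le]
    rw [div_le_iff₀ hrl, mul_comm, ← mul_assoc]
    have hm2 : 0 < (m x) ^ 2 := by positivity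
    rw [mul_one_div, one_le_div hm2]
    nlinarith
  -- integrability of the dominating function on Ioi e
  have hint' : MeasureTheory.IntegrableOn (fun r => C₁ ^ 2 * (1 / (m r) ^ 2)) (Set.Ioi e) :=
    (hint.mono_set (Set.Ioi_subset_Ioi he1.le)).const_mul _
  have hmeas : MeasureTheory.AEStronglyMeasurable (fun x => 1 / (x * Real.log x))
      (MeasureTheory.volume.restrict (Set.Ioi e)) := by
    apply ContinuousOn.aestronglyMeasurable _ measurableSet_Ioi
    apply ContinuousOn.div continuousOn_const
    · exact continuousOn_id.mul (Real.continuousOn_log.mono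
        (fun x hx => by
          have : 1 < x := lt_trans he1 hx
          simp [ne_of_gt (lt_trans one_pos this)]))
    · intro x hx
      have h1 : 1 < x := lt_trans he1 hx
      have hlog : 0 < Real.log x := Real.log_pos h1
      have hx0 : 0 < x := lt_trans one_pos h1
      positivity
  have hII : MeasureTheory.IntegrableOn (fun x => 1 / (x * Real.log x)) (Set.Ioi e) := by
    apply hint'.mono' hmeas
    filter_upwards [MeasureTheory.ae_restrict_mem measurableSet_Ioi] with x hx
    have h1 : 1 < x := lt_trans he1 hx
    have hlog : 0 < Real.log x := Real.log_pos h1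
    have hx0 : 0 < x := lt_trans one_pos h1
    rw [Real.norm_eq_abs, abs_of_nonneg (by positivity)]
    exact hbound x hx
  exact aux_not_int hII
end

section
/- Let m : [0,∞) → ℝ be smooth with m(0) = 0, m′(0) = 1, m(r) > 0 for all r > 0, and with −m″/m non-increasing on [0,∞). If ∫₁^∞ m(r)^{-2} dr < ∞, then there exists R ≥ 0 such that m′(r) > 0 for all r ≥ R. -/
open Real Set Filter MeasureTheory

/-- If `m > 0` on `(0,∞)` and `1/m^2` is integrable on `(1,∞)`, then `m'` cannot be
nonpositive on all of `[a,∞)` for `a > 0`. -/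
lemma stmt_7_aux (m : ℝ → ℝ)
    (hsmooth : ContDiff ℝ (⊤ : ℕ∞) m)
    (hpos : ∀ r > (0:ℝ), 0 < m r)
    (hint : MeasureTheory.IntegrableOn (fun r => 1 / (m r) ^ 2) (Set.Ioi 1))
    {a : ℝ} (ha : 0 < a) (h : ∀ r ≥ a, deriv m r ≤ 0) : False := by
  have hdiff : Differentiable ℝ m := hsmooth.differentiable (by simp)
  -- m is antitone on [a, ∞)
  have hanti : AntitoneOn m (Set.Ici a) := by
    apply antitoneOn_of_deriv_nonpos (convex_Ici a) hdiff.continuous.continuousOn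
      hdiff.differentiableOn
    intro x hx
    rw [interior_Ici] at hx
    exact h x (le_of_lt hx)
  set c : ℝ := max 1 a with hc
  have hc1 : (1:ℝ) ≤ c := le_max_left _ _
  have hca : a ≤ c := le_max_right _ _
  set ε : ℝ := 1 / (m a) ^ 2 with hε
  have hma : 0 < m a := hpos a ha
  have hεpos : 0 < ε := by positivity
  have hsub : Set.Ioi c ⊆ Set.Ioi (1:ℝ) := Set.Ioi_subset_Ioi hc1
  have hintc : MeasureTheory.IntegrableOn (fun r => 1 / (m r) ^ 2) (Set.Ioi c) :=
    hint.mono_set hsub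
  have hfin := hintc.measure_ge_lt_top hεpos
  have hsubset : Set.Ioi c ⊆ {r : ℝ | ε ≤ 1 / (m r) ^ 2} := by
    intro r hr
    have hra : a ≤ r := hca.trans (le_of_lt hr)
    have hmr : 0 < m r := hpos r (lt_of_lt_of_le ha hra)
    have hle : m r ≤ m a := hanti (Set.self_mem_Ici) hra hra
    have : (m r) ^ 2 ≤ (m a) ^ 2 := by nlinarith
    simp only [Set.mem_setOf_eq, hε]
    apply one_div_le_one_div_of_le (by positivity) this
  have : (volume.restrict (Set.Ioi c)) {r : ℝ | ε ≤ 1 / (m r) ^ 2} = ⊤ := by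
    rw [MeasureTheory.Measure.restrict_apply' measurableSet_Ioi,
      Set.inter_eq_right.mpr hsubset, Real.volume_Ioi]
  rw [this] at hfin
  exact (lt_irrefl _ hfin).elim

/-- On a von Mangoldt plane, integrability of `m⁻²` on `(1,∞)` forces `m' > 0`
for all sufficiently large `r`. -/
theorem stmt_7 (m : ℝ → ℝ)
    (hsmooth : ContDiff ℝ (⊤ : ℕ∞) m)
    (hm0 : m 0 = 0)
    (hm'0 : deriv m 0 = 1)
    (hpos : ∀ r > (0:ℝ), 0 < m r)
    (hvM : AntitoneOn (fun r => -(deriv (deriv m) r) / m r) (Set.Ioi 0))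
    (hint : MeasureTheory.IntegrableOn (fun r => 1 / (m r) ^ 2) (Set.Ioi 1)) :
    ∃ R : ℝ, 0 ≤ R ∧ ∀ r ≥ R, 0 < deriv m r := by
  have hdiff : Differentiable ℝ m := hsmooth.differentiable (by simp)
  have hsmooth' : ContDiff ℝ ((⊤ : ℕ∞) : WithTop ℕ∞) (deriv m) := (contDiff_infty_iff_deriv.mp (hsmooth.of_le (by simp))).2
  have hdiff' : Differentiable ℝ (deriv m) := hsmooth'.differentiable (by simp)
  by_cases hG : ∃ r₁ > (0:ℝ), (fun r => -(deriv (deriv m) r) / m r) r₁ < 0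
  · -- Case II: curvature is negative somewhere, hence m'' > 0 from r₁ on.
    obtain ⟨r₁, hr₁, hGneg⟩ := hG
    have hm'' : ∀ r ≥ r₁, 0 ≤ deriv (deriv m) r := by
      intro r hr
      have hr0 : 0 < r := lt_of_lt_of_le hr₁ hr
      have := hvM hr₁ hr0 hr
      have hGr : -(deriv (deriv m) r) / m r < 0 := lt_of_le_of_lt this hGneg
      have hmr : 0 < m r := hpos r hr0
      by_contra hcon
      push_neg at hcon
      have : 0 ≤ -(deriv (deriv m) r) / m r := div_nonneg (by linarith) hmr.le
      linarith
    -- m' is monotone on [r₁, ∞)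
    have hmono : MonotoneOn (deriv m) (Set.Ici r₁) := by
      apply monotoneOn_of_deriv_nonneg (convex_Ici r₁) hdiff'.continuous.continuousOn
        hdiff'.differentiableOn
      intro x hx
      rw [interior_Ici] at hx
      exact hm'' x (le_of_lt hx)
    -- there is b ≥ r₁ with m' b > 0
    have hb : ∃ b ≥ r₁, 0 < deriv m b := by
      by_contra hcon
      push_neg at hcon
      exact stmt_7_aux m hsmooth hpos hint hr₁ fun r hr => hcon r hr
    obtain ⟨b, hbr, hb'⟩ := hb
    refine ⟨b, le_of_lt (lt_of_lt_of_le hr₁ hbr), fun r hr => ?_⟩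
    exact lt_of_lt_of_le hb' (hmono hbr (hbr.trans hr) hr)
  · -- Case I: curvature is nonnegative everywhere, so m'' ≤ 0 on (0,∞).
    push_neg at hG
    have hm'' : ∀ r > (0:ℝ), deriv (deriv m) r ≤ 0 := by
      intro r hr
      have hGr := hG r hr
      have hmr : 0 < m r := hpos r hr
      by_contra hcon
      push_neg at hcon
      have : -(deriv (deriv m) r) / m r < 0 := div_neg_of_neg_of_pos (by linarith) hmr
      linarith
    -- m' is antitone on [0, ∞)
    have hanti : AntitoneOn (deriv m) (Set.Ici 0) := by
      apply antitoneOn_of_deriv_nonpos (convex_Ici 0) hdiff'.continuous.continuousOn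
        hdiff'.differentiableOn
      intro x hx
      rw [interior_Ici] at hx
      exact hm'' x hx
    refine ⟨0, le_rfl, fun r hr => ?_⟩
    rcases eq_or_lt_of_le hr with h0 | h0
    · rw [← h0, hm'0]; exact one_pos
    · by_contra hcon
      push_neg at hcon
      refine stmt_7_aux m hsmooth hpos hint h0 fun s hs => ?_
      exact le_trans (hanti (le_of_lt h0) ((le_of_lt h0).trans hs) hs) hcon
end

section
/- Let m : [0,∞) → ℝ be smooth with m(0) = 0, m′(0) = 1, m(r) > 0 for all r > 0, and ∫₁^∞ m(r)^{-2} dr < ∞. If either m″ ≤ 0 on [0,∞) or −m″/m is non-increasing on [0,∞), then m(r) → ∞ as r → ∞. -/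
open Real Set Filter MeasureTheory

/-- Integrability of `1/m²` on `(1,∞)` forces `m` to be unbounded there. -/
lemma unbdd_aux (m : ℝ → ℝ) (hpos : ∀ r > (0:ℝ), 0 < m r)
    (hint : MeasureTheory.IntegrableOn (fun r => 1 / (m r) ^ 2) (Set.Ioi 1)) :
    ∀ B : ℝ, ∃ r > (1:ℝ), B < m r := by
  intro B
  by_contra h
  push_neg at h
  have hB : 0 < B := lt_of_lt_of_le (hpos 2 (by norm_num)) (h 2 (by norm_num))
  have hconst : IntegrableOn (fun _ : ℝ => 1 / B ^ 2) (Set.Ioi 1) := by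
    refine hint.mono' aestronglyMeasurable_const ?_
    filter_upwards [ae_restrict_mem measurableSet_Ioi] with r hr
    have h1 : 0 < m r := hpos r (lt_trans one_pos hr)
    have h2 : m r ≤ B := h r hr
    rw [Real.norm_eq_abs, abs_of_pos (by positivity)]
    exact one_div_le_one_div_of_le (by positivity) (pow_le_pow_left₀ h1.le h2 2)
  rw [integrableOn_const_iff, enorm_eq_zero] at hconst
  rcases hconst with h' | h'
  · have : (0:ℝ) < 1 / B ^ 2 := by positivity
    rw [h'] at this; exact lt_irrefl 0 this
  · rw [Real.volume_Ioi] at h'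
    exact (lt_irrefl _ h')

/-- If the tail of `m` is bounded by `m r₀`, we contradict unboundedness. -/
lemma tail_bdd_aux (m : ℝ → ℝ) (hc : Continuous m)
    (hub : ∀ B : ℝ, ∃ r > (1:ℝ), B < m r)
    (r₀ : ℝ) (hr₀ : 0 ≤ r₀) (htail : ∀ s ≥ r₀, m s ≤ m r₀) : False := by
  obtain ⟨C, hC⟩ := (isCompact_Icc (a := (0:ℝ)) (b := max r₀ 1)).exists_bound_of_continuousOn
    hc.continuousOn
  obtain ⟨r, hr1, hrC⟩ := hub C
  have hmr : m r ≤ C := by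
    rcases le_total r r₀ with hle | hle
    · have hmem : r ∈ Icc (0:ℝ) (max r₀ 1) := ⟨by linarith, le_trans hle (le_max_left _ _)⟩
      calc m r ≤ |m r| := le_abs_self _
        _ ≤ C := by simpa [Real.norm_eq_abs] using hC r hmem
    · have h0 : r₀ ∈ Icc (0:ℝ) (max r₀ 1) := ⟨hr₀, le_max_left _ _⟩
      calc m r ≤ m r₀ := htail r hle
        _ ≤ |m r₀| := le_abs_self _
        _ ≤ C := by simpa [Real.norm_eq_abs] using hC r₀ h0
  linarith

/-- Monotone on a tail plus unbounded implies tends to infinity. -/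
lemma tendsto_aux (m : ℝ → ℝ) (hc : Continuous m)
    (hub : ∀ B : ℝ, ∃ r > (1:ℝ), B < m r)
    (r₁ : ℝ) (hr₁ : 0 ≤ r₁) (hmono : MonotoneOn m (Set.Ici r₁)) :
    Filter.Tendsto m Filter.atTop Filter.atTop := by
  rw [tendsto_atTop]
  intro B
  obtain ⟨C, hC⟩ := (isCompact_Icc (a := (0:ℝ)) (b := max r₁ 1)).exists_bound_of_continuousOn
    hc.continuousOn
  obtain ⟨r, hr1, hrB⟩ := hub (max B C)
  have hrr₁ : r₁ ≤ r := by
    by_contra hlt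
    push_neg at hlt
    have hmem : r ∈ Icc (0:ℝ) (max r₁ 1) := ⟨by linarith, le_trans hlt.le (le_max_left _ _)⟩
    have h1 : m r ≤ C := by
      calc m r ≤ |m r| := le_abs_self _
        _ ≤ C := by simpa [Real.norm_eq_abs] using hC r hmem
    have h2 : C < m r := lt_of_le_of_lt (le_max_right B C) hrB
    linarith
  rw [eventually_atTop]
  refine ⟨r, fun s hs => ?_⟩
  have := hmono (mem_Ici.2 hrr₁) (mem_Ici.2 (hrr₁.trans hs)) hs
  have hB : B ≤ m r := le_of_lt (lt_of_le_of_lt (le_max_left B C) hrB)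
  linarith

/-- Concave case: `m'' ≤ 0` on `(0,∞)` implies `m → ∞`. -/
lemma concave_case (m : ℝ → ℝ) (hsmooth : ContDiff ℝ (⊤ : ℕ∞) m)
    (hub : ∀ B : ℝ, ∃ r > (1:ℝ), B < m r)
    (hconc : ∀ r > (0:ℝ), deriv (deriv m) r ≤ 0) :
    Filter.Tendsto m Filter.atTop Filter.atTop := by
  have hsm : ContDiff ℝ ((⊤ : ℕ∞) : WithTop ℕ∞) m := hsmooth.of_le (by simp)
  obtain ⟨hdiff, hsd⟩ := contDiff_infty_iff_deriv.1 hsm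
  obtain ⟨hdiff', _⟩ := contDiff_infty_iff_deriv.1 hsd
  -- deriv m is antitone on Ici 0
  have hanti : AntitoneOn (deriv m) (Set.Ici 0) := by
    refine antitoneOn_of_deriv_nonpos (convex_Ici 0) hsd.continuous.continuousOn
      (hdiff'.differentiableOn) ?_
    intro x hx
    rw [interior_Ici] at hx
    exact hconc x hx
  -- deriv m ≥ 0 on Ici 0
  have hder : ∀ r ≥ (0:ℝ), 0 ≤ deriv m r := by
    by_contra h
    push_neg at h
    obtain ⟨r₀, hr₀, hneg⟩ := h
    have hantim : AntitoneOn m (Set.Ici r₀) := by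
      refine antitoneOn_of_deriv_nonpos (convex_Ici r₀) hdiff.continuous.continuousOn
        hdiff.differentiableOn ?_
      intro x hx
      rw [interior_Ici] at hx
      have : deriv m x ≤ deriv m r₀ :=
        hanti (mem_Ici.2 hr₀) (mem_Ici.2 (le_trans hr₀ hx.le)) hx.le
      linarith
    exact tail_bdd_aux m hdiff.continuous hub r₀ hr₀
      (fun s hs => hantim (mem_Ici.2 le_rfl) (mem_Ici.2 hs) hs)
  have hmono : MonotoneOn m (Set.Ici 0) := by
    refine monotoneOn_of_deriv_nonneg (convex_Ici 0) hdiff.continuous.continuousOn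
      hdiff.differentiableOn ?_
    intro x hx
    rw [interior_Ici] at hx
    exact hder x hx.le
  exact tendsto_aux m hdiff.continuous hub 0 le_rfl hmono

/-- If `G_m ≥ 0` or `M_m` is von Mangoldt, and `m⁻²` is integrable on `(1,∞)`,
then `m r → ∞` as `r → ∞`. -/
theorem stmt_8 (m : ℝ → ℝ)
    (hsmooth : ContDiff ℝ (⊤ : ℕ∞) m)
    (hm0 : m 0 = 0)
    (hm'0 : deriv m 0 = 1)
    (hpos : ∀ r > (0:ℝ), 0 < m r)
    (hint : MeasureTheory.IntegrableOn (fun r => 1 / (m r) ^ 2) (Set.Ioi 1))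
    (hcurv : (∀ r ≥ (0:ℝ), deriv (deriv m) r ≤ 0) ∨
      AntitoneOn (fun r => -(deriv (deriv m) r) / m r) (Set.Ioi 0)) :
    Filter.Tendsto m Filter.atTop Filter.atTop := by
  have hub := unbdd_aux m hpos hint
  have hsm : ContDiff ℝ ((⊤ : ℕ∞) : WithTop ℕ∞) m := hsmooth.of_le (by simp)
  obtain ⟨hdiff, hsd⟩ := contDiff_infty_iff_deriv.1 hsm
  obtain ⟨hdiff', _⟩ := contDiff_infty_iff_deriv.1 hsd
  rcases hcurv with hconc | hK
  · exact concave_case m hsmooth hub (fun r hr => hconc r hr.le)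
  · by_cases h2a : ∀ r > (0:ℝ), deriv (deriv m) r ≤ 0
    · exact concave_case m hsmooth hub h2a
    · push_neg at h2a
      obtain ⟨r₀, hr₀pos, hd2pos⟩ := h2a
      -- On Ici r₀, deriv (deriv m) > 0
      have hKneg : (fun r => -(deriv (deriv m) r) / m r) r₀ < 0 := by
        have := hpos r₀ hr₀pos
        simp only
        apply div_neg_of_neg_of_pos _ this
        linarith
      have hd2 : ∀ x ≥ r₀, 0 ≤ deriv (deriv m) x := by
        intro x hx
        by_contra hxn
        push_neg at hxn
        have hxpos : (0:ℝ) < x := lt_of_lt_of_le hr₀pos hx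
        have hle : (fun r => -(deriv (deriv m) r) / m r) x ≤
            (fun r => -(deriv (deriv m) r) / m r) r₀ := hK (mem_Ioi.2 hr₀pos) (mem_Ioi.2 hxpos) hx
        have hnn : 0 ≤ -(deriv (deriv m) x) / m x :=
          div_nonneg (by linarith) (hpos x hxpos).le
        simp only at hle hnn
        linarith [lt_of_le_of_lt hle hKneg]
      -- deriv m is monotone on Ici r₀
      have hdmono : MonotoneOn (deriv m) (Set.Ici r₀) := by
        refine monotoneOn_of_deriv_nonneg (convex_Ici r₀) hsd.continuous.continuousOn
          hdiff'.differentiableOn ?_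
        intro x hx
        rw [interior_Ici] at hx
        exact hd2 x hx.le
      -- ∃ r₁ ≥ r₀ with deriv m r₁ > 0
      have hex : ∃ r₁ ≥ r₀, 0 < deriv m r₁ := by
        by_contra h
        push_neg at h
        have hantim : AntitoneOn m (Set.Ici r₀) := by
          refine antitoneOn_of_deriv_nonpos (convex_Ici r₀) hdiff.continuous.continuousOn
            hdiff.differentiableOn ?_
          intro x hx
          rw [interior_Ici] at hx
          exact h x hx.le
        exact tail_bdd_aux m hdiff.continuous hub r₀ hr₀pos.le
          (fun s hs => hantim (mem_Ici.2 le_rfl) (mem_Ici.2 hs) hs)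
      obtain ⟨r₁, hr₁, hdr₁⟩ := hex
      have hmono : MonotoneOn m (Set.Ici r₁) := by
        refine monotoneOn_of_deriv_nonneg (convex_Ici r₁) hdiff.continuous.continuousOn
          hdiff.differentiableOn ?_
        intro x hx
        rw [interior_Ici] at hx
        have := hdmono (mem_Ici.2 hr₁) (mem_Ici.2 (le_trans hr₁ hx.le)) hx.le
        linarith
      exact tendsto_aux m hdiff.continuous hub r₁ (le_trans hr₀pos.le hr₁) hmono
end

section
/- For every s ∈ (0,1) there exist u ∈ (0,1/4) and a function m : [0,∞) → ℝ solving the initial value problem m″(r) + (1/(4(r+1)²) − u)·m(r) = 0, m(0) = 0, m′(0) = 1, such that m′(z_u) = s, where z_u = 1/(2√u) − 1 is the unique nonnegative zero of r ↦ 1/(4(r+1)²) − u. -/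
/-!
Write `u = a²` and `t = r + 1`. The function `y t = √t · I₀ (a t)`, with `I₀` the modified Bessel
function, solves the Jacobi equation `y'' + (1 / (4 t²) - a²) y = 0` on `t > 0`, and reduction of
order turns it into the solution `m = I₀ a · y · ∫ₐ^{at} dx / (x I₀(x)²)`, with `m 1 = 0` and
`m' 1 = 1`.
The curvature vanishes at `t = 1 / (2a)`, where
`m' = I₀ a · (κ · √(2a) ∫ₐ^{1/2} dx / (x I₀(x)²) + √(2a) / I₀ (1/2))` for a constant `κ`.
This is continuous in `a ∈ (0, 1/2]` and equals `1` at `a = 1/2`; since `I₀ ≥ 1` the integral is at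
most `-log (2a)`, so it tends to `0` as `a → 0`, and the intermediate value theorem finishes.
-/

open Real Set Filter MeasureTheory
open scoped Nat Topology

section ReductionOfOrder

variable {y y' J : ℝ → ℝ} {t : ℝ}

theorem hasDerivAt_reductionOfOrder (hy : HasDerivAt y (y' t) t)
    (hJ : HasDerivAt J (y t ^ 2)⁻¹ t) (h : y t ≠ 0) :
    HasDerivAt (fun x => y x * J x) (y' t * J t + (y t)⁻¹) t := by
  refine (hy.mul hJ).congr_deriv ?_
  field_simp

theorem hasDerivAt_reductionOfOrder_deriv {q : ℝ} (hy : HasDerivAt y (y' t) t)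
    (hy' : HasDerivAt y' (q * y t) t) (hJ : HasDerivAt J (y t ^ 2)⁻¹ t) (h : y t ≠ 0) :
    HasDerivAt (fun x => y' x * J x + (y x)⁻¹) (q * (y t * J t)) t := by
  refine ((hy'.mul hJ).add (hy.inv h)).congr_deriv ?_
  field_simp
  ring

end ReductionOfOrder

theorem ContinuousOn.hasDerivAt_intervalIntegral {f : ℝ → ℝ} {U : Set ℝ} (hf : ContinuousOn f U)
    (hU : IsOpen U) {b x : ℝ} (hbx : uIcc b x ⊆ U) :
    HasDerivAt (fun u => ∫ y in b..u, f y) (f x) x :=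
  intervalIntegral.integral_hasDerivAt_right ((hf.mono hbx).intervalIntegrable)
    (hf.stronglyMeasurableAtFilter hU x (hbx right_mem_uIcc))
    (hf.continuousAt (hU.mem_nhds (hbx right_mem_uIcc)))

theorem contDiffOn_succ_of_hasDerivAt {F f : ℝ → ℝ} {U : Set ℝ} {n : ℕ} (hU : IsOpen U)
    (hF : ∀ x ∈ U, HasDerivAt F (f x) x) (hf : ContDiffOn ℝ n f U) :
    ContDiffOn ℝ (n + 1) F U := by
  rw [contDiffOn_succ_iff_deriv_of_isOpen hU]
  exact ⟨fun x hx => (hF x hx).differentiableAt.differentiableWithinAt, by simp,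
    hf.congr fun x hx => (hF x hx).deriv⟩

theorem ContDiffOn.exists_contDiff_eqOn_Ioi {f : ℝ → ℝ} {c d : ℝ} {n : ℕ} (hcd : c < d)
    (hf : ContDiffOn ℝ n f (Ioi c)) : ∃ g : ℝ → ℝ, ContDiff ℝ n g ∧ EqOn g f (Ioi d) := by
  -- `τ` is the identity on `[d, ∞)` and takes values in `(c, ∞)`
  set τ : ℝ → ℝ := fun x => d + smoothTransition ((x - c) / (d - c)) * (x - d)
  have hτ : ContDiff ℝ n τ :=
    contDiff_const.add ((smoothTransition.contDiff.comp (by fun_prop)).mul (by fun_prop))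
  have hτc : ∀ x, c < τ x := fun x => by
    rcases le_or_gt x c with hx | hx
    · have hφ : smoothTransition ((x - c) / (d - c)) = 0 := smoothTransition.zero_of_nonpos
        (div_nonpos_of_nonpos_of_nonneg (sub_nonpos.2 hx) (sub_pos.2 hcd).le)
      simpa [τ, hφ] using hcd
    · have h0 := smoothTransition.nonneg ((x - c) / (d - c))
      have h1 := smoothTransition.le_one ((x - c) / (d - c))
      rcases le_or_gt d x with hdx | hdx <;> nlinarith
  refine ⟨f ∘ τ, hf.comp_contDiff hτ hτc, fun x hx => ?_⟩
  have hx1 : 1 ≤ (x - c) / (d - c) := by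
    rw [one_le_div (sub_pos.2 hcd)]
    linarith [mem_Ioi.1 hx]
  simp [τ, smoothTransition.one_of_one_le hx1]

theorem ContinuousOn.exists_mem_Ioo_eq_of_tendsto_nhdsGT {α δ : Type*}
    [ConditionallyCompleteLinearOrder α] [TopologicalSpace α] [OrderTopology α]
    [DenselyOrdered α] [LinearOrder δ] [TopologicalSpace δ] [OrderTopology δ]
    {f : α → δ} {a b : α} {L y : δ} (hab : a < b) (hf : ContinuousOn f (Ioc a b))
    (hL : Tendsto f (𝓝[>] a) (𝓝 L)) (hy : y ∈ Ioo L (f b)) : ∃ x ∈ Ioo a b, f x = y := by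
  have := nhdsGT_neBot_of_exists_gt ⟨b, hab⟩
  obtain ⟨x₀, hx₀y, hx₀⟩ :=
    ((hL.eventually (eventually_lt_nhds hy.1)).and (Ioo_mem_nhdsGT hab)).exists
  obtain ⟨x, hx, rfl⟩ := intermediate_value_Ico hx₀.2.le
    (hf.mono fun z hz => ⟨hx₀.1.trans_le hz.1, hz.2⟩) ⟨hx₀y.le, hy.2⟩
  exact ⟨x, ⟨hx₀.1.trans_le hx.1, hx.2⟩, rfl⟩

namespace JacobiVonMangoldt

noncomputable def powerSum (c : ℕ → ℝ) (w : ℝ) : ℝ := ∑' k, c k * w ^ k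

def derivCoeff (c : ℕ → ℝ) (k : ℕ) : ℝ := (k + 1) * c (k + 1)

def FactorialBounded (M : ℝ) (c : ℕ → ℝ) : Prop := ∀ k, |c k| ≤ M / k !

namespace FactorialBounded

variable {M : ℝ} {c : ℕ → ℝ}

theorem derivCoeff (hc : FactorialBounded M c) : FactorialBounded M (derivCoeff c) := by
  intro k
  have hk : (0 : ℝ) < k + 1 := by positivity
  calc |JacobiVonMangoldt.derivCoeff c k| = (k + 1) * |c (k + 1)| := by
        rw [JacobiVonMangoldt.derivCoeff, abs_mul, abs_of_pos hk]
    _ ≤ (k + 1) * (M / (k + 1)!) := by gcongr; exact hc (k + 1)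
    _ = M / k ! := by rw [Nat.factorial_succ]; push_cast; field_simp

theorem norm_mul_pow_le (hc : FactorialBounded M c) (k : ℕ) {w R : ℝ} (hw : |w| ≤ R) :
    ‖c k * w ^ k‖ ≤ M * (R ^ k / k !) := by
  rw [norm_mul, norm_pow, Real.norm_eq_abs, Real.norm_eq_abs]
  calc |c k| * |w| ^ k ≤ M / k ! * R ^ k := by
        gcongr
        · exact (abs_nonneg _).trans (hc k)
        · exact hc k
    _ = M * (R ^ k / k !) := by ring

theorem summable (hc : FactorialBounded M c) (w : ℝ) : Summable fun k => c k * w ^ k :=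
  .of_norm_bounded ((Real.summable_pow_div_factorial |w|).mul_left M)
    fun k => hc.norm_mul_pow_le k le_rfl

theorem hasDerivAt_powerSum (hc : FactorialBounded M c) (w : ℝ) :
    HasDerivAt (powerSum c) (powerSum (JacobiVonMangoldt.derivCoeff c) w) w := by
  set R := |w| + 1
  have hwR : w ∈ Ioo (-R) R := ⟨by linarith [neg_abs_le w], by linarith [le_abs_self w]⟩
  -- split off the constant term, so that the termwise derivatives of the tail are indexed
  -- like the derived series
  have hderiv : ∀ (k : ℕ) (y : ℝ), y ∈ Ioo (-R) R →
      HasDerivAt (fun x => c (k + 1) * x ^ (k + 1))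
        (JacobiVonMangoldt.derivCoeff c k * y ^ k) y := fun k y _ => by
    refine ((hasDerivAt_pow (k + 1) y).const_mul (c (k + 1))).congr_deriv ?_
    rw [JacobiVonMangoldt.derivCoeff, Nat.add_sub_cancel]; push_cast; ring
  have hbound : ∀ (k : ℕ) (y : ℝ), y ∈ Ioo (-R) R →
      ‖JacobiVonMangoldt.derivCoeff c k * y ^ k‖ ≤ M * (R ^ k / k !) := fun k y hy =>
    hc.derivCoeff.norm_mul_pow_le k (abs_le.2 ⟨hy.1.le, hy.2.le⟩)
  have htail := hasDerivAt_tsum_of_isPreconnected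
    ((Real.summable_pow_div_factorial R).mul_left M) isOpen_Ioo isPreconnected_Ioo hderiv
    hbound hwR ((summable_nat_add_iff 1).2 (hc.summable w)) hwR
  have hsplit : powerSum c = fun x => c 0 + ∑' k, c (k + 1) * x ^ (k + 1) := by
    funext x
    rw [powerSum, (hc.summable x).tsum_eq_zero_add, pow_zero, mul_one]
  rw [hsplit]
  exact htail.const_add (c 0)

theorem contDiff_powerSum (hc : FactorialBounded M c) (n : ℕ) : ContDiff ℝ n (powerSum c) := by
  induction n generalizing c with
  | zero =>
    exact contDiff_zero.2 (continuous_iff_continuousAt.2 fun w =>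
      (hc.hasDerivAt_powerSum w).continuousAt)
  | succ n ih =>
    have hderiv : deriv (powerSum c) = powerSum (JacobiVonMangoldt.derivCoeff c) :=
      funext fun w => (hc.hasDerivAt_powerSum w).deriv
    rw [Nat.cast_succ, contDiff_succ_iff_deriv, hderiv]
    exact ⟨fun w => (hc.hasDerivAt_powerSum w).differentiableAt, by simp, ih hc.derivCoeff⟩

end FactorialBounded

theorem powerSum_ode {M : ℝ} {c : ℕ → ℝ} (hc : FactorialBounded M c)
    (hrec : ∀ k : ℕ, ((k : ℝ) + 1) ^ 2 * c (k + 1) = c k) (w : ℝ) :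
    w * powerSum (derivCoeff (derivCoeff c)) w + powerSum (derivCoeff c) w = powerSum c w := by
  have hc₁ := hc.derivCoeff
  have hc₂ := hc₁.derivCoeff
  have hsplit : ∀ {e : ℕ → ℝ}, Summable (fun k => e k * w ^ k) →
      powerSum e w = e 0 + ∑' k, e (k + 1) * w ^ (k + 1) := fun he => by
    rw [powerSum, he.tsum_eq_zero_add, pow_zero, mul_one]
  have hshift : w * powerSum (derivCoeff (derivCoeff c)) w =
      ∑' k, derivCoeff (derivCoeff c) k * w ^ (k + 1) := by
    rw [powerSum, ← tsum_mul_left]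
    exact tsum_congr fun k => by ring
  have hterm : ∀ k : ℕ, derivCoeff (derivCoeff c) k * w ^ (k + 1) +
      derivCoeff c (k + 1) * w ^ (k + 1) = c (k + 1) * w ^ (k + 1) := fun k => by
    simp only [derivCoeff]
    rw [← hrec (k + 1)]
    push_cast
    ring
  have hsum₂ : Summable fun k => derivCoeff (derivCoeff c) k * w ^ (k + 1) :=
    ((hc₂.summable w).mul_right w).congr fun k => by ring
  rw [hshift, hsplit (hc₁.summable w), hsplit (hc.summable w), ← add_left_comm,
    ← hsum₂.tsum_add ((summable_nat_add_iff 1).2 (hc₁.summable w))]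
  simp only [hterm]
  congr 1
  simpa [derivCoeff] using hrec 0

noncomputable def cliffordCoeff (k : ℕ) : ℝ := ((k ! : ℝ) ^ 2)⁻¹

theorem factorialBounded_cliffordCoeff : FactorialBounded 1 cliffordCoeff := by
  intro k
  have h1 : (1 : ℝ) ≤ k ! := by exact_mod_cast k.factorial_pos
  rw [cliffordCoeff, abs_of_pos (by positivity), one_div]
  exact inv_anti₀ (by positivity) (by nlinarith)

theorem cliffordCoeff_succ (k : ℕ) :
    ((k : ℝ) + 1) ^ 2 * cliffordCoeff (k + 1) = cliffordCoeff k := by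
  simp only [cliffordCoeff, Nat.factorial_succ]
  push_cast
  field_simp

/-- The modified Bessel function `I₀ s = ∑ (s / 2) ^ (2 k) / (k !) ^ 2`, written as the series
`∑ w ^ k / (k !) ^ 2` at `w = s ^ 2 / 4`. -/
noncomputable def besselI0 (s : ℝ) : ℝ := powerSum cliffordCoeff (s ^ 2 / 4)

noncomputable def besselI1 (s : ℝ) : ℝ := s / 2 * powerSum (derivCoeff cliffordCoeff) (s ^ 2 / 4)

theorem contDiff_besselI0 (n : ℕ) : ContDiff ℝ n besselI0 :=
  (factorialBounded_cliffordCoeff.contDiff_powerSum n).comp (by fun_prop)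

theorem one_le_besselI0 (s : ℝ) : 1 ≤ besselI0 s := by
  have h := factorialBounded_cliffordCoeff.summable (s ^ 2 / 4)
  calc (1 : ℝ) = cliffordCoeff 0 * (s ^ 2 / 4) ^ 0 := by simp [cliffordCoeff]
    _ ≤ besselI0 s := h.le_tsum 0 fun k _ => by unfold cliffordCoeff; positivity

theorem besselI0_pos (s : ℝ) : 0 < besselI0 s := one_pos.trans_le (one_le_besselI0 s)

theorem hasDerivAt_sq_div_four (s : ℝ) : HasDerivAt (fun s : ℝ => s ^ 2 / 4) (s / 2) s := by
  refine ((hasDerivAt_pow 2 s).div_const 4).congr_deriv ?_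
  norm_num
  ring

theorem hasDerivAt_besselI0 (s : ℝ) : HasDerivAt besselI0 (besselI1 s) s := by
  refine ((factorialBounded_cliffordCoeff.hasDerivAt_powerSum (s ^ 2 / 4)).comp s
    (hasDerivAt_sq_div_four s)).congr_deriv ?_
  rw [besselI1, mul_comm]

theorem hasDerivAt_besselI1 {s : ℝ} (hs : s ≠ 0) :
    HasDerivAt besselI1 (besselI0 s - besselI1 s / s) s := by
  have hc := factorialBounded_cliffordCoeff
  have hode := powerSum_ode hc cliffordCoeff_succ (s ^ 2 / 4)
  have h := ((hasDerivAt_id s).div_const 2).mul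
    ((hc.derivCoeff.hasDerivAt_powerSum (s ^ 2 / 4)).comp s (hasDerivAt_sq_div_four s))
  refine h.congr_deriv ?_
  simp only [besselI0, besselI1, id, Function.comp_apply]
  rw [← hode]
  field_simp
  ring

noncomputable def jacobiSolution (a t : ℝ) : ℝ := √t * besselI0 (a * t)

noncomputable def jacobiSolutionDeriv (a t : ℝ) : ℝ :=
  besselI0 (a * t) / (2 * √t) + a * √t * besselI1 (a * t)

theorem hasDerivAt_jacobiSolution (a : ℝ) {t : ℝ} (ht : 0 < t) :
    HasDerivAt (jacobiSolution a) (jacobiSolutionDeriv a t) t := by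
  have h := (Real.hasDerivAt_sqrt ht.ne').mul
    ((hasDerivAt_besselI0 (a * t)).comp t (hasDerivAt_const_mul a))
  refine h.congr_deriv ?_
  simp only [jacobiSolutionDeriv, Function.comp_apply]
  ring

theorem hasDerivAt_jacobiSolutionDeriv {a t : ℝ} (ha : a ≠ 0) (ht : 0 < t) :
    HasDerivAt (jacobiSolutionDeriv a)
      (-(1 / (4 * t ^ 2) - a ^ 2) * jacobiSolution a t) t := by
  have hat : a * t ≠ 0 := mul_ne_zero ha ht.ne'
  have hsqrt := Real.hasDerivAt_sqrt ht.ne'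
  have hI0 := (hasDerivAt_besselI0 (a * t)).comp t (hasDerivAt_const_mul a)
  have hI1 := (hasDerivAt_besselI1 hat).comp t (hasDerivAt_const_mul a)
  have h := (hI0.div (hsqrt.const_mul 2) (by positivity)).add
    ((hsqrt.const_mul a).mul hI1)
  refine h.congr_deriv ?_
  obtain ⟨p, hp, rfl⟩ : ∃ p : ℝ, 0 < p ∧ t = p ^ 2 := ⟨√t, by positivity, (sq_sqrt ht.le).symm⟩
  simp only [jacobiSolution, Function.comp_apply, Real.sqrt_sq hp.le]
  field_simp
  ring

noncomputable def besselWeight (x : ℝ) : ℝ := (x * besselI0 x ^ 2)⁻¹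

theorem contDiffOn_besselWeight (n : ℕ) : ContDiffOn ℝ n besselWeight (Ioi 0) :=
  ((contDiffOn_id.mul ((contDiff_besselI0 n).pow 2).contDiffOn).inv fun x hx =>
    (mul_pos hx (pow_pos (besselI0_pos x) 2)).ne')

theorem hasDerivAt_integral_besselWeight {b x : ℝ} (hb : 0 < b) (hx : 0 < x) :
    HasDerivAt (fun u => ∫ y in b..u, besselWeight y) (besselWeight x) x :=
  (contDiffOn_besselWeight 0).continuousOn.hasDerivAt_intervalIntegral isOpen_Ioi
    (ordConnected_Ioi.uIcc_subset hb hx)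

theorem besselWeight_le_inv {x : ℝ} (hx : 0 < x) : besselWeight x ≤ x⁻¹ :=
  inv_anti₀ hx (le_mul_of_one_le_right hx.le (one_le_pow₀ (one_le_besselI0 x)))

noncomputable def jacobiIntegral (a t : ℝ) : ℝ := ∫ x in a..a * t, besselWeight x

noncomputable def jacobiField (a t : ℝ) : ℝ :=
  besselI0 a * (jacobiSolution a t * jacobiIntegral a t)

noncomputable def jacobiFieldDeriv (a t : ℝ) : ℝ :=
  besselI0 a * (jacobiSolutionDeriv a t * jacobiIntegral a t + (jacobiSolution a t)⁻¹)

section JacobiField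

variable {a t : ℝ}

theorem jacobiSolution_pos (ht : 0 < t) : 0 < jacobiSolution a t :=
  mul_pos (Real.sqrt_pos.2 ht) (besselI0_pos _)

theorem hasDerivAt_jacobiIntegral (ha : 0 < a) (ht : 0 < t) :
    HasDerivAt (jacobiIntegral a) (jacobiSolution a t ^ 2)⁻¹ t := by
  refine ((hasDerivAt_integral_besselWeight ha (mul_pos ha ht)).comp t
    (hasDerivAt_const_mul a)).congr_deriv ?_
  rw [besselWeight, jacobiSolution, mul_pow, sq_sqrt ht.le]
  field_simp

theorem contDiffOn_jacobiIntegral (ha : 0 < a) (n : ℕ) :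
    ContDiffOn ℝ n (jacobiIntegral a) (Ioi 0) := by
  have hprim : ContDiffOn ℝ (n + 1) (fun u => ∫ y in a..u, besselWeight y) (Ioi 0) :=
    contDiffOn_succ_of_hasDerivAt isOpen_Ioi
      (fun x hx => hasDerivAt_integral_besselWeight ha hx) (contDiffOn_besselWeight n)
  exact (hprim.of_succ.comp (contDiff_const.mul contDiff_id).contDiffOn
    fun t ht => mul_pos ha ht :)

theorem contDiffOn_jacobiField (ha : 0 < a) (n : ℕ) : ContDiffOn ℝ n (jacobiField a) (Ioi 0) := by
  have hsqrt : ContDiffOn ℝ n (fun t : ℝ => √t) (Ioi 0) := fun t ht =>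
    (Real.contDiffAt_sqrt ht.ne').contDiffWithinAt
  exact contDiffOn_const.mul ((hsqrt.mul ((contDiff_besselI0 n).comp
    (contDiff_const.mul contDiff_id)).contDiffOn).mul (contDiffOn_jacobiIntegral ha n))

theorem hasDerivAt_jacobiField (ha : 0 < a) (ht : 0 < t) :
    HasDerivAt (jacobiField a) (jacobiFieldDeriv a t) t :=
  (hasDerivAt_reductionOfOrder (hasDerivAt_jacobiSolution a ht) (hasDerivAt_jacobiIntegral ha ht)
    (jacobiSolution_pos ht).ne').const_mul (besselI0 a)

theorem hasDerivAt_jacobiFieldDeriv (ha : 0 < a) (ht : 0 < t) :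
    HasDerivAt (jacobiFieldDeriv a) (-(1 / (4 * t ^ 2) - a ^ 2) * jacobiField a t) t := by
  refine ((hasDerivAt_reductionOfOrder_deriv (hasDerivAt_jacobiSolution a ht)
    (hasDerivAt_jacobiSolutionDeriv ha.ne' ht) (hasDerivAt_jacobiIntegral ha ht)
    (jacobiSolution_pos ht).ne').const_mul (besselI0 a)).congr_deriv ?_
  rw [jacobiField]
  ring

theorem jacobiField_one : jacobiField a 1 = 0 := by
  simp [jacobiField, jacobiIntegral]

theorem jacobiFieldDeriv_one : jacobiFieldDeriv a 1 = 1 := by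
  simp [jacobiFieldDeriv, jacobiIntegral, jacobiSolution, (besselI0_pos a).ne']

end JacobiField

theorem exists_contDiff_jacobiField {a : ℝ} (ha : 0 < a) :
    ∃ m : ℝ → ℝ, ContDiff ℝ 2 m ∧ ∀ r, -1 / 2 < r →
      m r = jacobiField a (r + 1) ∧ deriv m r = jacobiFieldDeriv a (r + 1) ∧
      deriv (deriv m) r = -(1 / (4 * (r + 1) ^ 2) - a ^ 2) * jacobiField a (r + 1) := by
  obtain ⟨g, hg, hgM⟩ := (contDiffOn_jacobiField ha 2).exists_contDiff_eqOn_Ioi one_half_pos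
  have hpos : ∀ t ∈ Ioi (1 / 2 : ℝ), 0 < t := fun t ht => one_half_pos.trans ht
  have hg' : EqOn (deriv g) (jacobiFieldDeriv a) (Ioi (1 / 2)) := fun t ht =>
    (hgM.deriv isOpen_Ioi ht).trans (hasDerivAt_jacobiField ha (hpos t ht)).deriv
  refine ⟨fun r => g (r + 1), hg.comp (contDiff_id.add contDiff_const), fun r hr => ?_⟩
  have hr' : r + 1 ∈ Ioi (1 / 2 : ℝ) := by rw [mem_Ioi]; linarith
  have hshift : deriv (fun r => g (r + 1)) = fun r => deriv g (r + 1) :=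
    funext fun r => deriv_comp_add_const g 1 r
  rw [hshift, deriv_comp_add_const (deriv g)]
  exact ⟨hgM hr', hg' hr', (hg'.deriv isOpen_Ioi hr').trans
    (hasDerivAt_jacobiFieldDeriv ha (hpos _ hr')).deriv⟩

noncomputable def turningSlope (a : ℝ) : ℝ :=
  besselI0 a * ((besselI0 (1 / 2) + besselI1 (1 / 2)) / 2 *
    (√(2 * a) * ∫ x in a..1 / 2, besselWeight x) + √(2 * a) / besselI0 (1 / 2))

theorem jacobiFieldDeriv_turningPoint {a : ℝ} (ha : 0 < a) :
    jacobiFieldDeriv a (1 / (2 * a)) = turningSlope a := by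
  obtain ⟨p, hp, hpa⟩ : ∃ p : ℝ, 0 < p ∧ √(2 * a) = p := ⟨_, Real.sqrt_pos.2 (by positivity), rfl⟩
  have ha' : a = p ^ 2 / 2 := by rw [← hpa, sq_sqrt (by positivity)]; ring
  have hsqrt : √(1 / (2 * a)) = 1 / p := by rw [Real.sqrt_div' _ (by positivity), hpa, sqrt_one]
  have hmid : a * (1 / (2 * a)) = 1 / 2 := by field_simp
  rw [jacobiFieldDeriv, turningSlope, jacobiSolutionDeriv, jacobiSolution, jacobiIntegral, hmid,
    hsqrt, hpa]
  subst ha'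
  field_simp

theorem continuousOn_turningSlope : ContinuousOn turningSlope (Ioi 0) := by
  intro a ha
  have hint : ContinuousAt (fun a => ∫ x in a..1 / 2, besselWeight x) a := by
    simp_rw [intervalIntegral.integral_symm (1 / 2 : ℝ)]
    exact (hasDerivAt_integral_besselWeight (by norm_num) ha).continuousAt.neg
  have hI0 := (contDiff_besselI0 0).continuous.continuousAt (x := a)
  exact (hI0.mul ((continuousAt_const.mul ((by fun_prop : ContinuousAt (fun a => √(2 * a)) a).mul
    hint)).add (by fun_prop))).continuousWithinAt

theorem turningSlope_half : turningSlope (1 / 2) = 1 := by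
  simp [turningSlope, (besselI0_pos _).ne']

theorem integral_besselWeight_le_neg_log {a : ℝ} (ha : 0 < a) (ha' : a ≤ 1 / 2) :
    ∫ x in a..1 / 2, besselWeight x ≤ -log (2 * a) := by
  have hsub : uIcc a (1 / 2) ⊆ Ioi 0 := ordConnected_Ioi.uIcc_subset ha (mem_Ioi.2 one_half_pos)
  calc ∫ x in a..1 / 2, besselWeight x ≤ ∫ x in a..1 / 2, x⁻¹ :=
        intervalIntegral.integral_mono_on ha'
          ((contDiffOn_besselWeight 0).continuousOn.mono hsub).intervalIntegrable
          ((continuousOn_inv₀.mono fun x hx => (hsub hx).ne').intervalIntegrable)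
          fun x hx => besselWeight_le_inv (ha.trans_le hx.1)
    _ = -log (2 * a) := by
        rw [integral_inv_of_pos ha (by norm_num), ← Real.log_inv]
        congr 1
        field_simp

theorem integral_besselWeight_nonneg {a : ℝ} (ha : 0 < a) (ha' : a ≤ 1 / 2) :
    0 ≤ ∫ x in a..1 / 2, besselWeight x :=
  intervalIntegral.integral_nonneg ha' fun _ hx =>
    inv_nonneg.2 (mul_nonneg (ha.trans_le hx.1).le (sq_nonneg _))

theorem tendsto_sqrt_mul_integral_besselWeight :
    Tendsto (fun a => √(2 * a) * ∫ x in a..1 / 2, besselWeight x) (𝓝[>] 0) (𝓝 0) := by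
  have hdouble : Tendsto (fun a : ℝ => 2 * a) (𝓝[>] 0) (𝓝[>] 0) :=
    tendsto_nhdsWithin_iff.2 ⟨((continuous_const_mul 2).tendsto' 0 0 (mul_zero 2)).mono_left
      nhdsWithin_le_nhds,
      eventually_nhdsWithin_of_forall fun a ha => mul_pos two_pos (mem_Ioi.1 ha)⟩
  have hupper : Tendsto (fun a : ℝ => -(log (2 * a) * (2 * a) ^ (1 / 2 : ℝ))) (𝓝[>] 0) (𝓝 0) := by
    simpa using ((tendsto_log_mul_rpow_nhdsGT_zero one_half_pos).comp hdouble).neg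
  refine tendsto_of_tendsto_of_tendsto_of_le_of_le' tendsto_const_nhds hupper ?_ ?_ <;>
    filter_upwards [Ioo_mem_nhdsGT (one_half_pos : (0 : ℝ) < 1 / 2)] with a ha
  · exact mul_nonneg (Real.sqrt_nonneg _) (integral_besselWeight_nonneg ha.1 ha.2.le)
  · calc √(2 * a) * ∫ x in a..1 / 2, besselWeight x ≤ √(2 * a) * -log (2 * a) :=
          mul_le_mul_of_nonneg_left (integral_besselWeight_le_neg_log ha.1 ha.2.le)
            (Real.sqrt_nonneg _)
      _ = -(log (2 * a) * (2 * a) ^ (1 / 2 : ℝ)) := by rw [Real.sqrt_eq_rpow]; ring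

theorem tendsto_turningSlope : Tendsto turningSlope (𝓝[>] 0) (𝓝 0) := by
  have hsqrt : Tendsto (fun a : ℝ => √(2 * a)) (𝓝[>] 0) (𝓝 0) :=
    ((by fun_prop : Continuous fun a : ℝ => √(2 * a)).tendsto' 0 0 (by simp)).mono_left
      nhdsWithin_le_nhds
  have hI0 :=
    ((contDiff_besselI0 0).continuous.tendsto 0).mono_left (nhdsWithin_le_nhds (s := Ioi 0))
  have h := hI0.mul ((tendsto_sqrt_mul_integral_besselWeight.const_mul
    ((besselI0 (1 / 2) + besselI1 (1 / 2)) / 2)).add (hsqrt.div_const (besselI0 (1 / 2))))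
  rwa [mul_zero, zero_div, add_zero, mul_zero] at h

end JacobiVonMangoldt

open JacobiVonMangoldt in
/-- For every `s ∈ (0,1)` there is `u ∈ (0,1/4)` and a solution `m` of the
Jacobi initial value problem `m'' + (1/(4(r+1)²) − u) m = 0`, `m 0 = 0`,
`m' 0 = 1`, with `m' z_u = s`, where `z_u = 1/(2√u) − 1` is the unique
nonnegative zero of `r ↦ 1/(4(r+1)²) − u`. -/
theorem stmt_10 (s : ℝ) (hs : s ∈ Set.Ioo (0:ℝ) 1) :
    ∃ u : ℝ, u ∈ Set.Ioo (0:ℝ) (1/4) ∧ ∃ m : ℝ → ℝ,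
      ContDiff ℝ 2 m ∧
      (∀ r ≥ (0:ℝ),
        deriv (deriv m) r + (1 / (4 * (r + 1) ^ 2) - u) * m r = 0) ∧
      m 0 = 0 ∧
      deriv m 0 = 1 ∧
      deriv m (1 / (2 * Real.sqrt u) - 1) = s := by
  obtain ⟨a, ⟨ha, ha'⟩, hslope⟩ :=
    (continuousOn_turningSlope.mono fun x hx => hx.1).exists_mem_Ioo_eq_of_tendsto_nhdsGT
      one_half_pos tendsto_turningSlope (by rwa [turningSlope_half])
  obtain ⟨m, hm, hmM⟩ := exists_contDiff_jacobiField ha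
  have hz : 1 / (2 * √(a ^ 2)) - 1 = 1 / (2 * a) - 1 := by rw [Real.sqrt_sq ha.le]
  have hz' : -1 / 2 < 1 / (2 * a) - 1 := by
    have : 1 < 1 / (2 * a) := by rw [lt_div_iff₀ (by positivity)]; linarith
    linarith
  refine ⟨a ^ 2, ⟨by positivity, by nlinarith⟩, m, hm, fun r hr => ?_, ?_, ?_, ?_⟩
  · obtain ⟨hmr, -, hm''⟩ := hmM r (by linarith)
    rw [hm'', hmr]
    ring
  · rw [(hmM 0 (by norm_num)).1, zero_add, jacobiField_one]
  · rw [(hmM 0 (by norm_num)).2.1, zero_add, jacobiFieldDeriv_one]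
  · rw [hz, (hmM _ hz').2.1, sub_add_cancel, jacobiFieldDeriv_turningPoint ha, hslope]
end

section
/- Let 0 < r₀ < r_q and let m be a smooth self-map of (0,∞) such that m′ > 0 on [r₀, r_q], m(r) > m(r_q) for all r > r_q, ∫₁^∞ m(r)^{-2} dr < ∞, and liminf_{r→∞} m(r) > m(r_q). Set c₀ = m(r₀), c_q = m(r_q), F_c(r) = c/(m(r)·√(m(r)² − c²)), and for c ∈ [c₀, c_q) let r_u(c) be the unique point of [r₀, r_q] with m(r_u(c)) = c. Define T(c) = ∫_{r_q}^∞ F_c(r) dr + 2·∫_{r_u(c)}^{r_q} F_c(r) dr for c ∈ [c₀, c_q), and T(c_q) = ∫_{r_q}^∞ F_{c_q}(r) dr. Then all these improper integrals are finite and T is continuous on (c₀, c_q]. -/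
open Real Set Filter MeasureTheory Topology

private lemma aux_int_rpow (t u : ℝ) (h : t ≤ u) :
    IntegrableOn (fun r => (r - t) ^ (-(1/2) : ℝ)) (Ioc t u) := by
  have h1 : IntervalIntegrable (fun x : ℝ => x ^ (-(1/2) : ℝ)) volume 0 (u - t) :=
    intervalIntegral.intervalIntegrable_rpow' (by norm_num)
  have h2 := h1.comp_sub_right t
  rw [zero_add, sub_add_cancel] at h2
  exact (intervalIntegrable_iff_integrableOn_Ioc_of_le h).mp h2

private lemma aux_val_rpow (t η : ℝ) (hη : 0 ≤ η) :
    ∫ r in Ioc t (t + η), (r - t) ^ (-(1/2) : ℝ) = 2 * Real.sqrt η := by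
  rw [← intervalIntegral.integral_of_le (by linarith)]
  rw [intervalIntegral.integral_comp_sub_right (fun x => x ^ (-(1/2):ℝ)) t]
  rw [sub_self, add_sub_cancel_left, integral_rpow (Or.inl (by norm_num))]
  rw [Real.zero_rpow (by norm_num), Real.sqrt_eq_rpow]
  norm_num
  ring

private lemma aux_fbound {c C a κ t r mr : ℝ} (hc : 0 < c) (hC : c ≤ C) (ha : 0 < a)
    (hamr : a ≤ mr) (hκ : 0 < κ) (htr : t < r) (hgrow : κ * (r - t) ≤ mr ^ 2 - c ^ 2) :
    c / (mr * Real.sqrt (mr ^ 2 - c ^ 2)) ≤ C / (a * Real.sqrt κ) * (r - t) ^ (-(1/2) : ℝ) := by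
  have hrt : 0 < r - t := by linarith
  have h1 : 0 < κ * (r - t) := by positivity
  have hs1 : Real.sqrt (κ * (r - t)) ≤ Real.sqrt (mr ^ 2 - c ^ 2) := Real.sqrt_le_sqrt hgrow
  have hden : 0 < a * Real.sqrt (κ * (r - t)) := by positivity
  have step : c / (mr * Real.sqrt (mr ^ 2 - c ^ 2)) ≤ C / (a * Real.sqrt (κ * (r - t))) :=
    div_le_div₀ (by linarith) hC hden (mul_le_mul hamr hs1 (Real.sqrt_nonneg _) (by linarith))
  refine step.trans (le_of_eq ?_)
  rw [Real.sqrt_mul hκ.le, Real.rpow_neg hrt.le, ← Real.sqrt_eq_rpow,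
    ← div_eq_mul_inv, div_div, mul_assoc]

private lemma aux_grow {m : ℝ → ℝ} {a b δ : ℝ}
    (hcont : ContinuousOn m (Icc a b))
    (hdiff : ∀ x ∈ Ioo a b, DifferentiableAt ℝ m x)
    (hd : ∀ x ∈ Ioo a b, δ ≤ deriv m x) :
    ∀ r ∈ Icc a b, ∀ s ∈ Icc a b, r ≤ s → δ * (s - r) ≤ m s - m r := by
  have hmono : MonotoneOn (fun x => m x - δ * x) (Icc a b) := by
    apply monotoneOn_of_deriv_nonneg (convex_Icc a b)
      (hcont.sub ((continuous_const.mul continuous_id).continuousOn))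
    · intro x hx
      rw [interior_Icc] at hx
      exact ((hdiff x hx).sub ((differentiableAt_id.const_mul δ))).differentiableWithinAt
    · intro x hx
      rw [interior_Icc] at hx
      have h1 : HasDerivAt (fun x => m x - δ * id x) (deriv m x - δ * 1) x :=
        ((hdiff x hx).hasDerivAt).sub ((hasDerivAt_id x).const_mul δ)
      rw [show (m - (fun x => δ) * id) = (fun x => m x - δ * id x) from rfl, h1.deriv]; have := hd x hx; linarith
  intro r hr s hs hrs
  have := hmono hr hs hrs
  simp only [] at this
  linarith

private lemma aux_fbound2 {c C k mr : ℝ} (hc : 0 < c) (hC : c ≤ C) (hmr : 0 < mr) (hk : 0 < k)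
    (hgrow : k * mr ^ 2 ≤ mr ^ 2 - c ^ 2) :
    c / (mr * Real.sqrt (mr ^ 2 - c ^ 2)) ≤ C / Real.sqrt k * (1 / mr ^ 2) := by
  have h1 : 0 < k * mr ^ 2 := by positivity
  have hs1 : Real.sqrt (k * mr ^ 2) ≤ Real.sqrt (mr ^ 2 - c ^ 2) := Real.sqrt_le_sqrt hgrow
  have hden : 0 < mr * Real.sqrt (k * mr ^ 2) := by positivity
  have step : c / (mr * Real.sqrt (mr ^ 2 - c ^ 2)) ≤ C / (mr * Real.sqrt (k * mr ^ 2)) :=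
    div_le_div₀ (by linarith) hC hden (mul_le_mul_of_nonneg_left hs1 hmr.le)
  refine step.trans (le_of_eq ?_)
  rw [Real.sqrt_mul hk.le, Real.sqrt_sq hmr.le]
  have hsk : 0 < Real.sqrt k := Real.sqrt_pos.mpr hk
  rw [div_mul_eq_mul_div, div_mul_eq_div_div, mul_one_div, div_div]
  ring_nf

set_option maxHeartbeats 1000000 in
/-- Continuity part of the calculus lemma on the turn angle `T`: all the
improper integrals defining `T` are finite and `T` is continuous on
`(c₀, c_q]`, where `c₀ = m r₀`, `c_q = m r_q`. -/
theorem stmt_13 (r₀ rq : ℝ) (h₀ : 0 < r₀) (hq : r₀ < rq)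
    (m : ℝ → ℝ)
    (hsmooth : ContDiffOn ℝ (⊤ : ℕ∞) m (Set.Ioi 0))
    (hmap : ∀ r > (0:ℝ), 0 < m r)
    (hm' : ∀ r ∈ Set.Icc r₀ rq, 0 < deriv m r)
    (hchoke : ∀ r > rq, m rq < m r)
    (hint : MeasureTheory.IntegrableOn (fun r => 1 / (m r) ^ 2) (Set.Ioi 1))
    (hliminf : ∃ a : ℝ, m rq < a ∧ ∀ᶠ r in Filter.atTop, a ≤ m r)
    (ru : ℝ → ℝ)
    (hru : ∀ c ∈ Set.Ico (m r₀) (m rq),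
      ru c ∈ Set.Icc r₀ rq ∧ m (ru c) = c)
    (T : ℝ → ℝ)
    (hT : ∀ c ∈ Set.Ico (m r₀) (m rq),
      T c = (∫ r in Set.Ioi rq, c / (m r * Real.sqrt ((m r) ^ 2 - c ^ 2)))
        + 2 * ∫ r in Set.Ioo (ru c) rq,
            c / (m r * Real.sqrt ((m r) ^ 2 - c ^ 2)))
    (hTq : T (m rq) =
      ∫ r in Set.Ioi rq, m rq / (m r * Real.sqrt ((m r) ^ 2 - (m rq) ^ 2))) :
    (∀ c ∈ Set.Icc (m r₀) (m rq),
      MeasureTheory.IntegrableOn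
        (fun r => c / (m r * Real.sqrt ((m r) ^ 2 - c ^ 2))) (Set.Ioi rq)) ∧
    (∀ c ∈ Set.Ico (m r₀) (m rq),
      MeasureTheory.IntegrableOn
        (fun r => c / (m r * Real.sqrt ((m r) ^ 2 - c ^ 2)))
        (Set.Ioo (ru c) rq)) ∧
    ContinuousOn T (Set.Ioc (m r₀) (m rq)) := by
  obtain ⟨aL, haL, hevL⟩ := hliminf
  rw [Filter.eventually_atTop] at hevL
  obtain ⟨R, hR⟩ := hevL
  set f : ℝ → ℝ → ℝ := fun c r => c / (m r * Real.sqrt ((m r) ^ 2 - c ^ 2)) with hfdef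
  -- basic facts
  have hrq0 : (0:ℝ) < rq := h₀.trans hq
  have hsub : Icc r₀ rq ⊆ Ioi 0 := fun x hx => lt_of_lt_of_le h₀ hx.1
  have hmc : ContinuousOn m (Ioi 0) := hsmooth.continuousOn
  have hmcIcc : ContinuousOn m (Icc r₀ rq) := hmc.mono hsub
  have hdiffAt : ∀ r ∈ Ioi (0:ℝ), DifferentiableAt ℝ m r := fun r hr =>
    (hsmooth.contDiffAt (isOpen_Ioi.mem_nhds hr)).differentiableAt (by simp)
  have hderivCont : ContinuousOn (deriv m) (Ioi 0) :=
    hsmooth.continuousOn_deriv_of_isOpen isOpen_Ioi (by simp)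
  have hmono : StrictMonoOn m (Icc r₀ rq) :=
    strictMonoOn_of_deriv_pos (convex_Icc _ _) hmcIcc (fun x hx => by
      rw [interior_Icc] at hx; exact hm' x ⟨hx.1.le, hx.2.le⟩)
  have hcq : m r₀ < m rq := hmono ⟨le_refl _, hq.le⟩ ⟨hq.le, le_refl _⟩ hq
  have hc0pos : 0 < m r₀ := hmap r₀ h₀
  have hcqpos : 0 < m rq := hmap rq hrq0
  -- minimum slope on [r₀, rq]
  obtain ⟨rmin, hrmin, hmin⟩ := isCompact_Icc.exists_isMinOn (nonempty_Icc.mpr hq.le)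
      (hderivCont.mono hsub)
  set δ := deriv m rmin with hδdef
  have hδpos : 0 < δ := hm' rmin hrmin
  have hδle : ∀ r ∈ Icc r₀ rq, δ ≤ deriv m r := fun r hr => hmin hr
  have hgrow : ∀ r ∈ Icc r₀ rq, ∀ s ∈ Icc r₀ rq, r ≤ s → δ * (s - r) ≤ m s - m r :=
    aux_grow hmcIcc (fun x hx => hdiffAt x (hsub (Ioo_subset_Icc_self hx)))
      (fun x hx => hδle x (Ioo_subset_Icc_self hx))
  have hmlow : ∀ r ∈ Icc r₀ rq, m r₀ ≤ m r := by
    intro r hr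
    have := hgrow r₀ ⟨le_refl _, hq.le⟩ r hr hr.1
    nlinarith [hr.1]
  -- positive slope just beyond rq
  have hεq : ∃ εq > (0:ℝ), ∀ s ∈ Icc rq (rq + εq),
      (deriv m rq / 2) * (s - rq) ≤ m s - m rq := by
    have hdc : ContinuousAt (deriv m) rq := hderivCont.continuousAt (isOpen_Ioi.mem_nhds hrq0)
    have hpos := hm' rq ⟨hq.le, le_refl _⟩
    have hnb : (deriv m) ⁻¹' (Ioi (deriv m rq / 2)) ∈ 𝓝 rq :=
      hdc.preimage_mem_nhds (Ioi_mem_nhds (by linarith))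
    obtain ⟨ε, hεpos, hball⟩ := Metric.mem_nhds_iff.mp hnb
    have hε'pos : 0 < min (ε/2) rq := lt_min (by linarith) hrq0
    refine ⟨min (ε/2) rq, hε'pos, ?_⟩
    have hsub2 : Icc rq (rq + min (ε/2) rq) ⊆ Ioi (0:ℝ) :=
      fun x hx => lt_of_lt_of_le hrq0 hx.1
    have hd2 : ∀ x ∈ Ioo rq (rq + min (ε/2) rq), deriv m rq / 2 ≤ deriv m x := by
      intro x hx
      have hballx : x ∈ Metric.ball rq ε := by
        rw [Metric.mem_ball, Real.dist_eq, abs_of_nonneg (by linarith [hx.1.le])]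
        have h2 := hx.2
        have h3 : min (ε/2) rq ≤ ε/2 := min_le_left _ _
        linarith
      exact (hball hballx).le
    exact fun s hs => aux_grow (hmc.mono hsub2)
      (fun x hx => hdiffAt x (hsub2 (Ioo_subset_Icc_self hx))) hd2 rq
      ⟨le_refl _, by linarith⟩ s hs hs.1
  obtain ⟨εq, hεqpos, hgrow2⟩ := hεq
  set δ2 := deriv m rq / 2 with hδ2def
  have hδ2pos : 0 < δ2 := half_pos (hm' rq ⟨hq.le, le_refl _⟩)
  -- positivity of denominators
  have hden : ∀ c r : ℝ, 0 < c → c < m r → 0 < m r * Real.sqrt ((m r) ^ 2 - c ^ 2) := by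
    intro c r hc h
    have h2 : 0 < (m r) ^ 2 - c ^ 2 := by nlinarith
    exact mul_pos (hc.trans h) (Real.sqrt_pos.mpr h2)
  have hfnonneg : ∀ c r : ℝ, 0 < c → 0 < m r → 0 ≤ f c r := by
    intro c r hc hm
    exact div_nonneg hc.le (mul_nonneg hm.le (Real.sqrt_nonneg _))
  -- continuity of f c on suitable sets
  have hcontOn : ∀ (c : ℝ) (s : Set ℝ), s ⊆ Ioi 0 → (∀ r ∈ s, 0 < c ∧ c < m r) →
      ContinuousOn (f c) s := by
    intro c s hs h
    apply ContinuousOn.div continuousOn_const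
    · exact (hmc.mono hs).mul ((((hmc.mono hs).pow 2).sub continuousOn_const).sqrt)
    · intro r hr; exact (hden c r (h r hr).1 (h r hr).2).ne'
  -- Part 1 : integrability on (rq, ∞)
  have haL0 : 0 < aL := hcqpos.trans haL
  have hk : 0 < 1 - (m rq)^2 / aL^2 := by
    rw [sub_pos, div_lt_one (by positivity)]
    nlinarith
  have hIntIoi : ∀ c ∈ Icc (m r₀) (m rq), IntegrableOn (f c) (Ioi rq) := by
    intro c hc
    have hc0 : 0 < c := lt_of_lt_of_le hc0pos hc.1
    have hcm : ∀ r ∈ Ioi rq, 0 < c ∧ c < m r := fun r hr =>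
      ⟨hc0, lt_of_le_of_lt hc.2 (hchoke r hr)⟩
    set M := max (rq + εq) (max 1 R) with hM
    have hM1 : rq + εq ≤ M := le_max_left _ _
    have hM2 : (1:ℝ) ≤ M := le_trans (le_max_left _ _) (le_max_right _ _)
    have hM3 : R ≤ M := le_trans (le_max_right _ _) (le_max_right _ _)
    have hrqM : rq < M := by linarith
    have hI1 : IntegrableOn (f c) (Ioo rq (rq + εq)) := by
      have hbase : IntegrableOn
          (fun r => (m rq / (m rq * Real.sqrt (δ2 * m rq))) * (r - rq) ^ (-(1/2):ℝ))
          (Ioo rq (rq+εq)) := by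
        have h0 : IntegrableOn
            (fun r => (m rq / (m rq * Real.sqrt (δ2 * m rq))) * (r - rq) ^ (-(1/2):ℝ))
            (Ioc rq (rq+εq)) := (aux_int_rpow rq (rq+εq) (by linarith)).const_mul _
        exact h0.mono_set Ioo_subset_Ioc_self
      apply Integrable.mono hbase
      · exact (hcontOn c _ (fun x hx => hrq0.trans hx.1)
          (fun r hr => hcm r hr.1)).aestronglyMeasurable measurableSet_Ioo
      · refine (ae_restrict_iff' measurableSet_Ioo).mpr (ae_of_all _ fun r hr => ?_)
        have h1 : rq < r := hr.1
        have hmr : m rq < m r := hchoke r h1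
        have hgr : δ2 * (r - rq) ≤ m r - m rq := hgrow2 r ⟨h1.le, hr.2.le⟩
        have hprod : δ2 * m rq * (r - rq) ≤ (m r)^2 - c^2 := by nlinarith [hc.2, hc0]
        rw [Real.norm_eq_abs, Real.norm_eq_abs,
          abs_of_nonneg (hfnonneg c r hc0 (by linarith)),
          abs_of_nonneg (mul_nonneg (by positivity) (Real.rpow_nonneg (by linarith) _))]
        exact aux_fbound hc0 hc.2 hcqpos hmr.le (by positivity) h1 hprod
    have hI2 : IntegrableOn (f c) (Icc (rq + εq) M) := by
      refine ContinuousOn.integrableOn_compact isCompact_Icc ?_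
      exact hcontOn c _ (fun x hx => lt_of_lt_of_le (by linarith : (0:ℝ) < rq + εq) hx.1)
        (fun r hr => hcm r (lt_of_lt_of_le (by linarith) hr.1))
    have hI3 : IntegrableOn (f c) (Ioi M) := by
      have hbase : IntegrableOn (fun r => (m rq / Real.sqrt (1 - (m rq)^2/aL^2)) * (1 / (m r)^2))
          (Ioi M) := by
        have h0 : IntegrableOn (fun r => 1 / (m r)^2) (Ioi M) :=
          hint.mono_set (fun x hx => lt_of_le_of_lt hM2 hx)
        exact h0.const_mul _
      apply Integrable.mono hbase
      · exact (hcontOn c _ (fun x hx => hrq0.trans (hrqM.trans hx))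
          (fun r hr => hcm r (hrqM.trans hr))).aestronglyMeasurable measurableSet_Ioi
      · refine (ae_restrict_iff' measurableSet_Ioi).mpr (ae_of_all _ fun r hr => ?_)
        have haLr : aL ≤ m r := hR r (le_trans hM3 (le_of_lt hr))
        have hmrpos : 0 < m r := haL0.trans_le haLr
        have hgrow3 : (1 - (m rq)^2/aL^2) * (m r)^2 ≤ (m r)^2 - c^2 := by
          have h2 : (m rq)^2 ≤ (m rq)^2 * (m r)^2 / aL^2 := by
            rw [le_div_iff₀ (by positivity)]
            have h2a : aL^2 ≤ (m r)^2 := by nlinarith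
            exact mul_le_mul_of_nonneg_left h2a (sq_nonneg _)
          have h3 : (1 - (m rq)^2/aL^2) * (m r)^2 = (m r)^2 - (m rq)^2 * (m r)^2/aL^2 := by
            ring
          nlinarith [hc.2, hc0]
        rw [Real.norm_eq_abs, Real.norm_eq_abs,
          abs_of_nonneg (hfnonneg c r hc0 hmrpos),
          abs_of_nonneg (mul_nonneg (by positivity) (by positivity))]
        exact aux_fbound2 hc0 hc.2 hmrpos hk hgrow3
    have hcover : Ioi rq ⊆ Ioo rq (rq+εq) ∪ (Icc (rq+εq) M ∪ Ioi M) := by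
      intro x hx
      by_cases h1 : x < rq + εq
      · exact Or.inl ⟨hx, h1⟩
      · by_cases h2 : x ≤ M
        · exact Or.inr (Or.inl ⟨not_lt.mp h1, h2⟩)
        · exact Or.inr (Or.inr (not_le.mp h2))
    exact ((hI1.union (hI2.union hI3)).mono_set hcover)
  -- ru' : extension of ru
  set ru' : ℝ → ℝ := fun c => if c < m rq then ru c else rq with hru'def
  have hru'mem : ∀ c ∈ Icc (m r₀) (m rq), ru' c ∈ Icc r₀ rq ∧ m (ru' c) = c := by
    intro c hc
    by_cases h : c < m rq
    · simpa only [hru'def, if_pos h] using hru c ⟨hc.1, h⟩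
    · have hce : c = m rq := le_antisymm hc.2 (not_lt.mp h)
      simp only [hru'def, if_neg h]
      exact ⟨⟨hq.le, le_refl _⟩, hce.symm⟩
  have hruLip : ∀ c ∈ Icc (m r₀) (m rq), ∀ c' ∈ Icc (m r₀) (m rq), c ≤ c' →
      ru' c ≤ ru' c' ∧ δ * (ru' c' - ru' c) ≤ c' - c := by
    intro c hc c' hc' hcc
    obtain ⟨hm1, he1⟩ := hru'mem c hc
    obtain ⟨hm2, he2⟩ := hru'mem c' hc'
    have hle : ru' c ≤ ru' c' := by
      by_contra hco
      push_neg at hco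
      have := hmono hm2 hm1 hco
      rw [he1, he2] at this; linarith
    exact ⟨hle, by have := hgrow (ru' c) hm1 (ru' c') hm2 hle; rw [he1, he2] at this; linarith⟩
  -- Part 2 : integrability on (ru c, rq)
  have hIntS : ∀ c ∈ Icc (m r₀) (m rq), IntegrableOn (f c) (Ioo (ru' c) rq) := by
    intro c hc
    rcases eq_or_lt_of_le hc.2 with hce | hlt
    · have hr' : ru' c = rq := if_neg (by rw [hce]; exact lt_irrefl _)
      rw [hr', Set.Ioo_self]
      exact integrableOn_empty
    · obtain ⟨htmem, hteq⟩ := hru'mem c hc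
      have hc0 : 0 < c := lt_of_lt_of_le hc0pos hc.1
      have htrq : ru' c < rq := by
        rcases lt_or_eq_of_le htmem.2 with h|h
        · exact h
        · exfalso; rw [h] at hteq; rw [hteq] at hlt; exact lt_irrefl _ hlt
      have hsubS : Ioo (ru' c) rq ⊆ Icc r₀ rq := fun x hx => ⟨le_trans htmem.1 hx.1.le, hx.2.le⟩
      have hmgt : ∀ r ∈ Ioo (ru' c) rq, c < m r := by
        intro r hr
        have := hmono htmem (hsubS hr) hr.1
        rwa [hteq] at this
      have hbase : IntegrableOn
          (fun r => (m rq / (m r₀ * Real.sqrt (δ * m r₀))) * (r - ru' c) ^ (-(1/2):ℝ))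
          (Ioo (ru' c) rq) := by
        have h0 : IntegrableOn
            (fun r => (m rq / (m r₀ * Real.sqrt (δ * m r₀))) * (r - ru' c) ^ (-(1/2):ℝ))
            (Ioc (ru' c) rq) := (aux_int_rpow (ru' c) rq htrq.le).const_mul _
        exact h0.mono_set Ioo_subset_Ioc_self
      apply Integrable.mono hbase
      · exact (hcontOn c _ (fun x hx => hsub (hsubS hx))
          (fun r hr => ⟨hc0, hmgt r hr⟩)).aestronglyMeasurable measurableSet_Ioo
      · refine (ae_restrict_iff' measurableSet_Ioo).mpr (ae_of_all _ fun r hr => ?_)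
        have hrIcc := hsubS hr
        have hmr0 : m r₀ ≤ m r := hmlow r hrIcc
        have hgr : δ * (r - ru' c) ≤ m r - c := by
          have := hgrow (ru' c) htmem r hrIcc hr.1.le
          rwa [hteq] at this
        have hprod : δ * m r₀ * (r - ru' c) ≤ (m r)^2 - c^2 := by
          have hsum : m r₀ ≤ m r + c := by linarith
          have hmc0 : (0:ℝ) ≤ m r - c := by linarith [hmgt r hr]
          have hmm := mul_le_mul hgr hsum hc0pos.le hmc0
          calc δ * m r₀ * (r - ru' c) = δ * (r - ru' c) * m r₀ := by ring
            _ ≤ (m r - c) * (m r + c) := hmm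
            _ = (m r)^2 - c^2 := by ring
        rw [Real.norm_eq_abs, Real.norm_eq_abs,
          abs_of_nonneg (hfnonneg c r hc0 (lt_of_lt_of_le hc0pos hmr0)),
          abs_of_nonneg (mul_nonneg (by positivity) (Real.rpow_nonneg (by linarith [hr.1]) _))]
        exact aux_fbound hc0 hc.2 hc0pos hmr0 (by positivity) hr.1 hprod
  -- continuity of the outer integral
  have hGcont : ContinuousOn (fun c => ∫ r in Ioi rq, f c r) (Icc (m r₀) (m rq)) := by
    apply continuousOn_of_dominated (bound := f (m rq))
    · exact fun c hc => (hIntIoi c hc).aestronglyMeasurable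
    · intro c hc
      refine (ae_restrict_iff' measurableSet_Ioi).mpr (ae_of_all _ fun r hr => ?_)
      have hc0 : 0 < c := lt_of_lt_of_le hc0pos hc.1
      have h1 : m rq < m r := hchoke r hr
      rw [Real.norm_eq_abs, abs_of_nonneg (hfnonneg c r hc0 (hcqpos.trans h1))]
      apply div_le_div₀ hcqpos.le hc.2 (hden (m rq) r hcqpos h1)
      exact mul_le_mul_of_nonneg_left
        (Real.sqrt_le_sqrt (by nlinarith [hc.2, hc0])) (hcqpos.trans h1).le
    · exact hIntIoi (m rq) ⟨hcq.le, le_refl _⟩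
    · refine (ae_restrict_iff' measurableSet_Ioi).mpr (ae_of_all _ fun r hr => ?_)
      have h1 : m rq < m r := hchoke r hr
      apply ContinuousOn.div continuousOn_id
      · exact (continuous_const.mul ((continuous_const.sub (continuous_pow 2))).sqrt).continuousOn
      · intro c hcs
        exact (hden c r (lt_of_lt_of_le hc0pos hcs.1) (lt_of_le_of_lt hcs.2 h1)).ne'
  -- continuity of the inner integral
  have hK2pos : 0 < m rq / (m r₀ * Real.sqrt (δ * m r₀)) :=
    div_pos hcqpos (mul_pos hc0pos (Real.sqrt_pos.mpr (by positivity)))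
  -- key quantitative lower bound on the indicator region
  have hkey : ∀ c ∈ Icc (m r₀) (m rq), ∀ (η : ℝ), 0 < η → ∀ r ∈ Ioo r₀ rq,
      ru' c + η < r → δ * m r₀ * η ≤ (m r)^2 - c^2 ∧ c < m r := by
    intro c hc η hη r hr hri
    obtain ⟨htmem, hteq⟩ := hru'mem c hc
    have hrIcc : r ∈ Icc r₀ rq := ⟨hr.1.le, hr.2.le⟩
    have h1 : ru' c < r := by linarith
    have hgr : δ * (r - ru' c) ≤ m r - c := by
      have := hgrow (ru' c) htmem r hrIcc h1.le
      rwa [hteq] at this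
    have hmgt : c < m r := by
      have := hmono htmem hrIcc h1; rwa [hteq] at this
    have hc0 : 0 < c := lt_of_lt_of_le hc0pos hc.1
    have hmr0 : m r₀ ≤ m r := hmlow r hrIcc
    refine ⟨?_, hmgt⟩
    have h2 : δ * η ≤ δ * (r - ru' c) :=
      mul_le_mul_of_nonneg_left (by linarith) hδpos.le
    have hsum : m r₀ ≤ m r + c := by linarith
    have hmm := mul_le_mul (h2.trans hgr) hsum hc0pos.le (by linarith)
    calc δ * m r₀ * η = δ * η * m r₀ := by ring
      _ ≤ (m r - c) * (m r + c) := hmm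
      _ = (m r)^2 - c^2 := by ring
  -- uniform bound between the integral and its cutoff
  have hFH : ∀ n : ℕ, ∀ c ∈ Icc (m r₀) (m rq),
      |(∫ r in Ioo (ru' c) rq, f c r)
        - ∫ r in Ioo r₀ rq, (Ioi (ru' c + 1/((n:ℝ)+1))).indicator (f c) r|
      ≤ (m rq / (m r₀ * Real.sqrt (δ * m r₀))) * (2 * Real.sqrt (1/((n:ℝ)+1))) := by
    intro n c hc
    obtain ⟨htmem, hteq⟩ := hru'mem c hc
    have hc0 : 0 < c := lt_of_lt_of_le hc0pos hc.1
    have hεp : (0:ℝ) < 1/((n:ℝ)+1) := by positivity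
    have hdom : Ioo r₀ rq ∩ Ioi (ru' c + 1/((n:ℝ)+1))
        = Ioo (ru' c) rq ∩ Ioi (ru' c + 1/((n:ℝ)+1)) := by
      rw [Ioo_inter_Ioi, Ioo_inter_Ioi, max_eq_right (by linarith [htmem.1]),
        max_eq_right (by linarith)]
    have hFeq : (∫ r in Ioo r₀ rq, (Ioi (ru' c + 1/((n:ℝ)+1))).indicator (f c) r)
        = ∫ r in Ioo (ru' c) rq, (Ioi (ru' c + 1/((n:ℝ)+1))).indicator (f c) r := by
      rw [setIntegral_indicator measurableSet_Ioi, setIntegral_indicator measurableSet_Ioi, hdom]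
    rw [hFeq]
    have hfi : IntegrableOn (f c) (Ioo (ru' c) rq) := hIntS c hc
    have hgi : IntegrableOn ((Ioi (ru' c + 1/((n:ℝ)+1))).indicator (f c)) (Ioo (ru' c) rq) := by
      apply Integrable.mono hfi (hfi.aestronglyMeasurable.indicator measurableSet_Ioi)
      exact ae_of_all _ fun r => norm_indicator_le_norm_self _ r
    rw [← integral_sub hfi hgi]
    have hψint : Integrable ((Ioc (ru' c) (ru' c + 1/((n:ℝ)+1))).indicator
        (fun r => (m rq / (m r₀ * Real.sqrt (δ * m r₀))) * (r - ru' c) ^ (-(1/2):ℝ))) volume := by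
      rw [integrable_indicator_iff measurableSet_Ioc]
      exact (aux_int_rpow _ _ (by linarith)).const_mul _
    have hψnonneg : ∀ r, 0 ≤ (Ioc (ru' c) (ru' c + 1/((n:ℝ)+1))).indicator
        (fun r => (m rq / (m r₀ * Real.sqrt (δ * m r₀))) * (r - ru' c) ^ (-(1/2):ℝ)) r := by
      intro r
      apply Set.indicator_nonneg
      intro x hx
      exact mul_nonneg hK2pos.le (Real.rpow_nonneg (by linarith [hx.1]) _)
    have hle : ∀ r ∈ Ioo (ru' c) rq,
        f c r - (Ioi (ru' c + 1/((n:ℝ)+1))).indicator (f c) r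
        ≤ (Ioc (ru' c) (ru' c + 1/((n:ℝ)+1))).indicator
            (fun r => (m rq / (m r₀ * Real.sqrt (δ * m r₀))) * (r - ru' c) ^ (-(1/2):ℝ)) r := by
      intro r hr
      by_cases hcase : r ∈ Ioi (ru' c + 1/((n:ℝ)+1))
      · rw [Set.indicator_of_mem hcase, sub_self]
        exact hψnonneg r
      · have hrle : r ≤ ru' c + 1/((n:ℝ)+1) := not_lt.mp hcase
        rw [Set.indicator_of_notMem hcase, sub_zero,
          Set.indicator_of_mem (show r ∈ Ioc (ru' c) (ru' c + 1/((n:ℝ)+1)) from ⟨hr.1, hrle⟩)]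
        have hrIcc : r ∈ Icc r₀ rq := ⟨le_trans htmem.1 hr.1.le, hr.2.le⟩
        have hgr : δ * (r - ru' c) ≤ m r - c := by
          have := hgrow (ru' c) htmem r hrIcc hr.1.le; rwa [hteq] at this
        have hmgt : c < m r := by have := hmono htmem hrIcc hr.1; rwa [hteq] at this
        have hmr0 : m r₀ ≤ m r := hmlow r hrIcc
        have hprod : δ * m r₀ * (r - ru' c) ≤ (m r)^2 - c^2 := by
          have hsum : m r₀ ≤ m r + c := by linarith
          have hmm := mul_le_mul hgr hsum hc0pos.le (by linarith)
          calc δ * m r₀ * (r - ru' c) = δ * (r - ru' c) * m r₀ := by ring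
            _ ≤ (m r - c) * (m r + c) := hmm
            _ = (m r)^2 - c^2 := by ring
        exact aux_fbound hc0 hc.2 hc0pos hmr0 (by positivity) hr.1 hprod
    have hnn : ∀ r ∈ Ioo (ru' c) rq,
        0 ≤ f c r - (Ioi (ru' c + 1/((n:ℝ)+1))).indicator (f c) r := by
      intro r hr
      have hrIcc : r ∈ Icc r₀ rq := ⟨le_trans htmem.1 hr.1.le, hr.2.le⟩
      have hfr : 0 ≤ f c r := hfnonneg c r hc0 (lt_of_lt_of_le hc0pos (hmlow r hrIcc))
      by_cases hcase : r ∈ Ioi (ru' c + 1/((n:ℝ)+1))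
      · rw [Set.indicator_of_mem hcase]; linarith
      · rw [Set.indicator_of_notMem hcase]; linarith
    rw [abs_of_nonneg (setIntegral_nonneg measurableSet_Ioo hnn)]
    have step1 := setIntegral_mono_on (hfi.sub hgi) (hψint.integrableOn)
      measurableSet_Ioo hle
    have step2 : (∫ r in Ioo (ru' c) rq, (Ioc (ru' c) (ru' c + 1/((n:ℝ)+1))).indicator
        (fun r => (m rq / (m r₀ * Real.sqrt (δ * m r₀))) * (r - ru' c) ^ (-(1/2):ℝ)) r)
        ≤ ∫ r, (Ioc (ru' c) (ru' c + 1/((n:ℝ)+1))).indicator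
        (fun r => (m rq / (m r₀ * Real.sqrt (δ * m r₀))) * (r - ru' c) ^ (-(1/2):ℝ)) r :=
      setIntegral_le_integral hψint (ae_of_all _ hψnonneg)
    have step3 : (∫ r, (Ioc (ru' c) (ru' c + 1/((n:ℝ)+1))).indicator
        (fun r => (m rq / (m r₀ * Real.sqrt (δ * m r₀))) * (r - ru' c) ^ (-(1/2):ℝ)) r)
        = (m rq / (m r₀ * Real.sqrt (δ * m r₀))) * (2 * Real.sqrt (1/((n:ℝ)+1))) := by
      rw [integral_indicator measurableSet_Ioc, integral_const_mul,
        aux_val_rpow _ _ hεp.le]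
    calc (∫ r in Ioo (ru' c) rq,
          (f c r - (Ioi (ru' c + 1/((n:ℝ)+1))).indicator (f c) r)) ≤ _ := step1
      _ ≤ _ := step2
      _ = _ := step3
  -- continuity of each cutoff integral
  have hFcont : ∀ n : ℕ, ContinuousOn
      (fun c => ∫ r in Ioo r₀ rq, (Ioi (ru' c + 1/((n:ℝ)+1))).indicator (f c) r)
      (Icc (m r₀) (m rq)) := by
    intro n c₁ hc₁
    have hεp : (0:ℝ) < 1/((n:ℝ)+1) := by positivity
    have hruCont : ContinuousWithinAt ru' (Icc (m r₀) (m rq)) c₁ := by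
      rw [Metric.continuousWithinAt_iff]
      intro ε hε
      refine ⟨δ * ε, by positivity, fun c hcs hdist => ?_⟩
      rw [Real.dist_eq] at hdist ⊢
      rcases le_total c c₁ with h | h
      · obtain ⟨h1, h2⟩ := hruLip c hcs c₁ hc₁ h
        have h4 : c₁ - c < δ * ε := by
          rw [abs_of_nonpos (by linarith)] at hdist; linarith
        rw [abs_of_nonpos (by linarith)]
        nlinarith [hδpos]
      · obtain ⟨h1, h2⟩ := hruLip c₁ hc₁ c hcs h
        have h4 : c - c₁ < δ * ε := by
          rw [abs_of_nonneg (by linarith)] at hdist; linarith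
        rw [abs_of_nonneg (by linarith)]
        nlinarith [hδpos]
    apply continuousWithinAt_of_dominated
      (bound := fun _ => m rq / (m r₀ * Real.sqrt (δ * m r₀ * (1/((n:ℝ)+1)))))
    · apply eventually_nhdsWithin_of_forall
      intro c hcs
      rw [aestronglyMeasurable_indicator_iff measurableSet_Ioi,
        Measure.restrict_restrict measurableSet_Ioi]
      apply (hIntS c hcs).aestronglyMeasurable.mono_measure
      apply Measure.restrict_mono _ le_rfl
      intro x hx
      obtain ⟨hx1, hx2⟩ := hx
      rw [mem_Ioi] at hx1
      exact mem_Ioo.mpr ⟨by linarith, hx2.2⟩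
    · apply eventually_nhdsWithin_of_forall
      intro c hcs
      refine (ae_restrict_iff' measurableSet_Ioo).mpr (ae_of_all _ fun r hr => ?_)
      by_cases hcase : r ∈ Ioi (ru' c + 1/((n:ℝ)+1))
      · rw [Set.indicator_of_mem hcase]
        obtain ⟨hbb, hmgt⟩ := hkey c hcs (1/((n:ℝ)+1)) hεp r hr hcase
        have hc0 : 0 < c := lt_of_lt_of_le hc0pos hcs.1
        have hmr0 : m r₀ ≤ m r := hmlow r ⟨hr.1.le, hr.2.le⟩
        rw [Real.norm_eq_abs, abs_of_nonneg (hfnonneg c r hc0 (lt_of_lt_of_le hc0pos hmr0))]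
        apply div_le_div₀ hcqpos.le hcs.2
          (mul_pos hc0pos (Real.sqrt_pos.mpr (by positivity)))
        exact mul_le_mul hmr0 (Real.sqrt_le_sqrt hbb) (Real.sqrt_nonneg _)
          (lt_of_lt_of_le hc0pos hmr0).le
      · rw [Set.indicator_of_notMem hcase]
        rw [norm_zero]
        positivity
    · exact (integrableOn_const_iff).mpr (Or.inr measure_Ioo_lt_top)
    · have hne : ∀ᵐ (r:ℝ) ∂(volume.restrict (Ioo r₀ rq)), r ≠ ru' c₁ + 1/((n:ℝ)+1) := by
        refine ae_restrict_of_ae ?_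
        rw [ae_iff]
        have hset : {x : ℝ | ¬ x ≠ ru' c₁ + 1/((n:ℝ)+1)} = {ru' c₁ + 1/((n:ℝ)+1)} := by
          ext x; simp
        rw [hset]
        exact measure_singleton _
      filter_upwards [hne, ae_restrict_mem measurableSet_Ioo] with r hrne hrmem
      rcases lt_or_gt_of_ne hrne with hlt2 | hgt2
      · have hevball : ∀ᶠ c in 𝓝[Icc (m r₀) (m rq)] c₁, r < ru' c + 1/((n:ℝ)+1) := by
          have hpre : ru' ⁻¹' (Ioi (r - 1/((n:ℝ)+1))) ∈ 𝓝[Icc (m r₀) (m rq)] c₁ :=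
            hruCont (Ioi_mem_nhds (by linarith))
          filter_upwards [hpre] with c hcp
          simp only [mem_preimage, mem_Ioi] at hcp; linarith
        apply ContinuousWithinAt.congr_of_eventuallyEq
          (continuousWithinAt_const (b := (0:ℝ)))
        · filter_upwards [hevball] with c hcb
          rw [Set.indicator_of_notMem (by simp only [mem_Ioi]; push_neg; linarith)]
        · rw [Set.indicator_of_notMem (by simp only [mem_Ioi]; push_neg; linarith)]
      · have hevball : ∀ᶠ c in 𝓝[Icc (m r₀) (m rq)] c₁, ru' c + 1/((n:ℝ)+1) < r := by
          have hpre : ru' ⁻¹' (Iio (r - 1/((n:ℝ)+1))) ∈ 𝓝[Icc (m r₀) (m rq)] c₁ :=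
            hruCont (Iio_mem_nhds (by linarith))
          filter_upwards [hpre] with c hcp
          simp only [mem_preimage, mem_Iio] at hcp; linarith
        have hbase : ContinuousWithinAt (fun c => f c r) (Icc (m r₀) (m rq)) c₁ := by
          apply ContinuousAt.continuousWithinAt
          apply ContinuousAt.div continuousAt_id
            ((continuous_const.mul ((continuous_const.sub (continuous_pow 2))).sqrt).continuousAt)
          have hm1 : c₁ < m r := (hkey c₁ hc₁ (1/((n:ℝ)+1)) hεp r hrmem hgt2).2
          exact (hden c₁ r (lt_of_lt_of_le hc0pos hc₁.1) hm1).ne'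
        apply ContinuousWithinAt.congr_of_eventuallyEq hbase
        · filter_upwards [hevball] with c hcb
          rw [Set.indicator_of_mem (by simp only [mem_Ioi]; linarith)]
        · rw [Set.indicator_of_mem (by simp only [mem_Ioi]; linarith)]
  -- uniform convergence ⇒ continuity of the inner integral
  have hHcont : ContinuousOn (fun c => ∫ r in Ioo (ru' c) rq, f c r)
      (Icc (m r₀) (m rq)) := by
    have hseq : Tendsto (fun n : ℕ =>
        (m rq / (m r₀ * Real.sqrt (δ * m r₀))) * (2 * Real.sqrt (1/((n:ℝ)+1))))
        atTop (𝓝 0) := by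
      have h0 : Tendsto (fun n : ℕ => 1/((n:ℝ)+1)) atTop (𝓝 0) :=
        tendsto_one_div_add_atTop_nhds_zero_nat
      have h1 := (Real.continuous_sqrt.tendsto 0).comp h0
      rw [Real.sqrt_zero] at h1
      have h2 : Tendsto (fun n : ℕ =>
          (m rq / (m r₀ * Real.sqrt (δ * m r₀))) * (2 * Real.sqrt (1/((n:ℝ)+1))))
          atTop (𝓝 ((m rq / (m r₀ * Real.sqrt (δ * m r₀))) * (2 * 0))) :=
        ((h1.const_mul 2).const_mul _)
      simpa using h2
    have hUnif : TendstoUniformlyOn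
        (fun (n : ℕ) (c : ℝ) => ∫ r in Ioo r₀ rq, (Ioi (ru' c + 1/((n:ℝ)+1))).indicator (f c) r)
        (fun c => ∫ r in Ioo (ru' c) rq, f c r) (atTop : Filter ℕ) (Icc (m r₀) (m rq)) := by
      rw [Metric.tendstoUniformlyOn_iff]
      intro ε hε
      filter_upwards [hseq.eventually_lt_const hε] with n hn c hc
      rw [Real.dist_eq]
      exact lt_of_le_of_lt (hFH n c hc) hn
    exact hUnif.continuousOn (Eventually.of_forall hFcont).frequently
  refine ⟨fun c hc => hIntIoi c hc, ?_, ?_⟩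
  · intro c hc
    have h2 := hIntS c ⟨hc.1, hc.2.le⟩
    rwa [show ru' c = ru c from if_pos hc.2] at h2
  · have hEq : EqOn (fun c => (∫ r in Ioi rq, f c r)
        + 2 * ∫ r in Ioo (ru' c) rq, f c r) T (Ioc (m r₀) (m rq)) := by
      intro c hc
      rcases eq_or_lt_of_le hc.2 with hce | hlt
      · have hnlt : ¬ c < m rq := by rw [hce]; exact lt_irrefl _
        have hr' : ru' c = rq := if_neg hnlt
        simp only [hr', Set.Ioo_self, Measure.restrict_empty, integral_zero_measure,
          mul_zero, add_zero]
        rw [hce]; exact hTq.symm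
      · rw [hT c ⟨hc.1.le, hlt⟩]
        have hr' : ru' c = ru c := if_pos hlt
        simp only [hr', hfdef]
    exact ContinuousOn.congr
      ((hGcont.mono Ioc_subset_Icc_self).add
        (continuousOn_const.mul (hHcont.mono Ioc_subset_Icc_self))) hEq.symm
end

section
/- Let m : [0,∞) → ℝ be smooth with m(0) = 0, m′(0) = 1, m(r) > 0 for all r > 0, and assume either m″ ≤ 0 on [0,∞) or −m″/m is non-increasing on [0,∞). Let x₀ > 0 be such that m′(x₀) > 0, m(r) > m(x₀) for all r > x₀, and the improper integral T(x₀) = ∫_{x₀}^∞ m(x₀)/(m(r)·√(m(r)² − m(x₀)²)) dr is finite. Then on some neighborhood of x₀ the analogous integrals T(x) = ∫_x^∞ m(x)/(m(r)·√(m(r)² − m(x)²)) dr are defined and finite, and T is continuous at x₀. -/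
open Real Set Filter MeasureTheory

set_option maxHeartbeats 1000000

lemma aux_not_bdd (m : ℝ → ℝ) (x₀ : ℝ) (hx₀ : 0 < x₀)
    (hchoke : ∀ r > x₀, m x₀ < m r)
    (hfin : MeasureTheory.IntegrableOn
      (fun r => m x₀ / (m r * Real.sqrt ((m r) ^ 2 - (m x₀) ^ 2)))
      (Set.Ioi x₀))
    (hpos : ∀ r > (0:ℝ), 0 < m r)
    (t B : ℝ) (ht : x₀ ≤ t) (hB : ∀ r ≥ t, m r ≤ B) : False := by
  have hmx₀ : 0 < m x₀ := hpos x₀ hx₀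
  have hBpos : 0 < B := lt_of_lt_of_le (lt_trans hmx₀ (hchoke (t+1) (by linarith))) (hB (t+1) (by linarith))
  set f := fun r => m x₀ / (m r * Real.sqrt ((m r) ^ 2 - (m x₀) ^ 2)) with hf
  have key : ∀ r ∈ Set.Ioi t, m x₀ / (B * B) ≤ f r := by
    intro r hr
    have hrt : t < r := hr
    have hmr : m x₀ < m r := hchoke r (lt_of_le_of_lt ht hrt)
    have hmrB : m r ≤ B := hB r (le_of_lt hrt)
    have hsq : (m x₀)^2 < (m r)^2 := by nlinarith
    have hsqrtpos : 0 < Real.sqrt ((m r)^2 - (m x₀)^2) := Real.sqrt_pos.mpr (by linarith)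
    have hsqrtle : Real.sqrt ((m r)^2 - (m x₀)^2) ≤ B := by
      have h1 : Real.sqrt ((m r)^2 - (m x₀)^2) ≤ Real.sqrt ((m r)^2) :=
        Real.sqrt_le_sqrt (by nlinarith)
      rw [Real.sqrt_sq (by linarith : (0:ℝ) ≤ m r)] at h1
      linarith
    have hmrpos : 0 < m r := lt_trans hmx₀ hmr
    have hden : 0 < m r * Real.sqrt ((m r)^2 - (m x₀)^2) := mul_pos hmrpos hsqrtpos
    have hdenle : m r * Real.sqrt ((m r)^2 - (m x₀)^2) ≤ B * B := by
      apply mul_le_mul hmrB hsqrtle (le_of_lt hsqrtpos) (le_of_lt hBpos)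
    exact div_le_div_of_nonneg_left (le_of_lt hmx₀) hden hdenle
  have hint : MeasureTheory.IntegrableOn f (Set.Ioi t) :=
    hfin.mono_set (Set.Ioi_subset_Ioi ht)
  have hconst : MeasureTheory.IntegrableOn (fun _ : ℝ => m x₀/(B*B)) (Set.Ioi t) := by
    apply MeasureTheory.Integrable.mono' hint aestronglyMeasurable_const
    filter_upwards [MeasureTheory.ae_restrict_mem measurableSet_Ioi] with r hr
    rw [Real.norm_eq_abs, abs_of_pos (by positivity)]
    exact key r hr
  rw [MeasureTheory.integrableOn_const_iff] at hconst
  rcases hconst with h | h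
  · have : (0:ℝ) < m x₀ / (B*B) := by positivity
    have h' : m x₀ / (B*B) = 0 := by simpa using h
    linarith [this, h' ▸ this]
  · simp [Real.volume_Ioi] at h

lemma aux_mono_tail (m : ℝ → ℝ)
    (hsmooth : ContDiff ℝ (⊤ : ℕ∞) m)
    (hpos : ∀ r > (0:ℝ), 0 < m r)
    (hcurv : (∀ r ≥ (0:ℝ), deriv (deriv m) r ≤ 0) ∨
      AntitoneOn (fun r => -(deriv (deriv m) r) / m r) (Set.Ioi 0))
    (x₀ : ℝ) (hx₀ : 0 < x₀)
    (hchoke : ∀ r > x₀, m x₀ < m r)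
    (hfin : MeasureTheory.IntegrableOn
      (fun r => m x₀ / (m r * Real.sqrt ((m r) ^ 2 - (m x₀) ^ 2)))
      (Set.Ioi x₀)) :
    ∃ t, x₀ ≤ t ∧ MonotoneOn m (Set.Ici t) := by
  have hsm' : ContDiff ℝ ((⊤:ℕ∞) : WithTop ℕ∞) m := hsmooth.of_le (by simp)
  have hm1 : Differentiable ℝ m := (contDiff_infty_iff_deriv.mp hsm').1
  have hdC : ContDiff ℝ (⊤:ℕ∞) (deriv m) := (contDiff_infty_iff_deriv.mp hsm').2
  have hd1 : Differentiable ℝ (deriv m) := (contDiff_infty_iff_deriv.mp hdC).1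
  have hdcont : Continuous (deriv m) := hd1.continuous
  -- Key sub-lemma: if m'' ≤ 0 on (x₀,∞), then m is monotone on [x₀,∞)
  have key : (∀ r > x₀, deriv (deriv m) r ≤ 0) → MonotoneOn m (Set.Ici x₀) := by
    intro H
    have hant : AntitoneOn (deriv m) (Set.Ici x₀) := by
      apply antitoneOn_of_deriv_nonpos (convex_Ici x₀) hdcont.continuousOn
        (hd1.differentiableOn)
      intro y hy
      rw [interior_Ici] at hy
      exact H y hy
    have hnn : ∀ r ∈ Set.Ici x₀, 0 ≤ deriv m r := by
      by_contra hcon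
      push_neg at hcon
      obtain ⟨r₁, hr₁, hneg⟩ := hcon
      have hantm : AntitoneOn m (Set.Ici r₁) := by
        apply antitoneOn_of_deriv_nonpos (convex_Ici r₁) hm1.continuous.continuousOn
          hm1.differentiableOn
        intro y hy
        rw [interior_Ici] at hy
        have : deriv m y ≤ deriv m r₁ := hant hr₁ (le_trans hr₁ (le_of_lt (Set.mem_Ioi.mp hy))) (le_of_lt hy)
        linarith
      exact aux_not_bdd m x₀ hx₀ hchoke hfin hpos r₁ (m r₁) hr₁
        (fun r hr => hantm (le_refl r₁ : r₁ ∈ Set.Ici r₁) hr hr)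
    exact monotoneOn_of_deriv_nonneg (convex_Ici x₀) hm1.continuous.continuousOn
      hm1.differentiableOn (fun y hy => hnn y (by rw [interior_Ici] at hy; exact le_of_lt (Set.mem_Ioi.mp hy)))
  rcases hcurv with hc | hc
  · exact ⟨x₀, le_refl _, key (fun r hr => hc r (le_of_lt (lt_trans hx₀ hr)))⟩
  · by_cases hk : ∀ r > x₀, deriv (deriv m) r ≤ 0
    · exact ⟨x₀, le_refl _, key hk⟩
    · push_neg at hk
      obtain ⟨s, hs, hspos⟩ := hk
      have hms : 0 < m s := hpos s (lt_trans hx₀ hs)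
      set κ := deriv (deriv m) s / m s with hκdef
      have hκ : 0 < κ := div_pos hspos hms
      have hmx₀pos : 0 < m x₀ := hpos x₀ hx₀
      set a := κ * m x₀ with hadef
      have ha : 0 < a := mul_pos hκ hmx₀pos
      have hms2 : ∀ r ≥ s, a ≤ deriv (deriv m) r := by
        intro r hr
        have hrx₀ : x₀ < r := lt_of_lt_of_le hs hr
        have hmr : 0 < m r := hpos r (lt_trans hx₀ hrx₀)
        have h1 : -(deriv (deriv m) r) / m r ≤ -(deriv (deriv m) s) / m s :=
          hc (Set.mem_Ioi.mpr (lt_trans hx₀ hs)) (Set.mem_Ioi.mpr (lt_trans hx₀ hrx₀)) hr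
        rw [div_le_div_iff₀ hmr hms] at h1
        have h2 : κ * m r ≤ deriv (deriv m) r := by
          rw [hκdef, div_mul_eq_mul_div, div_le_iff₀ hms]
          nlinarith
        have h3 : m x₀ < m r := hchoke r hrx₀
        nlinarith
      have hgmono : MonotoneOn (fun r => deriv m r - a * r) (Set.Ici s) := by
        apply monotoneOn_of_deriv_nonneg (convex_Ici s)
          (by fun_prop) (by fun_prop)
        intro y hy
        rw [interior_Ici] at hy
        have hder : deriv (fun r => deriv m r - a * r) y = deriv (deriv m) y - a := by
          rw [deriv_fun_sub (hd1 y) (by fun_prop)]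
          have h5 : deriv (fun r : ℝ => a * r) y = a := by
            simpa using ((hasDerivAt_id y).const_mul a).deriv
          rw [h5]
        rw [hder]
        linarith [hms2 y (le_of_lt (Set.mem_Ioi.mp hy))]
      set t := s + (|deriv m s| + 1) / a with htdef
      have hts : s ≤ t := by
        have h6 : 0 < (|deriv m s| + 1) / a := div_pos (by positivity) ha
        rw [htdef]; linarith
      refine ⟨t, le_trans (le_of_lt hs) hts, ?_⟩
      apply monotoneOn_of_deriv_nonneg (convex_Ici t) hm1.continuous.continuousOn
        hm1.differentiableOn
      intro y hy
      rw [interior_Ici] at hy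
      have hyt : t ≤ y := le_of_lt hy
      have := hgmono (le_refl s : s ∈ Set.Ici s) (le_trans hts hyt) (le_trans hts hyt)
      -- deriv m s - a*s ≤ deriv m y - a*y
      have hay : a * (y - s) ≥ |deriv m s| + 1 := by
        have : y - s ≥ (|deriv m s| + 1) / a := by
          rw [htdef] at hyt; linarith
        calc a * (y - s) ≥ a * ((|deriv m s| + 1) / a) := by
              apply mul_le_mul_of_nonneg_left this (le_of_lt ha)
          _ = |deriv m s| + 1 := by field_simp
      have habs : -|deriv m s| ≤ deriv m s := neg_abs_le _
      simp only at this
      nlinarith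
lemma aux_tail_lb (m : ℝ → ℝ) (hm : Continuous m) (x₀ b : ℝ) (hb : x₀ < b)
    (hchoke : ∀ r > x₀, m x₀ < m r)
    (hmono : ∃ t, x₀ ≤ t ∧ MonotoneOn m (Set.Ici t)) :
    ∃ μ, m x₀ < μ ∧ ∀ r ≥ b, μ ≤ m r := by
  obtain ⟨t, htx₀, hmono⟩ := hmono
  set t' := max t b with ht'def
  have hbt' : b ≤ t' := le_max_right _ _
  have hcompact : IsCompact (Set.Icc b t') := isCompact_Icc
  obtain ⟨z, hz, hzmin⟩ := hcompact.exists_isMinOn (Set.nonempty_Icc.mpr hbt')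
    hm.continuousOn
  refine ⟨m z, hchoke z (lt_of_lt_of_le hb hz.1), ?_⟩
  intro r hr
  by_cases hrt : r ≤ t'
  · exact hzmin ⟨hr, hrt⟩
  · push_neg at hrt
    have h1 : m z ≤ m t' := hzmin ⟨hbt', le_refl _⟩
    have h2 : m t' ≤ m r := hmono (le_max_left t b) (le_trans (le_max_left t b) (le_of_lt hrt)) (le_of_lt hrt)
    linarith

lemma aux_shift (F : ℝ → ℝ) (x R : ℝ) :
    ∫ r in Set.Ioc x R, F r = ∫ s in Set.Ioi (0:ℝ), (Set.Iic (R - x)).indicator (fun s => F (s + x)) s := by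
  rw [MeasureTheory.setIntegral_indicator measurableSet_Iic, Set.Ioi_inter_Iic]
  have hmp : MeasureTheory.MeasurePreserving (fun s : ℝ => s + x) volume volume :=
    MeasureTheory.measurePreserving_add_right volume x
  have hemb : MeasurableEmbedding (fun s : ℝ => s + x) :=
    measurableEmbedding_addRight x
  have hpre : (fun s : ℝ => s + x) ⁻¹' (Set.Ioc x R) = Set.Ioc 0 (R - x) := by
    ext s
    simp only [Set.mem_preimage, Set.mem_Ioc]
    constructor <;> (rintro ⟨h1, h2⟩; exact ⟨by linarith, by linarith⟩)
  rw [← hpre, hmp.setIntegral_preimage_emb hemb]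
/-- Continuity of the turn angle `x ↦ T_{γ_x}` at a point where it is finite,
for a plane with `G_m ≥ 0` or of von Mangoldt type. -/
theorem stmt_15 (m : ℝ → ℝ)
    (hsmooth : ContDiff ℝ (⊤ : ℕ∞) m)
    (hm0 : m 0 = 0)
    (hm'0 : deriv m 0 = 1)
    (hpos : ∀ r > (0:ℝ), 0 < m r)
    (hcurv : (∀ r ≥ (0:ℝ), deriv (deriv m) r ≤ 0) ∨
      AntitoneOn (fun r => -(deriv (deriv m) r) / m r) (Set.Ioi 0))
    (x₀ : ℝ) (hx₀ : 0 < x₀)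
    (hm'x₀ : 0 < deriv m x₀)
    (hchoke : ∀ r > x₀, m x₀ < m r)
    (hfin : MeasureTheory.IntegrableOn
      (fun r => m x₀ / (m r * Real.sqrt ((m r) ^ 2 - (m x₀) ^ 2)))
      (Set.Ioi x₀)) :
    (∃ U ∈ nhds x₀, ∀ x ∈ U,
      MeasureTheory.IntegrableOn
        (fun r => m x / (m r * Real.sqrt ((m r) ^ 2 - (m x) ^ 2)))
        (Set.Ioi x)) ∧
    ContinuousAt
      (fun x => ∫ r in Set.Ioi x,
        m x / (m r * Real.sqrt ((m r) ^ 2 - (m x) ^ 2))) x₀ := by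
  have hmc : Continuous m := hsmooth.continuous
  have hsm' : ContDiff ℝ ((⊤:ℕ∞) : WithTop ℕ∞) m := hsmooth.of_le (by simp)
  have hm1 : Differentiable ℝ m := (contDiff_infty_iff_deriv.mp hsm').1
  have hdC : ContDiff ℝ ((⊤:ℕ∞) : WithTop ℕ∞) (deriv m) := (contDiff_infty_iff_deriv.mp hsm').2
  have hd1 : Differentiable ℝ (deriv m) := (contDiff_infty_iff_deriv.mp hdC).1
  have hdcont : Continuous (deriv m) := hd1.continuous
  set f : ℝ → ℝ → ℝ := fun x r => m x / (m r * Real.sqrt ((m r) ^ 2 - (m x) ^ 2)) with hfdef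
  have hmx₀pos : 0 < m x₀ := hpos x₀ hx₀
  -- choice of δ
  set c := deriv m x₀ / 2 with hcdef
  have hc : 0 < c := by positivity
  obtain ⟨δ₀, hδ₀pos, hδ₀⟩ := Metric.continuousAt_iff.mp hdcont.continuousAt c hc
  set δ := min (δ₀/8) (x₀/2) with hδdef
  have hδpos : 0 < δ := lt_min (by positivity) (by positivity)
  have hδle : δ ≤ δ₀/8 := min_le_left _ _
  have hδle2 : δ ≤ x₀/2 := min_le_right _ _
  set R := x₀ + 3*δ with hRdef
  have hlow : 0 < x₀ - δ := by linarith
  have hx₀R : x₀ < R := by linarith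
  have hder : ∀ y ∈ Set.Icc (x₀-δ) R, c < deriv m y := by
    intro y hy
    have h1 : dist y x₀ < δ₀ := by
      rw [Real.dist_eq, abs_lt]
      constructor <;> [linarith [hy.1]; linarith [hy.2]]
    have := hδ₀ h1
    rw [Real.dist_eq, abs_lt] at this
    linarith [this.1, this.2]
  -- strict monotonicity on the local interval
  have hsmloc : StrictMonoOn m (Set.Icc (x₀-δ) R) := by
    apply strictMonoOn_of_deriv_pos (convex_Icc _ _) hmc.continuousOn
    intro y hy
    rw [interior_Icc] at hy
    exact lt_trans hc (hder y ⟨le_of_lt hy.1, le_of_lt hy.2⟩)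
  have hmono_loc : MonotoneOn m (Set.Icc (x₀-δ) R) := hsmloc.monotoneOn
  set p := m (x₀-δ) with hpdef
  set q := m R with hqdef
  have hppos : 0 < p := hpos _ hlow
  have hbounds : ∀ y ∈ Set.Icc (x₀-δ) R, p ≤ m y ∧ m y ≤ q := by
    intro y hy
    exact ⟨hmono_loc ⟨le_refl _, by linarith⟩ hy hy.1,
      hmono_loc hy ⟨by linarith, le_refl _⟩ hy.2⟩
  have hqpos : 0 < q := lt_of_lt_of_le hppos (hbounds R ⟨by linarith, le_refl _⟩).1
  -- MVT estimate
  have hMVT : ∀ x r : ℝ, x₀ - δ ≤ x → x < r → r ≤ R → c * (r - x) ≤ m r - m x := by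
    intro x r hx hxr hrR
    obtain ⟨ξ, hξ, hslope⟩ := exists_deriv_eq_slope m hxr hmc.continuousOn hm1.differentiableOn
    have hξI : ξ ∈ Set.Icc (x₀-δ) R := ⟨by linarith [hξ.1], by linarith [hξ.2]⟩
    have h1 : c ≤ deriv m ξ := le_of_lt (hder ξ hξI)
    have h2 : m r - m x = deriv m ξ * (r - x) := by
      have hne : r - x ≠ 0 := ne_of_gt (by linarith)
      rw [hslope, div_mul_cancel₀ _ hne]
    rw [h2]
    nlinarith
  -- local (near-singularity) bound
  set K := q / (p * Real.sqrt (2*p*c)) with hKdef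
  have hKpos : 0 < K := by positivity
  have hKb : ∀ x r : ℝ, x ∈ Set.Icc (x₀-δ) (x₀+δ) → x < r → r ≤ R →
      0 < m r * Real.sqrt ((m r)^2 - (m x)^2) ∧
      f x r ≤ K * (Real.sqrt (r - x))⁻¹ := by
    intro x r hx hxr hrR
    have hxI : x ∈ Set.Icc (x₀-δ) R := ⟨hx.1, by linarith [hx.2]⟩
    have hrI : r ∈ Set.Icc (x₀-δ) R := ⟨by linarith [hx.1], hrR⟩
    obtain ⟨hpx, hxq⟩ := hbounds x hxI
    obtain ⟨hpr, hrq⟩ := hbounds r hrI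
    have hmvt := hMVT x r hx.1 hxr hrR
    have hrx0 : (0:ℝ) ≤ c*(r-x) := mul_nonneg hc.le (by linarith)
    have hmm : 0 ≤ m r - m x := le_trans hrx0 hmvt
    have hprod : (c*(r-x)) * (2*p) ≤ (m r - m x) * (m r + m x) :=
      mul_le_mul hmvt (by linarith) (by positivity) hmm
    have hdiff : 2*p*c*(r-x) ≤ (m r)^2 - (m x)^2 := by nlinarith [hprod]
    have hdpos : 0 < (m r)^2 - (m x)^2 := by nlinarith [mul_pos (mul_pos (mul_pos two_pos hppos) hc) (sub_pos.mpr hxr)]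
    have hsq1 : Real.sqrt (2*p*c) * Real.sqrt (r-x) ≤ Real.sqrt ((m r)^2 - (m x)^2) := by
      rw [← Real.sqrt_mul (by positivity)]
      exact Real.sqrt_le_sqrt (by nlinarith)
    have hsqpos : 0 < Real.sqrt ((m r)^2 - (m x)^2) := Real.sqrt_pos.mpr hdpos
    have hmrpos : 0 < m r := lt_of_lt_of_le hppos hpr
    have hden : 0 < m r * Real.sqrt ((m r)^2 - (m x)^2) := mul_pos hmrpos hsqpos
    refine ⟨hden, ?_⟩
    have hsrx : 0 < Real.sqrt (r - x) := Real.sqrt_pos.mpr (by linarith)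
    have hdenlb : p * (Real.sqrt (2*p*c) * Real.sqrt (r-x)) ≤
        m r * Real.sqrt ((m r)^2 - (m x)^2) := by
      apply mul_le_mul hpr hsq1 (by positivity) (by linarith)
    have hdlb : 0 < p * (Real.sqrt (2*p*c) * Real.sqrt (r-x)) := by positivity
    calc f x r = m x / (m r * Real.sqrt ((m r)^2 - (m x)^2)) := rfl
      _ ≤ q / (p * (Real.sqrt (2*p*c) * Real.sqrt (r-x))) := by
          apply div_le_div₀ (le_of_lt hqpos) hxq hdlb hdenlb
      _ = K * (Real.sqrt (r-x))⁻¹ := by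
          rw [hKdef]
          field_simp
  have hKbound := hKb
  -- tail lower bound
  obtain ⟨μ, hμgt, hμlb⟩ := aux_tail_lb m hmc x₀ (x₀ + 2*δ) (by linarith) hchoke
    (aux_mono_tail m hsmooth hpos hcurv x₀ hx₀ hchoke hfin)
  set η := (μ^2 - (m x₀)^2)/2 with hηdef
  have hμpos : 0 < μ := lt_trans hmx₀pos hμgt
  have hη : 0 < η := by
    have : (m x₀)^2 < μ^2 := by nlinarith
    rw [hηdef]; linarith
  set Q := Real.sqrt ((m x₀)^2 + η) with hQdef
  have hQpos : 0 < Q := Real.sqrt_pos.mpr (by positivity)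
  set C := Real.sqrt 2 * Q / m x₀ with hCdef
  have hCpos : 0 < C := by positivity
  -- far bound
  have hfar : ∀ x : ℝ, (m x)^2 < (m x₀)^2 + η → ∀ r, R < r →
      ‖f x r‖ ≤ C * f x₀ r := by
    intro x hxW r hrR
    have hrx₀ : x₀ < r := lt_trans hx₀R hrR
    have hmr : m x₀ < m r := hchoke r hrx₀
    have hmrpos : 0 < m r := lt_trans hmx₀pos hmr
    have hμr : μ ≤ m r := hμlb r (by rw [hRdef] at hrR; linarith)
    have hsq0 : (m x₀)^2 < (m r)^2 := by nlinarith
    have h2η : (m x₀)^2 + 2*η ≤ (m r)^2 := by nlinarith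
    have hhalf : ((m r)^2 - (m x₀)^2)/2 ≤ (m r)^2 - (m x)^2 := by nlinarith
    have hDpos : 0 < Real.sqrt ((m r)^2 - (m x₀)^2) := Real.sqrt_pos.mpr (by linarith)
    have hsqle : Real.sqrt ((m r)^2 - (m x₀)^2) / Real.sqrt 2 ≤
        Real.sqrt ((m r)^2 - (m x)^2) := by
      have h1 : Real.sqrt (((m r)^2 - (m x₀)^2)/2) ≤ Real.sqrt ((m r)^2 - (m x)^2) :=
        Real.sqrt_le_sqrt hhalf
      rwa [Real.sqrt_div (by linarith : (0:ℝ) ≤ (m r)^2 - (m x₀)^2)] at h1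
    set D := m r * Real.sqrt ((m r)^2 - (m x₀)^2) with hDdef
    have hD : 0 < D := mul_pos hmrpos hDpos
    have hs2 : (0:ℝ) < Real.sqrt 2 := Real.sqrt_pos.mpr two_pos
    have hden2 : 0 < (m r)^2 - (m x)^2 := lt_of_lt_of_le (by linarith) hhalf
    have hdenpos : 0 < m r * Real.sqrt ((m r)^2 - (m x)^2) :=
      mul_pos hmrpos (Real.sqrt_pos.mpr hden2)
    have hdenlb : D / Real.sqrt 2 ≤ m r * Real.sqrt ((m r)^2 - (m x)^2) := by
      rw [hDdef, mul_div_assoc]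
      exact mul_le_mul_of_nonneg_left hsqle (le_of_lt hmrpos)
    have habs : |m x| ≤ Q := by
      rw [← Real.sqrt_sq_eq_abs, hQdef]
      exact Real.sqrt_le_sqrt (le_of_lt hxW)
    have hnorm : ‖f x r‖ = |m x| / (m r * Real.sqrt ((m r)^2 - (m x)^2)) := by
      rw [hfdef]
      simp only [Real.norm_eq_abs, abs_div]
      rw [abs_of_pos hdenpos]
    rw [hnorm]
    have hstep : |m x| / (m r * Real.sqrt ((m r)^2 - (m x)^2)) ≤ Q / (D / Real.sqrt 2) :=
      div_le_div₀ (le_of_lt hQpos) habs (by positivity) hdenlb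
    have heq : Q / (D / Real.sqrt 2) = C * f x₀ r := by
      have : f x₀ r = m x₀ / D := rfl
      rw [this, hCdef]
      field_simp
    linarith [hstep, heq ▸ hstep]
  -- measurability
  have hmeasf : ∀ x : ℝ, Measurable (f x) := by
    intro x
    apply measurable_const.div
    exact (hmc.mul (Real.continuous_sqrt.comp (by fun_prop))).measurable
  -- integrability of the inverse-sqrt bound
  have hsqint : MeasureTheory.IntegrableOn (fun s : ℝ => K * (Real.sqrt s)⁻¹)
      (Set.Ioc 0 (4*δ)) := by
    have h1 : IntervalIntegrable (fun s : ℝ => s ^ (-(1/2) : ℝ)) volume 0 (4*δ) :=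
      intervalIntegral.intervalIntegrable_rpow' (by norm_num)
    have h2 : MeasureTheory.IntegrableOn (fun s : ℝ => s ^ (-(1/2) : ℝ))
        (Set.Ioc 0 (4*δ)) :=
      (intervalIntegrable_iff_integrableOn_Ioc_of_le (by linarith)).mp h1
    have h3 := (h2.const_mul K)
    apply MeasureTheory.IntegrableOn.congr_fun h3 ?_ measurableSet_Ioc
    intro s hs
    have h4 : Real.sqrt s = s ^ ((1:ℝ)/2) := Real.sqrt_eq_rpow s
    simp only
    rw [h4, ← Real.rpow_neg (le_of_lt hs.1)]
  -- the neighborhood U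
  set W := {x : ℝ | (m x)^2 < (m x₀)^2 + η} with hWdef
  have hWopen : IsOpen W := isOpen_lt (by fun_prop) continuous_const
  have hWx₀ : x₀ ∈ W := by rw [hWdef]; simp only [Set.mem_setOf_eq]; linarith
  set U := Set.Ioo (x₀-δ) (x₀+δ) ∩ W with hUdef
  have hUnhds : U ∈ nhds x₀ := by
    apply Filter.inter_mem
    · exact Ioo_mem_nhds (by linarith) (by linarith)
    · exact hWopen.mem_nhds hWx₀
  -- near-field integrability
  have hInear : ∀ x ∈ Set.Ioo (x₀-δ) (x₀+δ), MeasureTheory.IntegrableOn (f x) (Set.Ioc x R) := by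
    intro x hx
    have hxR : x ≤ R := by rw [hRdef]; linarith [hx.2]
    have hbint : MeasureTheory.IntegrableOn (fun r => K * (Real.sqrt (r - x))⁻¹)
        (Set.Ioc x R) := by
      have h1 : IntervalIntegrable (fun s : ℝ => K * (Real.sqrt s)⁻¹) volume 0 (R - x) := by
        apply (intervalIntegrable_iff_integrableOn_Ioc_of_le (by linarith)).mpr
        exact hsqint.mono_set (Set.Ioc_subset_Ioc (le_refl _) (by rw [hRdef]; linarith [hx.1]))
      have h2 := h1.comp_sub_right x
      rw [zero_add, sub_add_cancel] at h2
      exact (intervalIntegrable_iff_integrableOn_Ioc_of_le hxR).mp h2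
    apply MeasureTheory.Integrable.mono' hbint (hmeasf x).aestronglyMeasurable
    filter_upwards [MeasureTheory.ae_restrict_mem measurableSet_Ioc] with r hr
    have hKr := hKb x r ⟨le_of_lt hx.1, le_of_lt hx.2⟩ hr.1 hr.2
    have hmxpos : 0 < m x := hpos x (by linarith [hx.1])
    rw [Real.norm_eq_abs, abs_of_nonneg (div_nonneg (le_of_lt hmxpos) (le_of_lt hKr.1))]
    exact hKr.2
  -- far-field integrability
  have hIfar : ∀ x ∈ W, MeasureTheory.IntegrableOn (f x) (Set.Ioi R) := by
    intro x hxW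
    have hbint : MeasureTheory.IntegrableOn (fun r => C * f x₀ r) (Set.Ioi R) :=
      (hfin.mono_set (Set.Ioi_subset_Ioi (le_of_lt hx₀R))).const_mul C
    apply MeasureTheory.Integrable.mono' hbint (hmeasf x).aestronglyMeasurable
    filter_upwards [MeasureTheory.ae_restrict_mem measurableSet_Ioi] with r hr
    exact hfar x hxW r hr
  have hIoi : ∀ x ∈ U, MeasureTheory.IntegrableOn (f x) (Set.Ioi x) := by
    intro x hx
    have hxR : x ≤ R := by rw [hRdef]; linarith [hx.1.2]
    rw [← Set.Ioc_union_Ioi_eq_Ioi hxR]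
    exact (hInear x hx.1).union (hIfar x hx.2)
  refine ⟨⟨U, hUnhds, hIoi⟩, ?_⟩
  -- shifted near-part integrand
  set g : ℝ → ℝ → ℝ := fun x s => (Set.Iic (R - x)).indicator (fun s => f x (s + x)) s
    with hgdef
  have hNeq : ∀ x : ℝ, ∫ r in Set.Ioc x R, f x r = ∫ s in Set.Ioi (0:ℝ), g x s :=
    fun x => aux_shift (f x) x R
  -- continuity of the near part
  have hNcont : ContinuousAt (fun x => ∫ s in Set.Ioi (0:ℝ), g x s) x₀ := by
    apply MeasureTheory.continuousAt_of_dominated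
      (bound := fun s => (Set.Ioc (0:ℝ) (4*δ)).indicator (fun s => K * (Real.sqrt s)⁻¹) s)
    · filter_upwards with x
      apply Measurable.aestronglyMeasurable
      apply Measurable.indicator ?_ measurableSet_Iic
      apply measurable_const.div
      exact ((hmc.comp (continuous_id.add continuous_const)).mul
        (Real.continuous_sqrt.comp (by fun_prop))).measurable
    · filter_upwards [Ioo_mem_nhds (show x₀ - δ < x₀ by linarith) (show x₀ < x₀ + δ by linarith)]
        with x hx
      filter_upwards [MeasureTheory.ae_restrict_mem measurableSet_Ioi] with s hs
      have hs0 : (0:ℝ) < s := hs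
      by_cases hsR : s ≤ R - x
      · rw [hgdef]
        simp only [Set.indicator_of_mem (Set.mem_Iic.mpr hsR)]
        have hKr := hKb x (s + x) ⟨le_of_lt hx.1, le_of_lt hx.2⟩ (by linarith) (by linarith)
        have hsx : s + x - x = s := by ring
        rw [hsx] at hKr
        have hmxpos : 0 < m x := hpos x (by linarith [hx.1])
        have hs4δ : s ≤ 4*δ := by rw [hRdef] at hsR; linarith [hx.1]
        rw [Set.indicator_of_mem (Set.mem_Ioc.mpr ⟨hs0, hs4δ⟩)]
        rw [Real.norm_eq_abs, abs_of_nonneg (div_nonneg (le_of_lt hmxpos) (le_of_lt hKr.1))]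
        exact hKr.2
      · rw [hgdef]
        simp only [Set.indicator_of_notMem (fun h => hsR (Set.mem_Iic.mp h))]
        rw [norm_zero]
        exact Set.indicator_nonneg (fun s hs => by positivity) s
    · exact ((MeasureTheory.integrable_indicator_iff measurableSet_Ioc).mpr hsqint).restrict
    · have hne : ∀ᵐ s : ℝ, s ≠ R - x₀ := by
        have hset : {s : ℝ | ¬ s ≠ R - x₀} = {R - x₀} := by ext; simp
        rw [MeasureTheory.ae_iff, hset]
        exact measure_singleton _
      filter_upwards [MeasureTheory.ae_restrict_of_ae hne,
        MeasureTheory.ae_restrict_mem measurableSet_Ioi] with s hsne hs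
      have hs0 : (0:ℝ) < s := hs
      rcases lt_or_gt_of_ne hsne with hlt | hgt
      · -- s < R - x₀ : eventually the indicator is active
        have hcont : ContinuousAt (fun x => f x (s + x)) x₀ := by
          apply ContinuousAt.div hmc.continuousAt
          · exact ((hmc.comp (continuous_const.add continuous_id)).mul
              (Real.continuous_sqrt.comp (by fun_prop))).continuousAt
          · have h2 : m x₀ < m (s + x₀) := hchoke _ (by linarith)
            exact ne_of_gt (mul_pos (hpos _ (by linarith))
              (Real.sqrt_pos.mpr (by nlinarith)))
        apply hcont.congr
        filter_upwards [Iio_mem_nhds (show x₀ < R - s by linarith)] with x hxx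
        have hxx' : x < R - s := hxx
        rw [hgdef]
        simp only
        rw [Set.indicator_of_mem (Set.mem_Iic.mpr (by linarith : s ≤ R - x))]
      · -- s > R - x₀ : eventually zero
        apply continuousAt_const.congr
        filter_upwards [Ioi_mem_nhds (show R - s < x₀ by linarith)] with x hxx
        have hxx' : R - s < x := hxx
        rw [hgdef]
        simp only
        rw [Set.indicator_of_notMem (by simp only [Set.mem_Iic, not_le]; linarith)]
  -- continuity of the far part
  have hFcont : ContinuousAt (fun x => ∫ r in Set.Ioi R, f x r) x₀ := by
    apply MeasureTheory.continuousAt_of_dominated (bound := fun r => C * f x₀ r)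
    · filter_upwards with x
      exact (hmeasf x).aestronglyMeasurable
    · filter_upwards [hWopen.mem_nhds hWx₀] with x hxW
      filter_upwards [MeasureTheory.ae_restrict_mem measurableSet_Ioi] with r hr
      exact hfar x hxW r hr
    · exact (hfin.mono_set (Set.Ioi_subset_Ioi (le_of_lt hx₀R))).const_mul C
    · filter_upwards [MeasureTheory.ae_restrict_mem measurableSet_Ioi] with r hr
      apply ContinuousAt.div hmc.continuousAt
      · exact (continuous_const.mul (Real.continuous_sqrt.comp (by fun_prop))).continuousAt
      · have h2 : m x₀ < m r := hchoke r (lt_trans hx₀R hr)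
        exact ne_of_gt (mul_pos (lt_trans hmx₀pos h2)
          (Real.sqrt_pos.mpr (by nlinarith)))
  have hsum : ContinuousAt
      (fun x => (∫ s in Set.Ioi (0:ℝ), g x s) + ∫ r in Set.Ioi R, f x r) x₀ :=
    hNcont.add hFcont
  apply hsum.congr
  filter_upwards [hUnhds] with x hx
  have hxR : x ≤ R := by rw [hRdef]; linarith [hx.1.2]
  show (∫ s in Set.Ioi (0:ℝ), g x s) + (∫ r in Set.Ioi R, f x r) = ∫ r in Set.Ioi x, f x r
  rw [← hNeq x,
    ← MeasureTheory.setIntegral_union (Set.Ioc_disjoint_Ioi (le_refl R))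
      measurableSet_Ioi (hInear x hx.1) (hIfar x hx.2),
    Set.Ioc_union_Ioi_eq_Ioi hxR]
end
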